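/- arXiv:2107.09247 — 14 statements merged into one kernel-verified Lean document; each statement's English description precedes it below -/
import Mathlib

section
/- For every number of bidders n ≥ 1 and every binary symmetric instance (valuations v_i(s) = f_i(∑_j s_j) with each f_i : {0,...,n} → ℝ nonnegative and weakly increasing), there exists a mechanism (x, p) that is ex-post incentive compatible and ex-post individually rational and 5-approximates welfare, i.e., for every signal profile s, ∑_i x_i(s)·v_i(s) ≥ (1/5)·max_i v_i(s). -/
def Msum {n : ℕ} (s : Fin n → Fin 2) : ℕ := ∑ j, (s j : ℕ)

lemma Msum_update {n : ℕ} (s : Fin n → Fin 2) (i : Fin n) (c : Fin 2) :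
    Msum (Function.update s i c) + (s i : ℕ) = Msum s + (c : ℕ) := by
  classical
  unfold Msum
  have h1 : ∀ j, ((Function.update s i c) j : ℕ)
      = Function.update (fun j => ((s j : ℕ))) i (c : ℕ) j := by
    intro j
    simp [Function.update_apply, apply_ite (fun t : Fin 2 => (t : ℕ))]
  rw [Finset.sum_congr rfl (fun j _ => h1 j),
    Finset.sum_update_of_mem (Finset.mem_univ i),
    ← Finset.add_sum_erase Finset.univ (fun j => ((s j : ℕ))) (Finset.mem_univ i),
    Finset.erase_eq]
  ring

set_option maxHeartbeats 1000000 in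
/-- For every number of bidders `n ≥ 1` and every binary symmetric
instance (valuations `v i s = f i (∑ j, s j)` with each `f i` nonnegative and
weakly increasing), there exists an ex-post IC and ex-post IR mechanism `(x, p)`
that 5-approximates welfare: for every signal profile `s`,
`∑ i, x s i * v i s ≥ (1/5) * max_i v i s`. -/
theorem binary_symmetric_welfare_five_approx
    (n : ℕ) (hn : 1 ≤ n)
    (f : Fin n → ℕ → ℝ)
    (hf_nonneg : ∀ i m, 0 ≤ f i m)
    (hf_mono : ∀ i, Monotone (f i))
    (v : Fin n → (Fin n → Fin 2) → ℝ)
    (hv : ∀ i s, v i s = f i (∑ j, (s j : ℕ))) :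
    ∃ x p : (Fin n → Fin 2) → Fin n → ℝ,
      -- feasible allocation probabilities
      (∀ s i, 0 ≤ x s i) ∧ (∀ s, ∑ i, x s i ≤ 1) ∧
      -- nonnegative payments
      (∀ s i, 0 ≤ p s i) ∧
      -- ex-post incentive compatibility
      (∀ (i : Fin n) (s : Fin n → Fin 2) (t : Fin 2),
        x s i * v i s - p s i ≥
          x (Function.update s i t) i * v i s - p (Function.update s i t) i) ∧
      -- ex-post individual rationality
      (∀ (i : Fin n) (s : Fin n → Fin 2), x s i * v i s - p s i ≥ 0) ∧
      -- 5-approximation of the optimal welfare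
      (∀ s : Fin n → Fin 2,
        ∑ i, x s i * v i s ≥
          (1 / 5) * Finset.univ.sup' ⟨⟨0, hn⟩, Finset.mem_univ _⟩ (fun i => v i s)) := by
  classical
  have hv' : ∀ i s, v i s = f i (Msum s) := hv
  haveI : Nonempty (Fin n) := ⟨⟨0, hn⟩⟩
  obtain ⟨W, hW⟩ : ∃ W : ℕ → Fin n, ∀ m' j, f j m' ≤ f (W m') m' := by
    have hex : ∀ m' : ℕ, ∃ i : Fin n, ∀ j, f j m' ≤ f i m' := fun m' =>
      Finite.exists_max (fun j => f j m')
    exact ⟨fun m' => (hex m').choose, fun m' => (hex m').choose_spec⟩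
  set x : (Fin n → Fin 2) → Fin n → ℝ := fun s i =>
    (1/3) * ((s i : ℕ) : ℝ) * (if i = W (Msum s) then 1 else 0)
      + (1/3) * (if i = W (Msum (Function.update s i 0)) then 1 else 0) with hx
  set p : (Fin n → Fin 2) → Fin n → ℝ := fun s i =>
    (1/3) * ((s i : ℕ) : ℝ) * (if i = W (Msum (Function.update s i 1)) then 1 else 0)
      * f i (Msum (Function.update s i 1)) with hp
  have hcases : ∀ c : Fin 2, c = 0 ∨ c = 1 := by decide
  have hxnn : ∀ s i, 0 ≤ x s i := by
    intro s i
    simp only [hx]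
    have h1 : (0:ℝ) ≤ (if i = W (Msum s) then (1:ℝ) else 0) := by split_ifs <;> norm_num
    have h2 : (0:ℝ) ≤ (if i = W (Msum (Function.update s i 0)) then (1:ℝ) else 0) := by
      split_ifs <;> norm_num
    have h3 : (0:ℝ) ≤ ((s i : ℕ) : ℝ) := by positivity
    nlinarith
  refine ⟨x, p, hxnn, ?_, ?_, ?_, ?_, ?_⟩
  · -- feasibility of total allocation
    intro s
    have hbound : ∀ i : Fin n, x s i ≤
        (2/3) * (if i = W (Msum s) then (1:ℝ) else 0)
          + (1/3) * (if i = W (Msum s - 1) then (1:ℝ) else 0) := by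
      intro i
      have h0 := Msum_update s i 0
      have hsi : (s i : ℕ) = 0 ∨ (s i : ℕ) = 1 := by
        have := (s i).isLt; omega
      simp only [hx]
      rcases hsi with h | h
      · have he : Msum (Function.update s i 0) = Msum s := by
          simp only [Fin.val_zero] at h0; omega
        rw [he, h]
        push_cast
        split_ifs <;> norm_num
      · have he : Msum (Function.update s i 0) = Msum s - 1 := by
          simp only [Fin.val_zero] at h0; omega
        rw [he, h]
        push_cast
        split_ifs <;> norm_num
    calc ∑ i, x s i ≤ ∑ i, ((2/3) * (if i = W (Msum s) then (1:ℝ) else 0)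
          + (1/3) * (if i = W (Msum s - 1) then (1:ℝ) else 0)) :=
            Finset.sum_le_sum (fun i _ => hbound i)
      _ ≤ 1 := by
        rw [Finset.sum_add_distrib, ← Finset.mul_sum, ← Finset.mul_sum]
        simp only [Finset.sum_ite_eq', Finset.mem_univ, if_true]
        norm_num
  · -- payments nonnegative
    intro s i
    simp only [hp]
    have h1 : (0:ℝ) ≤ (if i = W (Msum (Function.update s i 1)) then (1:ℝ) else 0) := by
      split_ifs <;> norm_num
    have h2 := hf_nonneg i (Msum (Function.update s i 1))
    have h3 : (0:ℝ) ≤ ((s i : ℕ) : ℝ) := by positivity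
    positivity
  · -- ex-post IC
    intro i s t
    have h0 := Msum_update s i 0
    have h1 := Msum_update s i 1
    simp only [Fin.val_zero, Fin.val_one] at h0 h1
    rcases hcases (s i) with hsi | hsi <;> rcases hcases t with ht | ht
    · rw [ht, ← hsi, Function.update_eq_self]
    · -- s i = 0, deviate to 1
      rw [ht]
      have hs0 : (s i : ℕ) = 0 := by rw [hsi]; rfl
      have hMs : Msum s = Msum (Function.update s i 0) := by omega
      simp only [hx, hp, hv', Function.update_idem, Function.update_self,
        Fin.val_zero, Fin.val_one, Nat.cast_zero, Nat.cast_one, hs0, hMs, mul_zero, zero_mul, zero_add, one_mul, mul_one]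
      have hw : f i (Msum (Function.update s i 0)) ≤ f i (Msum (Function.update s i 1)) :=
        hf_mono i (by omega)
      have hw0 := hf_nonneg i (Msum (Function.update s i 0))
      split_ifs <;> nlinarith
    · -- s i = 1, deviate to 0
      rw [ht]
      have hs1 : (s i : ℕ) = 1 := by rw [hsi]; rfl
      have hMs : Msum s = Msum (Function.update s i 1) := by omega
      simp only [hx, hp, hv', Function.update_idem, Function.update_self,
        Fin.val_zero, Fin.val_one, Nat.cast_zero, Nat.cast_one, hs1, hMs, mul_zero, zero_mul, zero_add, one_mul, mul_one]
      split_ifs <;> nlinarith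
    · rw [ht, ← hsi, Function.update_eq_self]
  · -- ex-post IR
    intro i s
    have h0 := Msum_update s i 0
    have h1 := Msum_update s i 1
    simp only [Fin.val_zero, Fin.val_one] at h0 h1
    rcases hcases (s i) with hsi | hsi
    · have hs0 : (s i : ℕ) = 0 := by rw [hsi]; rfl
      simp only [hx, hp, hv', hs0, Nat.cast_zero, mul_zero, zero_mul, zero_add, sub_zero]
      have hw0 := hf_nonneg i (Msum s)
      split_ifs <;> nlinarith
    · have hs1 : (s i : ℕ) = 1 := by rw [hsi]; rfl
      have hMs : Msum s = Msum (Function.update s i 1) := by omega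
      simp only [hx, hp, hv', hs1, Nat.cast_one, hMs]
      have hw1 := hf_nonneg i (Msum (Function.update s i 1))
      split_ifs <;> nlinarith
  · -- welfare approximation
    intro s
    set S : ℝ := Finset.univ.sup' ⟨⟨0, hn⟩, Finset.mem_univ _⟩ (fun i => v i s) with hS
    set i0 := W (Msum s) with hi0
    have hvnn : ∀ j, (0:ℝ) ≤ v j s := by
      intro j; rw [hv']; exact hf_nonneg _ _
    have h1 : x s i0 * v i0 s ≤ ∑ i, x s i * v i s :=
      Finset.single_le_sum (f := fun i => x s i * v i s)
        (fun i _ => mul_nonneg (hxnn s i) (hvnn i)) (Finset.mem_univ i0)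
    have h2 : (1/3 : ℝ) ≤ x s i0 := by
      have h0 := Msum_update s i0 0
      simp only [Fin.val_zero] at h0
      rcases hcases (s i0) with hsi | hsi
      · have he : Function.update s i0 (0 : Fin 2) = s := by
          rw [← hsi, Function.update_eq_self]
        have hs0 : ((s i0 : ℕ) : ℝ) = 0 := by rw [hsi]; norm_num
        simp only [hx, he, hs0, ← hi0, if_pos rfl]
        norm_num
      · have hs1 : ((s i0 : ℕ) : ℝ) = 1 := by rw [hsi]; norm_num
        simp only [hx, hs1, ← hi0]
        have h2 : (0:ℝ) ≤ (if i0 = W (Msum (Function.update s i0 0)) then (1:ℝ) else 0) := by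
          split_ifs <;> norm_num
        simp only [if_true]
        linarith
    have h3 : S ≤ v i0 s := by
      rw [hS]
      apply Finset.sup'_le
      intro j _
      rw [hv', hv']
      exact hW (Msum s) j
    have h6 : (0:ℝ) ≤ S :=
      le_trans (hvnn ⟨0, hn⟩) (Finset.le_sup' (fun i => v i s) (Finset.mem_univ (⟨0, hn⟩ : Fin n)))
    have h7 : (1/3 : ℝ) * v i0 s ≤ x s i0 * v i0 s :=
      mul_le_mul_of_nonneg_right h2 (hvnn i0)
    rw [ge_iff_le]
    refine le_trans (le_trans ?_ h7) h1
    linarith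
end

section
/- For every number of bidders n ≥ 1 and every binary symmetric instance (valuations v_i(s) = f_i(∑_j s_j) with each f_i : {0,...,n} → ℝ nonnegative and weakly increasing), there exists a mechanism (x, p) that is ex-post incentive compatible and ex-post individually rational and whose revenue 10-approximates the optimal welfare, i.e., for every signal profile s, ∑_i p_i(s) ≥ (1/10)·max_i v_i(s). -/
open Finset

/-! A bidder who sees `c` ones among the other signals faces a two-item menu: probability `q c`
at price `f c` and, if she reports `1`, a further `q (c + 1)` at price `f (c + 1)`. With signal `1`
her value is `f (c + 1)`, so the second item leaves her no surplus; with signal `0` her value is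
`f c ≤ f (c + 1)`, so she does not want it. Hence truth-telling is optimal, and the item at the
true total count `m` is always bought, at price `f m`. Offering the items at count `m` with
probability `1/2` only to a bidder maximising `f · m` keeps the total allocation at most
`1/2 + 1/2`, since only the counts `m - 1` and `m` are ever offered, and collects half the
optimal welfare. -/

section Menu

variable (q f : ℕ → ℝ)

def menuAlloc (c : ℕ) (a : Fin 2) : ℝ :=
  q c + (a : ℕ) * q (c + 1)

def menuPrice (c : ℕ) (a : Fin 2) : ℝ :=
  q c * f c + (a : ℕ) * (q (c + 1) * f (c + 1))

variable {q f}

theorem menuAlloc_nonneg (hq : ∀ m, 0 ≤ q m) (c : ℕ) (a : Fin 2) : 0 ≤ menuAlloc q c a := by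
  have := hq c; have := hq (c + 1)
  unfold menuAlloc; positivity

theorem menuPrice_nonneg (hq : ∀ m, 0 ≤ q m) (hf : ∀ m, 0 ≤ f m) (c : ℕ) (a : Fin 2) :
    0 ≤ menuPrice q f c a := by
  have := hq c; have := hq (c + 1); have := hf c; have := hf (c + 1)
  unfold menuPrice; positivity

theorem menuAlloc_le (hq : ∀ m, 0 ≤ q m) (c : ℕ) (a : Fin 2) :
    menuAlloc q c a ≤ q (c + a - 1) + q (c + a) := by
  fin_cases a
  · simpa [menuAlloc] using hq (c - 1)
  · simp [menuAlloc]

theorem le_menuPrice (hq : ∀ m, 0 ≤ q m) (hf : ∀ m, 0 ≤ f m) (c : ℕ) (a : Fin 2) :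
    q (c + a) * f (c + a) ≤ menuPrice q f c a := by
  fin_cases a
  · simp [menuPrice]
  · simpa [menuPrice] using mul_nonneg (hq c) (hf c)

theorem menu_utility_nonneg (hq : ∀ m, 0 ≤ q m) (hf : Monotone f) (c : ℕ) (a : Fin 2) :
    0 ≤ menuAlloc q c a * f (c + a) - menuPrice q f c a := by
  fin_cases a
  · simp [menuAlloc, menuPrice]
  · simpa [menuAlloc, menuPrice, add_mul] using mul_le_mul_of_nonneg_left (hf c.le_succ) (hq c)

theorem menu_truthful (hq : ∀ m, 0 ≤ q m) (hf : Monotone f) (c : ℕ) (a t : Fin 2) :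
    menuAlloc q c t * f (c + a) - menuPrice q f c t
      ≤ menuAlloc q c a * f (c + a) - menuPrice q f c a := by
  have := mul_le_mul_of_nonneg_left (hf c.le_succ) (hq (c + 1))
  fin_cases a <;> fin_cases t <;> simp [menuAlloc, menuPrice] <;> linarith

end Menu

section Profile

variable {n : ℕ}

def othersCount (s : Fin n → Fin 2) (i : Fin n) : ℕ :=
  ∑ j ∈ univ.erase i, (s j : ℕ)

theorem othersCount_add_self (s : Fin n → Fin 2) (i : Fin n) :
    othersCount s i + s i = ∑ j, (s j : ℕ) := by
  rw [othersCount, add_comm]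
  exact add_sum_erase _ (fun j => (s j : ℕ)) (mem_univ i)

theorem othersCount_update (s : Fin n → Fin 2) (i : Fin n) (t : Fin 2) :
    othersCount (Function.update s i t) i = othersCount s i :=
  sum_congr rfl fun j hj => by rw [Function.update_of_ne (ne_of_mem_erase hj)]

end Profile

section Posted

variable {n : ℕ} (f q : Fin n → ℕ → ℝ)

def postedAlloc (s : Fin n → Fin 2) (i : Fin n) : ℝ :=
  menuAlloc (q i) (othersCount s i) (s i)

def postedPayment (s : Fin n → Fin 2) (i : Fin n) : ℝ :=
  menuPrice (q i) (f i) (othersCount s i) (s i)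

variable {f q}

theorem sum_postedAlloc_le_one (hq : ∀ i m, 0 ≤ q i m) (hq_half : ∀ m, ∑ i, q i m ≤ 1 / 2)
    (s : Fin n → Fin 2) : ∑ i, postedAlloc q s i ≤ 1 := by
  calc ∑ i, postedAlloc q s i
        ≤ ∑ i, (q i (∑ j, (s j : ℕ) - 1) + q i (∑ j, (s j : ℕ))) := by
        refine sum_le_sum fun i _ => ?_
        rw [postedAlloc, ← othersCount_add_self s i]
        exact menuAlloc_le (hq i) _ _
    _ ≤ 1 / 2 + 1 / 2 := by
        rw [sum_add_distrib]
        exact add_le_add (hq_half _) (hq_half _)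
    _ = 1 := by norm_num

theorem posted_truthful (hq : ∀ i m, 0 ≤ q i m) (hf : ∀ i, Monotone (f i))
    (s : Fin n → Fin 2) (i : Fin n) (t : Fin 2) :
    postedAlloc q (Function.update s i t) i * f i (∑ j, (s j : ℕ))
        - postedPayment f q (Function.update s i t) i
      ≤ postedAlloc q s i * f i (∑ j, (s j : ℕ)) - postedPayment f q s i := by
  rw [postedAlloc, postedAlloc, postedPayment, postedPayment, othersCount_update,
    Function.update_self, ← othersCount_add_self s i]
  exact menu_truthful (hq i) (hf i) _ _ _

theorem posted_utility_nonneg (hq : ∀ i m, 0 ≤ q i m) (hf : ∀ i, Monotone (f i))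
    (s : Fin n → Fin 2) (i : Fin n) :
    0 ≤ postedAlloc q s i * f i (∑ j, (s j : ℕ)) - postedPayment f q s i := by
  rw [postedAlloc, postedPayment, ← othersCount_add_self s i]
  exact menu_utility_nonneg (hq i) (hf i) _ _

theorem le_sum_postedPayment (hq : ∀ i m, 0 ≤ q i m) (hf : ∀ i m, 0 ≤ f i m)
    (s : Fin n → Fin 2) (i : Fin n) :
    q i (∑ j, (s j : ℕ)) * f i (∑ j, (s j : ℕ)) ≤ ∑ j, postedPayment f q s j := by
  calc q i (∑ j, (s j : ℕ)) * f i (∑ j, (s j : ℕ)) ≤ postedPayment f q s i := by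
        rw [postedPayment, ← othersCount_add_self s i]
        exact le_menuPrice (hq i) (hf i) _ _
    _ ≤ ∑ j, postedPayment f q s j :=
        single_le_sum (fun j _ => menuPrice_nonneg (hq j) (hf j) _ _) (mem_univ i)

end Posted

/-- For every `n ≥ 1` and every binary symmetric instance, there exists
an ex-post IC and ex-post IR mechanism `(x, p)` whose revenue 10-approximates the
optimal welfare: for every signal profile `s`, `∑ i, p s i ≥ (1/10) * max_i v i s`. -/
theorem binary_symmetric_revenue_ten_approx
    (n : ℕ) (hn : 1 ≤ n)
    (f : Fin n → ℕ → ℝ)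
    (hf_nonneg : ∀ i m, 0 ≤ f i m)
    (hf_mono : ∀ i, Monotone (f i))
    (v : Fin n → (Fin n → Fin 2) → ℝ)
    (hv : ∀ i s, v i s = f i (∑ j, (s j : ℕ))) :
    ∃ x p : (Fin n → Fin 2) → Fin n → ℝ,
      (∀ s i, 0 ≤ x s i) ∧ (∀ s, ∑ i, x s i ≤ 1) ∧
      (∀ s i, 0 ≤ p s i) ∧
      (∀ (i : Fin n) (s : Fin n → Fin 2) (t : Fin 2),
        x s i * v i s - p s i ≥
          x (Function.update s i t) i * v i s - p (Function.update s i t) i) ∧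
      (∀ (i : Fin n) (s : Fin n → Fin 2), x s i * v i s - p s i ≥ 0) ∧
      (∀ s : Fin n → Fin 2,
        ∑ i, p s i ≥
          (1 / 10) * Finset.univ.sup' ⟨⟨0, hn⟩, Finset.mem_univ _⟩ (fun i => v i s)) := by
  obtain rfl : v = fun i s => f i (∑ j, (s j : ℕ)) := funext₂ hv
  have : Nonempty (Fin n) := ⟨⟨0, hn⟩⟩
  choose w hw using fun m => Finite.exists_max (f · m)
  set q : Fin n → ℕ → ℝ := fun i m => if i = w m then 1 / 2 else 0
  have hq : ∀ i m, 0 ≤ q i m := fun i m => by positivity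
  have hq_sum : ∀ m, ∑ i, q i m = 1 / 2 := fun m => by simp [q]
  have hq_top : ∀ m, q (w m) m = 1 / 2 := fun m => if_pos rfl
  refine ⟨postedAlloc q, postedPayment f q, fun s i => menuAlloc_nonneg (hq i) _ _,
    sum_postedAlloc_le_one hq (fun m => (hq_sum m).le),
    fun s i => menuPrice_nonneg (hq i) (hf_nonneg i) _ _,
    fun i s t => posted_truthful hq hf_mono s i t,
    fun i s => posted_utility_nonneg hq hf_mono s i, fun s => ?_⟩
  dsimp only
  have hmax := sup'_le (s := univ) ⟨⟨0, hn⟩, mem_univ _⟩ (fun i => f i (∑ j, (s j : ℕ)))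
    fun j _ => hw _ j
  have hrev := le_sum_postedPayment hq hf_nonneg s (w (∑ j, (s j : ℕ)))
  rw [hq_top] at hrev
  have hwelfare_nonneg := hf_nonneg (w (∑ j, (s j : ℕ))) (∑ j, (s j : ℕ))
  linarith
end

section
/- For every n ≥ 1, every ℓ ≥ 1, every assignment g : Fin n → Fin ℓ of bidders to expertise groups, and every binary ℓ-group instance (valuations v_i(s) = f_i(q_1(s),...,q_ℓ(s)) where q_j(s) = ∑_{i' : g(i')=j} s_{i'} and each f_i is nonnegative and weakly increasing in every coordinate), there exists a mechanism (x, p) that is ex-post incentive compatible and ex-post individually rational and 5ℓ-approximates welfare, i.e., for every signal profile s, ∑_i x_i(s)·v_i(s) ≥ (1/(5ℓ))·max_i v_i(s). -/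
section BinaryGroupsAux

variable {n ℓ : ℕ}

/-- The group-quality vector of a signal profile. -/
def Qf (g : Fin n → Fin ℓ) (s : Fin n → Fin 2) : Fin ℓ → ℕ :=
  fun j => ∑ i' ∈ Finset.univ.filter (fun i' => g i' = j), (s i' : ℕ)

lemma fin2cases (t : Fin 2) : t = 0 ∨ t = 1 := by revert t; decide

lemma Qf_update_le (g : Fin n → Fin ℓ) (s : Fin n → Fin 2) (i : Fin n) {t t' : Fin 2}
    (h : (t : ℕ) ≤ (t' : ℕ)) :
    Qf g (Function.update s i t) ≤ Qf g (Function.update s i t') := by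
  intro j
  apply Finset.sum_le_sum
  intro i' _
  rcases eq_or_ne i' i with rfl | hne
  · simpa using h
  · simp [Function.update_of_ne hne]

lemma Qf_update_zero (g : Fin n → Fin ℓ) (s : Fin n → Fin 2) {i : Fin n}
    (h : s i = 1) (j : Fin ℓ) :
    Qf g (Function.update s i 0) j + (if g i = j then 1 else 0) = Qf g s j := by
  unfold Qf
  by_cases hg : g i = j
  · have hmem : i ∈ Finset.univ.filter (fun i' => g i' = j) := by simp [hg]
    rw [if_pos hg, ← Finset.sum_erase_add _ _ hmem,
      ← Finset.sum_erase_add _ (fun i' => ((s i' : ℕ))) hmem]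
    have hcong : ∀ i'' ∈ (Finset.univ.filter (fun i' => g i' = j)).erase i,
        ((Function.update s i 0 i'' : ℕ)) = (s i'' : ℕ) := by
      intro i'' hi''
      rw [Function.update_of_ne (Finset.ne_of_mem_erase hi'')]
    rw [Finset.sum_congr rfl hcong]
    simp [h]
  · rw [if_neg hg, add_zero]
    apply Finset.sum_congr rfl
    intro i'' hi''
    have hne : i'' ≠ i := by
      rintro rfl
      simp only [Finset.mem_filter, Finset.mem_univ, true_and] at hi''
      exact hg hi''
    rw [Function.update_of_ne hne]

lemma Qf_update_eq (g : Fin n → Fin ℓ) {s : Fin n → Fin 2} {i i' : Fin n}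
    (hi : s i = 1) (hi' : s i' = 1) (hg : g i = g i') :
    Qf g (Function.update s i 0) = Qf g (Function.update s i' 0) := by
  funext j
  have h1 := Qf_update_zero g s hi j
  have h2 := Qf_update_zero g s hi' j
  rw [hg] at h1
  omega

end BinaryGroupsAux

/-- For every `n ≥ 1`, `ℓ ≥ 1`, assignment `g` of bidders to expertise
groups, and every binary ℓ-group instance (valuations `v i s = f i (q s)` where
`q s j = ∑_{i' : g i' = j} s i'` and each `f i` is nonnegative and weakly increasing
in every coordinate), there exists an ex-post IC and ex-post IR mechanism `(x, p)`
that 5ℓ-approximates welfare. -/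
theorem binary_groups_welfare_five_ell_approx
    (n ℓ : ℕ) (hn : 1 ≤ n) (hℓ : 1 ≤ ℓ)
    (g : Fin n → Fin ℓ)
    (f : Fin n → (Fin ℓ → ℕ) → ℝ)
    (hf_nonneg : ∀ i q, 0 ≤ f i q)
    (hf_mono : ∀ i, Monotone (f i))
    (v : Fin n → (Fin n → Fin 2) → ℝ)
    (hv : ∀ i s, v i s =
      f i (fun j => ∑ i' ∈ Finset.univ.filter (fun i' => g i' = j), (s i' : ℕ))) :
    ∃ x p : (Fin n → Fin 2) → Fin n → ℝ,
      (∀ s i, 0 ≤ x s i) ∧ (∀ s, ∑ i, x s i ≤ 1) ∧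
      (∀ s i, 0 ≤ p s i) ∧
      (∀ (i : Fin n) (s : Fin n → Fin 2) (t : Fin 2),
        x s i * v i s - p s i ≥
          x (Function.update s i t) i * v i s - p (Function.update s i t) i) ∧
      (∀ (i : Fin n) (s : Fin n → Fin 2), x s i * v i s - p s i ≥ 0) ∧
      (∀ s : Fin n → Fin 2,
        ∑ i, x s i * v i s ≥
          (1 / (5 * (ℓ : ℝ))) *
            Finset.univ.sup' ⟨⟨0, hn⟩, Finset.mem_univ _⟩ (fun i => v i s)) := by
  classical
  have hv' : ∀ i s, v i s = f i (Qf g s) := hv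
  have hl1 : (1:ℝ) ≤ (ℓ:ℝ) := by exact_mod_cast hℓ
  have hlpos : (0:ℝ) < (ℓ:ℝ) := by linarith
  have hvnn : ∀ i s, 0 ≤ v i s := fun i s => by rw [hv']; exact hf_nonneg _ _
  -- global argmax selector A
  have hAex : ∀ q : Fin ℓ → ℕ, ∃ m : Fin n, ∀ m', f m' q ≤ f m q := by
    intro q
    obtain ⟨m, -, hm⟩ := Finset.exists_max_image Finset.univ (fun m => f m q)
      ⟨⟨0, hn⟩, Finset.mem_univ _⟩
    exact ⟨m, fun m' => hm m' (Finset.mem_univ _)⟩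
  choose A hA using hAex
  -- winner among bidders reporting signal 1
  have hWex : ∀ s : Fin n → Fin 2, ∃ w : Fin n,
      (∃ i, s i = 1) → (s w = 1 ∧ ∀ i, s i = 1 → f i (Qf g s) ≤ f w (Qf g s)) := by
    intro s
    by_cases h : ∃ i, s i = 1
    · obtain ⟨i1, hi1⟩ := h
      obtain ⟨w, hwmem, hwmax⟩ := Finset.exists_max_image
        (Finset.univ.filter fun i => s i = 1) (fun i => f i (Qf g s))
        ⟨i1, by simp [hi1]⟩
      refine ⟨w, fun _ => ⟨by simpa using hwmem, fun i hi => hwmax i (by simp [hi])⟩⟩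
    · exact ⟨⟨0, hn⟩, fun h' => absurd h' h⟩
  choose W hW using hWex
  obtain ⟨X, hX⟩ : ∃ X : (Fin n → Fin 2) → Fin n → ℝ, X = fun s i =>
      (if s i = 1 ∧ i = W s then (1/2 : ℝ) else 0) +
      (if A (Qf g (Function.update s i 0)) = i then 1/(4*(ℓ:ℝ)) else 0) := ⟨_, rfl⟩
  have hXval : ∀ s i, X s i =
      (if s i = 1 ∧ i = W s then (1/2 : ℝ) else 0) +
      (if A (Qf g (Function.update s i 0)) = i then 1/(4*(ℓ:ℝ)) else 0) := by
    intro s i; rw [hX]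
  have h4nn : (0:ℝ) ≤ 1/(4*(ℓ:ℝ)) := by positivity
  have hXnn : ∀ s i, 0 ≤ X s i := by
    intro s i; rw [hXval]
    apply add_nonneg <;> split_ifs <;> norm_num [h4nn]
  have hX0 : ∀ s i, X (Function.update s i 0) i =
      (if A (Qf g (Function.update s i 0)) = i then 1/(4*(ℓ:ℝ)) else 0) := by
    intro s i
    rw [hXval, Function.update_idem]
    simp
  have hX1ge : ∀ s i, X (Function.update s i 0) i ≤ X (Function.update s i 1) i := by
    intro s i
    rw [hX0, hXval, Function.update_idem]
    have h1 : (0:ℝ) ≤ (if (Function.update s i 1) i = 1 ∧ i = W (Function.update s i 1)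
        then (1/2:ℝ) else 0) := by split_ifs <;> norm_num
    linarith
  have hmon : ∀ s i, X (Function.update s i 0) i ≤ X s i := by
    intro s i
    rcases fin2cases (s i) with h | h
    · rw [show Function.update s i 0 = s from by rw [← h, Function.update_eq_self]]
    · calc X (Function.update s i 0) i ≤ X (Function.update s i 1) i := hX1ge s i
        _ = X s i := by rw [← h, Function.update_eq_self]
  have hvmon : ∀ (s : Fin n → Fin 2) i, v i (Function.update s i 0) ≤ v i s := by
    intro s i
    rw [hv', hv']
    apply hf_mono i
    have := Qf_update_le g s i (t := 0) (t' := s i) (by simp)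
    rwa [Function.update_eq_self] at this
  refine ⟨X, fun s i => (X s i - X (Function.update s i 0) i) * v i (Function.update s i 0),
    hXnn, ?_, ?_, ?_, ?_, ?_⟩
  · -- feasibility
    intro s
    have hsplit : ∑ i, X s i =
        (∑ i, (if s i = 1 ∧ i = W s then (1/2 : ℝ) else 0)) +
        (∑ i, (if A (Qf g (Function.update s i 0)) = i then 1/(4*(ℓ:ℝ)) else 0)) := by
      rw [← Finset.sum_add_distrib]
      exact Finset.sum_congr rfl fun i _ => hXval s i
    rw [hsplit]
    have h1 : ∑ i, (if s i = 1 ∧ i = W s then (1/2:ℝ) else 0) ≤ 1/2 := by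
      have hle : ∀ i ∈ Finset.univ, (if s i = 1 ∧ i = W s then (1/2:ℝ) else 0)
          ≤ (if i = W s then (1/2:ℝ) else 0) := by
        intro i _
        by_cases hw : i = W s
        · simp only [hw, and_true, if_pos rfl]
          split_ifs <;> norm_num
        · simp [hw]
      calc ∑ i, (if s i = 1 ∧ i = W s then (1/2:ℝ) else 0)
          ≤ ∑ i, (if i = W s then (1/2:ℝ) else 0) := Finset.sum_le_sum hle
        _ = 1/2 := by rw [Finset.sum_ite_eq' Finset.univ (W s) (fun _ => (1/2:ℝ))]; simp
    have h2 : ∑ i, (if A (Qf g (Function.update s i 0)) = i then (1/(4*(ℓ:ℝ))) else 0)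
        ≤ 1/2 := by
      rw [← Finset.sum_filter, Finset.sum_const, nsmul_eq_mul]
      have hcard : (Finset.univ.filter
          (fun i => A (Qf g (Function.update s i 0)) = i)).card ≤ ℓ + 1 := by
        have hinj : Set.InjOn (fun i => if s i = 1 then some (g i) else none)
            (Finset.univ.filter (fun i => A (Qf g (Function.update s i 0)) = i)) := by
          intro i hi i' hi' hd
          simp only [Finset.coe_filter, Set.mem_setOf_eq, Finset.mem_univ, true_and]
            at hi hi'
          rcases fin2cases (s i) with hsi | hsi <;> rcases fin2cases (s i') with hsi' | hsi'
          · have e1 : Function.update s i 0 = s := by rw [← hsi, Function.update_eq_self]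
            have e2 : Function.update s i' 0 = s := by rw [← hsi', Function.update_eq_self]
            rw [e1] at hi; rw [e2] at hi'
            rw [← hi, ← hi']
          · simp [hsi, hsi'] at hd
          · simp [hsi, hsi'] at hd
          · simp [hsi, hsi'] at hd
            have := Qf_update_eq g hsi hsi' hd
            rw [← hi, ← hi', this]
        have := Finset.card_le_card_of_injOn (fun i => if s i = 1 then some (g i) else none)
          (fun a _ => Finset.mem_univ _) hinj
        simpa using this
      have hc : ((Finset.univ.filter
          (fun i => A (Qf g (Function.update s i 0)) = i)).card : ℝ) ≤ 2*(ℓ:ℝ) := by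
        have : ((Finset.univ.filter
            (fun i => A (Qf g (Function.update s i 0)) = i)).card : ℝ) ≤ (ℓ:ℝ) + 1 := by
          exact_mod_cast hcard
        linarith
      calc ((Finset.univ.filter
            (fun i => A (Qf g (Function.update s i 0)) = i)).card : ℝ) * (1/(4*(ℓ:ℝ)))
          ≤ 2*(ℓ:ℝ) * (1/(4*(ℓ:ℝ))) := mul_le_mul_of_nonneg_right hc h4nn
        _ = 1/2 := by field_simp; ring
    linarith
  · -- payments nonneg
    intro s i
    exact mul_nonneg (sub_nonneg.mpr (hmon s i)) (hvnn _ _)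
  · -- ex-post IC
    intro i s t
    have hpidem : Function.update (Function.update s i t) i 0 = Function.update s i 0 := by
      simp
    dsimp only
    rw [hpidem]
    have hprod : 0 ≤ (X s i - X (Function.update s i t) i) *
        (v i s - v i (Function.update s i 0)) := by
      rcases fin2cases (s i) with h | h
      · have hs0 : Function.update s i 0 = s := by rw [← h, Function.update_eq_self]
        rw [hs0]
        simp
      · have hs1 : Function.update s i 1 = s := by rw [← h, Function.update_eq_self]
        have hxle : X (Function.update s i t) i ≤ X s i := by
          rcases fin2cases t with ht | ht
          · rw [ht]
            calc X (Function.update s i 0) i ≤ X (Function.update s i 1) i := hX1ge s i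
              _ = X s i := by rw [hs1]
          · rw [ht, hs1]
        exact mul_nonneg (sub_nonneg.mpr hxle) (sub_nonneg.mpr (hvmon s i))
    nlinarith [hprod]
  · -- ex-post IR
    intro i s
    dsimp only
    have hA1 : (X s i - X (Function.update s i 0) i) * v i (Function.update s i 0)
        ≤ (X s i - X (Function.update s i 0) i) * v i s :=
      mul_le_mul_of_nonneg_left (hvmon s i) (sub_nonneg.mpr (hmon s i))
    have hB : 0 ≤ X (Function.update s i 0) i * v i s :=
      mul_nonneg (hXnn _ _) (hvnn _ _)
    nlinarith [hA1, hB]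
  · -- welfare
    intro s
    have hMnn : 0 ≤ f (A (Qf g s)) (Qf g s) := hf_nonneg _ _
    have hsup_le : Finset.univ.sup' ⟨⟨0, hn⟩, Finset.mem_univ _⟩ (fun i => v i s)
        ≤ f (A (Qf g s)) (Qf g s) := by
      apply Finset.sup'_le
      intro i _
      rw [hv' i s]
      exact hA (Qf g s) i
    have hsupnn : 0 ≤ Finset.univ.sup' ⟨⟨0, hn⟩, Finset.mem_univ _⟩ (fun i => v i s) := by
      have hle := Finset.le_sup' (fun i => v i s) (Finset.mem_univ (⟨0, hn⟩ : Fin n))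
      exact le_trans (hvnn _ _) hle
    have hterm : ∀ i ∈ Finset.univ, (0:ℝ) ≤ X s i * v i s :=
      fun i _ => mul_nonneg (hXnn s i) (hvnn i s)
    rcases fin2cases (s (A (Qf g s))) with h0 | h1
    · -- the global argmax reports 0: it wins the second piece
      have hupd : Function.update s (A (Qf g s)) 0 = s := by
        rw [← h0, Function.update_eq_self]
      have hx : (1/(4*(ℓ:ℝ))) ≤ X s (A (Qf g s)) := by
        rw [hXval, hupd, if_pos rfl]
        have h1' : (0:ℝ) ≤ (if s (A (Qf g s)) = 1 ∧ (A (Qf g s)) = W s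
            then (1/2:ℝ) else 0) := by split_ifs <;> norm_num
        linarith
      have hvM : v (A (Qf g s)) s = f (A (Qf g s)) (Qf g s) := hv' _ _
      have h54 : (1/(5*(ℓ:ℝ))) ≤ 1/(4*(ℓ:ℝ)) := by
        apply one_div_le_one_div_of_le (by positivity)
        linarith
      calc (1 / (5 * (ℓ : ℝ))) *
            Finset.univ.sup' ⟨⟨0, hn⟩, Finset.mem_univ _⟩ (fun i => v i s)
          ≤ (1/(4*(ℓ:ℝ))) *
            Finset.univ.sup' ⟨⟨0, hn⟩, Finset.mem_univ _⟩ (fun i => v i s) :=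
            mul_le_mul_of_nonneg_right h54 hsupnn
        _ ≤ (1/(4*(ℓ:ℝ))) * f (A (Qf g s)) (Qf g s) :=
            mul_le_mul_of_nonneg_left hsup_le h4nn
        _ ≤ X s (A (Qf g s)) * f (A (Qf g s)) (Qf g s) :=
            mul_le_mul_of_nonneg_right hx hMnn
        _ = X s (A (Qf g s)) * v (A (Qf g s)) s := by rw [hvM]
        _ ≤ ∑ i, X s i * v i s :=
            Finset.single_le_sum hterm (Finset.mem_univ _)
    · -- the global argmax reports 1: the first-piece winner has at least its value
      obtain ⟨hsw, hwmax⟩ := hW s ⟨_, h1⟩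
      have hxw : (1/2:ℝ) ≤ X s (W s) := by
        rw [hXval, if_pos ⟨hsw, rfl⟩]
        have h2' : (0:ℝ) ≤ if A (Qf g (Function.update s (W s) 0)) = W s
            then 1/(4*(ℓ:ℝ)) else 0 := by split_ifs <;> norm_num [h4nn]
        linarith
      have hvw : f (A (Qf g s)) (Qf g s) ≤ v (W s) s := by
        rw [hv']
        exact hwmax _ h1
      have hvwnn : 0 ≤ v (W s) s := hvnn _ _
      have h52 : (1/(5*(ℓ:ℝ))) ≤ (1/2 : ℝ) := by
        apply one_div_le_one_div_of_le (by norm_num)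
        linarith
      calc (1 / (5 * (ℓ : ℝ))) *
            Finset.univ.sup' ⟨⟨0, hn⟩, Finset.mem_univ _⟩ (fun i => v i s)
          ≤ (1/2 : ℝ) *
            Finset.univ.sup' ⟨⟨0, hn⟩, Finset.mem_univ _⟩ (fun i => v i s) :=
            mul_le_mul_of_nonneg_right h52 hsupnn
        _ ≤ (1/2 : ℝ) * f (A (Qf g s)) (Qf g s) :=
            mul_le_mul_of_nonneg_left hsup_le (by norm_num)
        _ ≤ (1/2 : ℝ) * v (W s) s := mul_le_mul_of_nonneg_left hvw (by norm_num)
        _ ≤ X s (W s) * v (W s) s := mul_le_mul_of_nonneg_right hxw hvwnn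
        _ ≤ ∑ i, X s i * v i s :=
            Finset.single_le_sum hterm (Finset.mem_univ _)
end

section
/- For every n ≥ 1, every ℓ ≥ 1, every assignment g : Fin n → Fin ℓ of bidders to expertise groups, and every binary ℓ-group instance (valuations v_i(s) = f_i(q_1(s),...,q_ℓ(s)) where q_j(s) = ∑_{i' : g(i')=j} s_{i'} and each f_i is nonnegative and weakly increasing in every coordinate), there exists a mechanism (x, p) that is ex-post incentive compatible and ex-post individually rational and whose revenue 10ℓ-approximates the optimal welfare, i.e., for every signal profile s, ∑_i p_i(s) ≥ (1/(10ℓ))·max_i v_i(s). -/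
namespace BGaux

variable {n ℓ : ℕ}

/-- group quality vector -/
def Q (g : Fin n → Fin ℓ) (s : Fin n → Fin 2) : Fin ℓ → ℕ :=
  fun j => ∑ i' ∈ Finset.univ.filter (fun i' => g i' = j), (s i' : ℕ)

/-- group of bidders -/
def grp (g : Fin n → Fin ℓ) (j : Fin ℓ) : Finset (Fin n) :=
  Finset.univ.filter (fun i => g i = j)

lemma Q_update (g : Fin n → Fin ℓ) (s : Fin n → Fin 2) (i : Fin n) (t : Fin 2) (j : Fin ℓ) :
    Q g (Function.update s i t) j + (if g i = j then (s i : ℕ) else 0)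
      = Q g s j + (if g i = j then (t : ℕ) else 0) := by
  unfold Q
  by_cases h : g i = j
  · have hi : i ∈ Finset.univ.filter (fun i' => g i' = j) := by
      simp [Finset.mem_filter, h]
    rw [← Finset.add_sum_erase _ _ hi, ← Finset.add_sum_erase _ (fun i' => ((s i' : ℕ))) hi]
    have herase : ∑ x ∈ (Finset.univ.filter (fun i' => g i' = j)).erase i,
        ((Function.update s i t x : ℕ)) =
        ∑ x ∈ (Finset.univ.filter (fun i' => g i' = j)).erase i, ((s x : ℕ)) := by
      apply Finset.sum_congr rfl
      intro x hx
      rw [Function.update_of_ne (Finset.ne_of_mem_erase hx)]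
    rw [herase]
    simp [h, Function.update_self]
    omega
  · have hsum : ∑ x ∈ Finset.univ.filter (fun i' => g i' = j),
        ((Function.update s i t x : ℕ)) =
        ∑ x ∈ Finset.univ.filter (fun i' => g i' = j), ((s x : ℕ)) := by
      apply Finset.sum_congr rfl
      intro x hx
      have hx' : g x = j := (Finset.mem_filter.mp hx).2
      have : x ≠ i := fun he => h (he ▸ hx')
      rw [Function.update_of_ne this]
    simp [h, hsum]

lemma Q_update_le (g : Fin n → Fin ℓ) (s : Fin n → Fin 2) (i : Fin n) :
    Q g (Function.update s i 0) ≤ Q g (Function.update s i 1) := by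
  intro j
  unfold Q
  apply Finset.sum_le_sum
  intro i' _
  by_cases h : i' = i
  · subst h
    rw [Function.update_self, Function.update_self]
    exact Nat.zero_le _
  · rw [Function.update_of_ne h, Function.update_of_ne h]

lemma Q_update_eq (g : Fin n → Fin ℓ) (s : Fin n → Fin 2) {i₁ i₂ : Fin n}
    (hg : g i₁ = g i₂) (hs : s i₁ = s i₂) (t : Fin 2) :
    Q g (Function.update s i₁ t) = Q g (Function.update s i₂ t) := by
  funext j
  have h1 := Q_update g s i₁ t j
  have h2 := Q_update g s i₂ t j
  rw [hg, hs] at h1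
  omega

/-- the representative max-value bidder of group `j` at quality vector `r` -/
noncomputable def champ (hn : 1 ≤ n) (g : Fin n → Fin ℓ) (f : Fin n → (Fin ℓ → ℕ) → ℝ)
    (j : Fin ℓ) (r : Fin ℓ → ℕ) : Fin n :=
  if h : ((grp g j).filter (fun i => ∀ i' ∈ grp g j, f i' r ≤ f i r)).Nonempty
  then ((grp g j).filter (fun i => ∀ i' ∈ grp g j, f i' r ≤ f i r)).min' h
  else ⟨0, hn⟩

lemma champ_spec (hn : 1 ≤ n) (g : Fin n → Fin ℓ) (f : Fin n → (Fin ℓ → ℕ) → ℝ)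
    {j : Fin ℓ} (r : Fin ℓ → ℕ) (h : (grp g j).Nonempty) :
    champ hn g f j r ∈ grp g j ∧ ∀ i' ∈ grp g j, f i' r ≤ f (champ hn g f j r) r := by
  obtain ⟨b, hb, hbmax⟩ := Finset.exists_max_image (grp g j) (fun i => f i r) h
  have hne : ((grp g j).filter (fun i => ∀ i' ∈ grp g j, f i' r ≤ f i r)).Nonempty :=
    ⟨b, Finset.mem_filter.mpr ⟨hb, hbmax⟩⟩
  unfold champ
  rw [dif_pos hne]
  have hmem := Finset.min'_mem _ hne
  rw [Finset.mem_filter] at hmem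
  exact ⟨hmem.1, hmem.2⟩

/-- indicator weight of bidder `i` -/
noncomputable def ind (hn : 1 ≤ n) (g : Fin n → Fin ℓ) (f : Fin n → (Fin ℓ → ℕ) → ℝ)
    (i : Fin n) (s : Fin n → Fin 2) : ℝ :=
  (if champ hn g f (g i) (Q g (Function.update s i 0)) = i then 1 else 0) +
  (if champ hn g f (g i) (Q g (Function.update s i 1)) = i then 1 else 0)

lemma ind_nonneg (hn : 1 ≤ n) (g : Fin n → Fin ℓ) (f : Fin n → (Fin ℓ → ℕ) → ℝ)
    (i : Fin n) (s : Fin n → Fin 2) : 0 ≤ ind hn g f i s := by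
  unfold ind; positivity

lemma ind_update (hn : 1 ≤ n) (g : Fin n → Fin ℓ) (f : Fin n → (Fin ℓ → ℕ) → ℝ)
    (i : Fin n) (s : Fin n → Fin 2) (t : Fin 2) :
    ind hn g f i (Function.update s i t) = ind hn g f i s := by
  unfold ind
  rw [Function.update_idem, Function.update_idem]

lemma fin2_cases (b : Fin 2) : b = 0 ∨ b = 1 := by
  revert b; decide

/-- key counting bound: within one group, at most 4 indicators fire -/
lemma sum_ind_grp_le (hn : 1 ≤ n) (g : Fin n → Fin ℓ) (f : Fin n → (Fin ℓ → ℕ) → ℝ)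
    (s : Fin n → Fin 2) (j : Fin ℓ) :
    ∑ i ∈ grp g j, ind hn g f i s ≤ 4 := by
  have key : ∀ t : Fin 2,
      ∑ i ∈ grp g j, (if champ hn g f (g i) (Q g (Function.update s i t)) = i then (1:ℝ) else 0)
        ≤ 2 := by
    intro t
    have hsplit := Finset.sum_filter_add_sum_filter_not (grp g j) (fun i => s i = 0)
      (fun i => (if champ hn g f (g i) (Q g (Function.update s i t)) = i then (1:ℝ) else 0))
    have hpart : ∀ (b : Fin 2) (T : Finset (Fin n)), T ⊆ grp g j → (∀ i ∈ T, s i = b) →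
        ∑ i ∈ T, (if champ hn g f (g i) (Q g (Function.update s i t)) = i then (1:ℝ) else 0)
          ≤ 1 := by
      intro b T hTsub hTb
      have hcard : (T.filter (fun i => champ hn g f (g i) (Q g (Function.update s i t)) = i)).card
          ≤ 1 := by
        apply Finset.card_le_one.mpr
        intro a ha c hc
        rw [Finset.mem_filter] at ha hc
        have hga : g a = j := (Finset.mem_filter.mp (hTsub ha.1)).2
        have hgc : g c = j := (Finset.mem_filter.mp (hTsub hc.1)).2
        have hQ : Q g (Function.update s a t) = Q g (Function.update s c t) :=
          Q_update_eq g s (hga.trans hgc.symm) ((hTb a ha.1).trans (hTb c hc.1).symm) t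
        have := ha.2
        rw [hga, hQ, ← hgc] at this
        rw [← this]
        exact hc.2
      rw [Finset.sum_boole]
      exact_mod_cast hcard
    have h0 := hpart 0 ((grp g j).filter (fun i => s i = 0)) (Finset.filter_subset _ _)
      (fun i hi => (Finset.mem_filter.mp hi).2)
    have h1 := hpart 1 ((grp g j).filter (fun i => ¬ s i = 0)) (Finset.filter_subset _ _)
      (fun i hi => by
        have := (Finset.mem_filter.mp hi).2
        rcases fin2_cases (s i) with h | h
        · exact absurd h this
        · exact h)
    linarith
  unfold ind
  rw [Finset.sum_add_distrib]
  have := key 0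
  have := key 1
  linarith

lemma sum_ind_le (hn : 1 ≤ n) (g : Fin n → Fin ℓ) (f : Fin n → (Fin ℓ → ℕ) → ℝ)
    (s : Fin n → Fin 2) :
    ∑ i, ind hn g f i s ≤ 4 * ℓ := by
  have hfib : ∑ j : Fin ℓ, ∑ i ∈ Finset.univ.filter (fun i => g i = j), ind hn g f i s
      = ∑ i, ind hn g f i s :=
    Finset.sum_fiberwise_of_maps_to (fun i _ => Finset.mem_univ (g i)) _
  rw [← hfib]
  calc ∑ j : Fin ℓ, ∑ i ∈ Finset.univ.filter (fun i => g i = j), ind hn g f i s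
      ≤ ∑ _j : Fin ℓ, (4:ℝ) := by
        apply Finset.sum_le_sum
        intro j _
        exact sum_ind_grp_le hn g f s j
    _ = 4 * ℓ := by rw [Finset.sum_const]; simp [mul_comm]

end BGaux

open BGaux in
/-- For every `n ≥ 1`, `ℓ ≥ 1`, assignment `g` of bidders to expertise
groups, and every binary ℓ-group instance, there exists an ex-post IC and ex-post IR
mechanism `(x, p)` whose revenue 10ℓ-approximates the optimal welfare. -/
theorem binary_groups_revenue_ten_ell_approx
    (n ℓ : ℕ) (hn : 1 ≤ n) (hℓ : 1 ≤ ℓ)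
    (g : Fin n → Fin ℓ)
    (f : Fin n → (Fin ℓ → ℕ) → ℝ)
    (hf_nonneg : ∀ i q, 0 ≤ f i q)
    (hf_mono : ∀ i, Monotone (f i))
    (v : Fin n → (Fin n → Fin 2) → ℝ)
    (hv : ∀ i s, v i s =
      f i (fun j => ∑ i' ∈ Finset.univ.filter (fun i' => g i' = j), (s i' : ℕ))) :
    ∃ x p : (Fin n → Fin 2) → Fin n → ℝ,
      (∀ s i, 0 ≤ x s i) ∧ (∀ s, ∑ i, x s i ≤ 1) ∧
      (∀ s i, 0 ≤ p s i) ∧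
      (∀ (i : Fin n) (s : Fin n → Fin 2) (t : Fin 2),
        x s i * v i s - p s i ≥
          x (Function.update s i t) i * v i s - p (Function.update s i t) i) ∧
      (∀ (i : Fin n) (s : Fin n → Fin 2), x s i * v i s - p s i ≥ 0) ∧
      (∀ s : Fin n → Fin 2,
        ∑ i, p s i ≥
          (1 / (10 * (ℓ : ℝ))) *
            Finset.univ.sup' ⟨⟨0, hn⟩, Finset.mem_univ _⟩ (fun i => v i s)) := by
  classical
  have hℓR : (1:ℝ) ≤ ℓ := by exact_mod_cast hℓ
  have hℓpos : (0:ℝ) < 4 * ℓ := by linarith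
  -- valuations in terms of Q
  have hvQ : ∀ i s, v i s = f i (Q g s) := by
    intro i s; rw [hv i s]; rfl
  -- the loser/winner values
  set w : Fin 2 → Fin n → (Fin n → Fin 2) → ℝ :=
    fun b i s => f i (Q g (Function.update s i b)) with hw
  have hw01 : ∀ i s, w 0 i s ≤ w 1 i s := by
    intro i s
    exact hf_mono i (Q_update_le g s i)
  have hw_nonneg : ∀ b i s, 0 ≤ w b i s := fun b i s => hf_nonneg _ _
  have hw_update : ∀ b i s t, w b i (Function.update s i t) = w b i s := by
    intro b i s t
    simp only [hw, Function.update_idem]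
  have hw_self : ∀ i s, w (s i) i s = v i s := by
    intro i s
    simp only [hw, Function.update_eq_self, hvQ]
  -- allocation shares
  set xb : Fin n → (Fin n → Fin 2) → ℝ :=
    fun i s => (4 * (ℓ:ℝ))⁻¹ * ind hn g f i s with hxb
  have hxb_nonneg : ∀ i s, 0 ≤ xb i s := by
    intro i s
    exact mul_nonneg (by positivity) (ind_nonneg hn g f i s)
  have hxb_update : ∀ i s t, xb i (Function.update s i t) = xb i s := by
    intro i s t
    simp only [hxb, ind_update]
  -- the mechanism
  refine ⟨fun s i => xb i s * (if s i = 0 then (1/2:ℝ) else 1),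
    fun s i => xb i s * (if s i = 0 then w 0 i s / 2 else (w 0 i s + w 1 i s) / 2),
    ?_, ?_, ?_, ?_, ?_, ?_⟩
  · -- x nonneg
    intro s i
    apply mul_nonneg (hxb_nonneg i s)
    split <;> norm_num
  · -- feasibility
    intro s
    have hle : ∀ i : Fin n, xb i s * (if s i = 0 then (1/2:ℝ) else 1) ≤ xb i s := by
      intro i
      have h := hxb_nonneg i s
      split <;> linarith
    calc ∑ i, xb i s * (if s i = 0 then (1/2:ℝ) else 1) ≤ ∑ i, xb i s :=
          Finset.sum_le_sum (fun i _ => hle i)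
      _ = (4 * (ℓ:ℝ))⁻¹ * ∑ i, ind hn g f i s := by rw [Finset.mul_sum]
      _ ≤ (4 * (ℓ:ℝ))⁻¹ * (4 * ℓ) := by
          apply mul_le_mul_of_nonneg_left (sum_ind_le hn g f s) (by positivity)
      _ = 1 := inv_mul_cancel₀ (ne_of_gt hℓpos)
  · -- p nonneg
    intro s i
    apply mul_nonneg (hxb_nonneg i s)
    have := hw_nonneg 0 i s
    have := hw_nonneg 1 i s
    split <;> linarith
  · -- ex-post IC
    intro i s t
    have ha := hxb_nonneg i s
    have h01 := hw01 i s
    by_cases hts : t = s i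
    · rw [hts, Function.update_eq_self]
    · have hupx := hxb_update i s t
      have hup0 := hw_update 0 i s t
      have hup1 := hw_update 1 i s t
      have hupt : (Function.update s i t) i = t := Function.update_self i t s
      simp only [hupx, hupt, hup0, hup1]
      rcases fin2_cases (s i) with hsi | hsi
      · have ht : t = 1 := by
          rcases fin2_cases t with ht | ht
          · exact absurd (ht.trans hsi.symm) hts
          · exact ht
        have hvis : v i s = w 0 i s := by rw [← hw_self i s, hsi]
        rw [hsi, ht, hvis, if_pos rfl, if_pos rfl,
          if_neg (by decide : ¬ (1:Fin 2) = 0), if_neg (by decide : ¬ (1:Fin 2) = 0)]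
        nlinarith [mul_nonneg ha (sub_nonneg.mpr h01)]
      · have ht : t = 0 := by
          rcases fin2_cases t with ht | ht
          · exact ht
          · exact absurd (ht.trans hsi.symm) hts
        have hvis : v i s = w 1 i s := by rw [← hw_self i s, hsi]
        rw [hsi, ht, hvis, if_neg (by decide : ¬ (1:Fin 2) = 0),
          if_neg (by decide : ¬ (1:Fin 2) = 0), if_pos rfl, if_pos rfl]
        nlinarith [mul_nonneg ha (sub_nonneg.mpr h01)]
  · -- ex-post IR
    intro i s
    have ha := hxb_nonneg i s
    have h01 := hw01 i s
    rcases fin2_cases (s i) with hsi | hsi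
    · have hvis : v i s = w 0 i s := by rw [← hw_self i s, hsi]
      simp only [hvis]
      rw [hsi, if_pos rfl, if_pos rfl]
      nlinarith [mul_nonneg ha (hw_nonneg 0 i s)]
    · have hvis : v i s = w 1 i s := by rw [← hw_self i s, hsi]
      simp only [hvis]
      rw [hsi, if_neg (by decide : ¬ (1:Fin 2) = 0), if_neg (by decide : ¬ (1:Fin 2) = 0)]
      nlinarith [mul_nonneg ha (sub_nonneg.mpr h01)]
  · -- revenue
    intro s
    set H : Finset.Nonempty (Finset.univ : Finset (Fin n)) := ⟨⟨0, hn⟩, Finset.mem_univ _⟩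
    obtain ⟨i₀, -, hi₀⟩ := Finset.exists_mem_eq_sup' H (fun i => v i s)
    set M := Finset.univ.sup' H (fun i => v i s) with hM
    have hi₀grp : i₀ ∈ grp g (g i₀) := by simp [grp]
    obtain ⟨hcmem, hcmax⟩ := champ_spec hn g f (Q g s) ⟨i₀, hi₀grp⟩
    set c := champ hn g f (g i₀) (Q g s) with hc
    have hgc : g c = g i₀ := (Finset.mem_filter.mp hcmem).2
    have hvc : M ≤ v c s := by
      rw [hi₀, hvQ i₀ s, hvQ c s]
      exact hcmax i₀ hi₀grp
    have hM0 : 0 ≤ M := by rw [hi₀, hvQ]; exact hf_nonneg _ _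
    -- one of c's indicators fires
    have hind : (1:ℝ) ≤ ind hn g f c s := by
      have hupd : Function.update s c (s c) = s := Function.update_eq_self c s
      unfold ind
      rcases fin2_cases (s c) with hsc | hsc
      · rw [hsc] at hupd
        rw [hupd, hgc, ← hc, if_pos rfl]
        split <;> norm_num
      · rw [hsc] at hupd
        rw [hupd, hgc, ← hc, if_pos rfl]
        split <;> norm_num
    have hxbc : (4 * (ℓ:ℝ))⁻¹ ≤ xb c s := by
      rw [hxb]
      calc (4 * (ℓ:ℝ))⁻¹ = (4 * (ℓ:ℝ))⁻¹ * 1 := by ring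
        _ ≤ (4 * (ℓ:ℝ))⁻¹ * ind hn g f c s := by
            apply mul_le_mul_of_nonneg_left hind (by positivity)
    -- payment of c covers M / (8 ℓ)
    have hpc : M / (8 * ℓ) ≤ xb c s * (if s c = 0 then w 0 c s / 2 else (w 0 c s + w 1 c s) / 2) := by
      have hwc : v c s ≤ 2 * (if s c = 0 then w 0 c s / 2 else (w 0 c s + w 1 c s) / 2) := by
        have hvcs : v c s = w (s c) c s := (hw_self c s).symm
        have h0 := hw_nonneg 0 c s
        rcases fin2_cases (s c) with hsc | hsc <;> simp [hvcs, hsc] <;> linarith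
      set pay := (if s c = 0 then w 0 c s / 2 else (w 0 c s + w 1 c s) / 2) with hpay
      have hpay0 : 0 ≤ pay := by
        have := hw_nonneg 0 c s; have := hw_nonneg 1 c s
        rw [hpay]; split <;> linarith
      have h1 : M / (8 * ℓ) ≤ (4 * (ℓ:ℝ))⁻¹ * pay := by
        have : M ≤ 2 * pay := le_trans hvc hwc
        rw [div_le_iff₀ (by linarith : (0:ℝ) < 8 * ℓ)]
        have h2 : (4 * (ℓ:ℝ))⁻¹ * pay * (8 * ℓ) = 2 * pay := by
          field_simp
          ring
        rw [h2]
        exact this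
      calc M / (8 * ℓ) ≤ (4 * (ℓ:ℝ))⁻¹ * pay := h1
        _ ≤ xb c s * pay := mul_le_mul_of_nonneg_right hxbc hpay0
    have hsum : xb c s * (if s c = 0 then w 0 c s / 2 else (w 0 c s + w 1 c s) / 2)
        ≤ ∑ i, xb i s * (if s i = 0 then w 0 i s / 2 else (w 0 i s + w 1 i s) / 2) := by
      apply Finset.single_le_sum (f := fun i => xb i s *
        (if s i = 0 then w 0 i s / 2 else (w 0 i s + w 1 i s) / 2)) _ (Finset.mem_univ c)
      intro i _
      apply mul_nonneg (hxb_nonneg i s)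
      have := hw_nonneg 0 i s; have := hw_nonneg 1 i s
      split <;> linarith
    have hfinal : (1 / (10 * (ℓ:ℝ))) * M ≤ M / (8 * ℓ) := by
      rw [one_div, inv_mul_eq_div]
      exact div_le_div_of_nonneg_left hM0 (by linarith) (by linarith)
    calc (1 / (10 * (ℓ:ℝ))) * M ≤ M / (8 * ℓ) := hfinal
      _ ≤ _ := le_trans hpc hsum
end

section
/- For every ℓ ≥ 1, every k ≥ 2, and every real α with 0 < α < ℓ·(k−1) + 1, there exist a number of bidders n, an assignment g : Fin n → Fin ℓ of bidders to expertise groups, and a shared-quality instance of nonnegative valuations v_i, such that for every feasible per-bidder monotone allocation rule x there exists a signal profile s with ∑_i x_i(s)·v_i(s) < (1/α)·max_i v_i(s). (Consequently, no ex-post incentive compatible auction for shared-quality instances with ℓ expertise types and k signal values achieves better than an (ℓ(k−1)+1)-approximation to the optimal welfare.) -/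
namespace SQLB

/-- number of bidders: `ℓ(k-1)+1` -/
def nn (ℓ k : ℕ) : ℕ := ℓ * (k - 1) + 1

/-- depth of bidder `i` (as a natural index): bidder 0 has depth 0,
bidder `i ≠ 0` has depth `(i-1) % (k-1) + 1 ∈ [1, k-1]`. -/
def dep (k i : ℕ) : ℕ := if i = 0 then 0 else (i - 1) % (k - 1) + 1

lemma dep_zero (k : ℕ) : dep k 0 = 0 := rfl

lemma dep_pos {k i : ℕ} (hi : i ≠ 0) : 1 ≤ dep k i := by
  simp [dep, hi]

lemma dep_le {k i : ℕ} (hk : 2 ≤ k) : dep k i ≤ k - 1 := by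
  unfold dep
  split
  · omega
  · have := Nat.mod_lt (i - 1) (y := k - 1) (by omega)
    omega

/-- group of bidder `i` -/
def grp (ℓ k : ℕ) (hℓ : 1 ≤ ℓ) (hk : 2 ≤ k) (i : Fin (nn ℓ k)) : Fin ℓ :=
  if h : (i : ℕ) = 0 then ⟨0, hℓ⟩
  else ⟨((i : ℕ) - 1) / (k - 1), by
    have hi := i.isLt
    have hk1 : 0 < k - 1 := by omega
    rw [Nat.div_lt_iff_lt_mul hk1]
    unfold nn at hi
    omega⟩

lemma grp_dep_inj {ℓ k : ℕ} (hℓ : 1 ≤ ℓ) (hk : 2 ≤ k) {i j : Fin (nn ℓ k)}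
    (hg : grp ℓ k hℓ hk i = grp ℓ k hℓ hk j) (hd : dep k i = dep k j) : i = j := by
  unfold grp at hg
  unfold dep at hd
  by_cases hi : (i : ℕ) = 0 <;> by_cases hj : (j : ℕ) = 0
  · exact Fin.ext (by omega)
  · simp [hi, hj] at hd
  · simp [hi, hj] at hd
  · rw [dif_neg hi, dif_neg hj] at hg
    simp only [Fin.mk.injEq] at hg
    rw [if_neg hi, if_neg hj] at hd
    have h1 := Nat.div_add_mod ((i : ℕ) - 1) (k - 1)
    have h2 := Nat.div_add_mod ((j : ℕ) - 1) (k - 1)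
    have : ((i:ℕ) - 1) = ((j:ℕ) - 1) := by
      rw [← h1, ← h2, hg, (by omega : ((i:ℕ)-1) % (k-1) = ((j:ℕ)-1) % (k-1))]
    exact Fin.ext (by omega)

/-- top signal profile -/
def sStar (ℓ k : ℕ) (hk : 2 ≤ k) : Fin (nn ℓ k) → Fin k := fun _ => ⟨k - 1, by omega⟩

/-- the lowered signal of bidder `i` -/
def sig (ℓ k : ℕ) (hk : 2 ≤ k) (i : Fin (nn ℓ k)) : Fin k := ⟨k - 1 - dep k i, by omega⟩

/-- profile where bidder `i` lowers its signal by its depth -/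
def Sp (ℓ k : ℕ) (hk : 2 ≤ k) (i : Fin (nn ℓ k)) : Fin (nn ℓ k) → Fin k :=
  Function.update (sStar ℓ k hk) i (sig ℓ k hk i)

/-- group quality vector -/
def Qv (ℓ k : ℕ) (hℓ : 1 ≤ ℓ) (hk : 2 ≤ k) (s : Fin (nn ℓ k) → Fin k) (c : Fin ℓ) : ℕ :=
  ∑ i' ∈ Finset.univ.filter (fun i' => grp ℓ k hℓ hk i' = c), ((s i' : ℕ))

variable (ℓ k : ℕ) (hℓ : 1 ≤ ℓ) (hk : 2 ≤ k)

lemma Qv_update_eq (s : Fin (nn ℓ k) → Fin k) (i : Fin (nn ℓ k)) (t : Fin k)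
    {c : Fin ℓ} (h : grp ℓ k hℓ hk i = c) :
    Qv ℓ k hℓ hk (Function.update s i t) c
      = (∑ i' ∈ (Finset.univ.filter (fun i' => grp ℓ k hℓ hk i' = c)).erase i,
          ((s i' : ℕ))) + (t : ℕ) := by
  unfold Qv
  rw [← Finset.sum_erase_add _ _ (show i ∈ _ by simp [h])]
  congr 1
  · refine Finset.sum_congr rfl fun j hj => ?_
    rw [Function.update_of_ne (Finset.ne_of_mem_erase hj)]
  · rw [Function.update_self]

lemma Qv_update_ne (s : Fin (nn ℓ k) → Fin k) (i : Fin (nn ℓ k)) (t : Fin k)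
    {c : Fin ℓ} (h : grp ℓ k hℓ hk i ≠ c) :
    Qv ℓ k hℓ hk (Function.update s i t) c = Qv ℓ k hℓ hk s c := by
  unfold Qv
  refine Finset.sum_congr rfl fun j hj => ?_
  have hjc : grp ℓ k hℓ hk j = c := (Finset.mem_filter.mp hj).2
  rw [Function.update_of_ne (by rintro rfl; exact h hjc)]

lemma Qv_star (i : Fin (nn ℓ k)) {c : Fin ℓ} (h : grp ℓ k hℓ hk i = c) :
    Qv ℓ k hℓ hk (sStar ℓ k hk) c
      = (∑ i' ∈ (Finset.univ.filter (fun i' => grp ℓ k hℓ hk i' = c)).erase i,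
          ((sStar ℓ k hk i' : ℕ))) + (k - 1) := by
  have := Qv_update_eq ℓ k hℓ hk (sStar ℓ k hk) i (sStar ℓ k hk i) h
  rwa [Function.update_eq_self] at this

lemma Sp_zero_eq (i : Fin (nn ℓ k)) (hi : (i : ℕ) = 0) : Sp ℓ k hk i = sStar ℓ k hk := by
  unfold Sp
  have : sig ℓ k hk i = sStar ℓ k hk i := by
    apply Fin.ext
    simp [sig, sStar, dep, hi]
  rw [this, Function.update_eq_self]

/-- Key ordering lemma: if `j ≠ i` and the threshold of `j` is below the quality
vector of profile `Sp i`, then `j`'s exponent is strictly smaller. -/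
lemma key {i j : Fin (nn ℓ k)} (hne : j ≠ i)
    (hle : ∀ c, Qv ℓ k hℓ hk (Sp ℓ k hk j) c ≤ Qv ℓ k hℓ hk (Sp ℓ k hk i) c) :
    k - dep k j < k - dep k i := by
  by_cases hi : (i : ℕ) = 0
  · have hj0 : (j : ℕ) ≠ 0 := fun hh => hne (Fin.ext (by omega))
    have h1 := dep_pos (k := k) hj0
    have h2 := dep_le (k := k) (i := (j : ℕ)) hk
    have h3 : dep k (i : ℕ) = 0 := by rw [hi]; rfl
    omega
  · have hdi1 := dep_pos (k := k) hi
    have hdi2 := dep_le (k := k) (i := (i : ℕ)) hk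
    have hc := hle (grp ℓ k hℓ hk i)
    have hQi : Qv ℓ k hℓ hk (Sp ℓ k hk i) (grp ℓ k hℓ hk i)
        = (∑ i' ∈ (Finset.univ.filter
            (fun i' => grp ℓ k hℓ hk i' = grp ℓ k hℓ hk i)).erase i,
            ((sStar ℓ k hk i' : ℕ))) + (k - 1 - dep k i) :=
      Qv_update_eq ℓ k hℓ hk (sStar ℓ k hk) i (sig ℓ k hk i) rfl
    have hQsi := Qv_star ℓ k hℓ hk i (c := grp ℓ k hℓ hk i) rfl
    by_cases hj : (j : ℕ) = 0
    · rw [Sp_zero_eq ℓ k hk j hj] at hc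
      rw [hQi, hQsi] at hc
      omega
    · have hdj1 := dep_pos (k := k) hj
      have hdj2 := dep_le (k := k) (i := (j : ℕ)) hk
      by_cases hgj : grp ℓ k hℓ hk j = grp ℓ k hℓ hk i
      · have hQj : Qv ℓ k hℓ hk (Sp ℓ k hk j) (grp ℓ k hℓ hk i)
            = (∑ i' ∈ (Finset.univ.filter
                (fun i' => grp ℓ k hℓ hk i' = grp ℓ k hℓ hk i)).erase j,
                ((sStar ℓ k hk i' : ℕ))) + (k - 1 - dep k j) :=
          Qv_update_eq ℓ k hℓ hk (sStar ℓ k hk) j (sig ℓ k hk j) hgj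
        have hQsj := Qv_star ℓ k hℓ hk j (c := grp ℓ k hℓ hk i) hgj
        have hdne : dep k (i : ℕ) ≠ dep k (j : ℕ) := by
          intro hdd
          exact hne (grp_dep_inj hℓ hk hgj hdd.symm)
        rw [hQi, hQj] at hc
        omega
      · have hQj : Qv ℓ k hℓ hk (Sp ℓ k hk j) (grp ℓ k hℓ hk i)
            = Qv ℓ k hℓ hk (sStar ℓ k hk) (grp ℓ k hℓ hk i) :=
          Qv_update_ne ℓ k hℓ hk (sStar ℓ k hk) j (sig ℓ k hk j) hgj
        rw [hQi, hQj, hQsi] at hc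
        omega

/-- valuation as a function of the quality vector: threshold indicator times `B^(k - dep i)` -/
noncomputable def FF (ℓ k : ℕ) (hℓ : 1 ≤ ℓ) (hk : 2 ≤ k) (B : ℝ)
    (i : Fin (nn ℓ k)) (q : Fin ℓ → ℕ) : ℝ :=
  if (∀ c, Qv ℓ k hℓ hk (Sp ℓ k hk i) c ≤ q c) then B ^ (k - dep k i) else 0

/-- valuation as a function of the signal profile -/
noncomputable def VV (ℓ k : ℕ) (hℓ : 1 ≤ ℓ) (hk : 2 ≤ k) (B : ℝ)
    (i : Fin (nn ℓ k)) (s : Fin (nn ℓ k) → Fin k) : ℝ :=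
  FF ℓ k hℓ hk B i (fun j => Qv ℓ k hℓ hk s j)

theorem main (ℓ k : ℕ) (hℓ : 1 ≤ ℓ) (hk : 2 ≤ k) (α : ℝ) (hα0 : 0 < α)
    (B : ℝ) (hB1 : 1 < B)
    (hBgt : (nn ℓ k : ℝ) ^ 2 * α < B * ((nn ℓ k : ℝ) - α))
    (H : (Finset.univ : Finset (Fin (nn ℓ k))).Nonempty)
    (x : (Fin (nn ℓ k) → Fin k) → Fin (nn ℓ k) → ℝ)
    (hx0 : ∀ s i, 0 ≤ x s i) (hx1 : ∀ s, ∑ i, x s i ≤ 1)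
    (hmono : ∀ (i : Fin (nn ℓ k)) (s : Fin (nn ℓ k) → Fin k),
      Monotone fun t => x (Function.update s i t) i) :
    ∃ s : Fin (nn ℓ k) → Fin k,
      ∑ i, x s i * VV ℓ k hℓ hk B i s <
        (1 / α) * Finset.univ.sup' H (fun i => VV ℓ k hℓ hk B i s) := by
  by_contra hcon
  push_neg at hcon
  have hB0 : (0:ℝ) < B := by linarith
  have hαne : α ≠ 0 := ne_of_gt hα0
  have hN0 : (0:ℝ) < (nn ℓ k : ℝ) := by
    have : 0 < nn ℓ k := Nat.succ_le_of_lt (by unfold nn; omega)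
    exact_mod_cast this
  -- per-bidder estimate
  have key1 : ∀ i : Fin (nn ℓ k),
      1 / α * B ≤ x (sStar ℓ k hk) i * B + (nn ℓ k : ℝ) := by
    intro i
    have hdle := dep_le (k := k) (i := (i : ℕ)) hk
    have he1 : 1 ≤ k - dep k (i : ℕ) := by omega
    have h1 := hcon (Sp ℓ k hk i)
    have hvi : VV ℓ k hℓ hk B i (Sp ℓ k hk i) = B ^ (k - dep k (i : ℕ)) := by
      unfold VV FF
      exact if_pos (fun c => le_refl _)
    have hsup : B ^ (k - dep k (i : ℕ)) ≤
        Finset.univ.sup' H (fun j => VV ℓ k hℓ hk B j (Sp ℓ k hk i)) :=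
      hvi ▸ Finset.le_sup' (fun j => VV ℓ k hℓ hk B j (Sp ℓ k hk i)) (Finset.mem_univ i)
    have h2 : (1/α) * B ^ (k - dep k (i : ℕ)) ≤
        ∑ j, x (Sp ℓ k hk i) j * VV ℓ k hℓ hk B j (Sp ℓ k hk i) :=
      le_trans (mul_le_mul_of_nonneg_left hsup (by positivity)) h1
    have h3 : ∑ j, x (Sp ℓ k hk i) j * VV ℓ k hℓ hk B j (Sp ℓ k hk i)
        ≤ x (Sp ℓ k hk i) i * B ^ (k - dep k (i : ℕ))
          + (nn ℓ k : ℝ) * B ^ (k - dep k (i : ℕ) - 1) := by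
      rw [← Finset.sum_erase_add _ _ (Finset.mem_univ i)]
      rw [add_comm (x (Sp ℓ k hk i) i * B ^ (k - dep k (i : ℕ)))]
      refine add_le_add ?_ ?_
      · calc ∑ j ∈ Finset.univ.erase i, x (Sp ℓ k hk i) j * VV ℓ k hℓ hk B j (Sp ℓ k hk i)
            ≤ ∑ _j ∈ Finset.univ.erase i, B ^ (k - dep k (i : ℕ) - 1) := by
              refine Finset.sum_le_sum fun j hj => ?_
              have hj' : j ≠ i := Finset.ne_of_mem_erase hj
              have hx_le : x (Sp ℓ k hk i) j ≤ 1 :=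
                le_trans (Finset.single_le_sum (fun m _ => hx0 _ m) (Finset.mem_univ j)) (hx1 _)
              have hv0 : 0 ≤ VV ℓ k hℓ hk B j (Sp ℓ k hk i) := by
                unfold VV FF
                split_ifs
                · exact pow_nonneg hB0.le _
                · exact le_refl 0
              have hv_le : VV ℓ k hℓ hk B j (Sp ℓ k hk i) ≤ B ^ (k - dep k (i : ℕ) - 1) := by
                unfold VV FF
                split_ifs with hact
                · have hkey := key ℓ k hℓ hk hj' (fun c => hact c)
                  exact pow_le_pow_right₀ hB1.le (by omega)
                · exact pow_nonneg hB0.le _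
              calc x (Sp ℓ k hk i) j * VV ℓ k hℓ hk B j (Sp ℓ k hk i)
                  ≤ 1 * B ^ (k - dep k (i : ℕ) - 1) := mul_le_mul hx_le hv_le hv0 zero_le_one
                _ = B ^ (k - dep k (i : ℕ) - 1) := one_mul _
          _ = ((Finset.univ.erase i).card : ℝ) * B ^ (k - dep k (i : ℕ) - 1) := by
              rw [Finset.sum_const, nsmul_eq_mul]
          _ ≤ (nn ℓ k : ℝ) * B ^ (k - dep k (i : ℕ) - 1) := by
              refine mul_le_mul_of_nonneg_right ?_ (pow_nonneg hB0.le _)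
              have hcard : (Finset.univ.erase i).card ≤ nn ℓ k := by
                calc (Finset.univ.erase i).card ≤ Finset.univ.card := Finset.card_erase_le
                  _ = nn ℓ k := by simp
              exact_mod_cast hcard
      · rw [hvi]
    have h4 := le_trans h2 h3
    have hpow : B ^ (k - dep k (i : ℕ)) = B ^ (k - dep k (i : ℕ) - 1) * B := by
      rw [← pow_succ]
      congr 1
      omega
    rw [hpow] at h4
    have hP : (0:ℝ) < B ^ (k - dep k (i : ℕ) - 1) := pow_pos hB0 _
    have h5 : (1/α * B) * B ^ (k - dep k (i : ℕ) - 1)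
        ≤ (x (Sp ℓ k hk i) i * B + (nn ℓ k : ℝ)) * B ^ (k - dep k (i : ℕ) - 1) := by
      nlinarith [h4]
    have h6 : 1/α * B ≤ x (Sp ℓ k hk i) i * B + (nn ℓ k : ℝ) :=
      le_of_mul_le_mul_right h5 hP
    have hm : x (Sp ℓ k hk i) i ≤ x (sStar ℓ k hk) i := by
      have hle : sig ℓ k hk i ≤ sStar ℓ k hk i := by
        show (k - 1 - dep k (i : ℕ)) ≤ (k - 1)
        omega
      have h := hmono i (sStar ℓ k hk) hle
      dsimp only at h
      rwa [Function.update_eq_self] at h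
    nlinarith [mul_le_mul_of_nonneg_right hm hB0.le]
  -- sum up
  have hsum := Finset.sum_le_sum (fun i (_ : i ∈ Finset.univ) => key1 i)
  rw [Finset.sum_const, Finset.card_univ] at hsum
  have hR : ∑ i, (x (sStar ℓ k hk) i * B + (nn ℓ k : ℝ))
      = (∑ i, x (sStar ℓ k hk) i) * B + (nn ℓ k : ℝ) * (nn ℓ k : ℝ) := by
    rw [Finset.sum_add_distrib, ← Finset.sum_mul, Finset.sum_const, Finset.card_univ,
      nsmul_eq_mul]
    simp
  rw [hR] at hsum
  have hcard : (Fintype.card (Fin (nn ℓ k)) : ℝ) = (nn ℓ k : ℝ) := by simp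
  rw [show (Fintype.card (Fin (nn ℓ k))) • (1/α*B) = (Fintype.card (Fin (nn ℓ k)) : ℝ) * (1/α*B)
    from nsmul_eq_mul _ _, hcard] at hsum
  have hxs := hx1 (sStar ℓ k hk)
  have h6 : (nn ℓ k : ℝ) * (1/α*B) ≤ B + (nn ℓ k : ℝ)^2 := by nlinarith
  have h7 : (nn ℓ k : ℝ) * B ≤ (B + (nn ℓ k : ℝ)^2) * α := by
    have e1 : ((nn ℓ k : ℝ) * (1/α*B)) * α = (nn ℓ k : ℝ) * B := by
      field_simp
    calc (nn ℓ k : ℝ) * B = ((nn ℓ k : ℝ) * (1/α*B)) * α := e1.symm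
      _ ≤ (B + (nn ℓ k : ℝ)^2) * α := mul_le_mul_of_nonneg_right h6 hα0.le
  nlinarith [h7, hBgt]

end SQLB


/-- For every `ℓ ≥ 1`, `k ≥ 2`, and real `α` with `0 < α < ℓ(k-1) + 1`,
there exist a number of bidders `n`, a group assignment `g`, and a shared-quality
instance of nonnegative valuations, such that every feasible per-bidder monotone
allocation rule fails to `α`-approximate welfare at some signal profile. -/
theorem shared_quality_welfare_lower_bound
    (ℓ k : ℕ) (hℓ : 1 ≤ ℓ) (hk : 2 ≤ k)
    (α : ℝ) (hα0 : 0 < α) (hα : α < (ℓ : ℝ) * ((k : ℝ) - 1) + 1) :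
    ∃ (n : ℕ) (hn : 1 ≤ n) (g : Fin n → Fin ℓ)
      (f : Fin n → (Fin ℓ → ℕ) → ℝ) (v : Fin n → (Fin n → Fin k) → ℝ),
      (∀ i q, 0 ≤ f i q) ∧
      (∀ i, Monotone (f i)) ∧
      (∀ i s, v i s =
        f i (fun j => ∑ i' ∈ Finset.univ.filter (fun i' => g i' = j), (s i' : ℕ))) ∧
      ∀ x : (Fin n → Fin k) → Fin n → ℝ,
        (∀ s i, 0 ≤ x s i) →
        (∀ s, ∑ i, x s i ≤ 1) →
        (∀ (i : Fin n) (s : Fin n → Fin k),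
          Monotone fun t => x (Function.update s i t) i) →
        ∃ s : Fin n → Fin k,
          ∑ i, x s i * v i s <
            (1 / α) * Finset.univ.sup' ⟨⟨0, hn⟩, Finset.mem_univ _⟩ (fun i => v i s) := by
  have hαn : α < ((SQLB.nn ℓ k : ℕ) : ℝ) := by
    have h1 : ((SQLB.nn ℓ k : ℕ) : ℝ) = (ℓ:ℝ)*((k:ℝ)-1)+1 := by
      unfold SQLB.nn
      push_cast [Nat.cast_sub (by omega : 1 ≤ k)]
      ring
    rw [h1]; exact hα
  set B : ℝ := (SQLB.nn ℓ k : ℝ)^2 * α / ((SQLB.nn ℓ k : ℝ) - α) + 1 with hBdef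
  have hNα : 0 < (SQLB.nn ℓ k : ℝ) - α := by linarith
  have hN0 : (0:ℝ) < (SQLB.nn ℓ k : ℝ) := by linarith
  have hB1 : 1 < B := by
    have hpos : 0 < (SQLB.nn ℓ k : ℝ)^2 * α / ((SQLB.nn ℓ k : ℝ) - α) :=
      div_pos (mul_pos (pow_pos hN0 2) hα0) hNα
    rw [hBdef]; linarith
  have hB0 : (0:ℝ) ≤ B := by linarith
  have hBgt : (SQLB.nn ℓ k : ℝ)^2 * α < B * ((SQLB.nn ℓ k : ℝ) - α) := by
    rw [hBdef, add_mul, one_mul, div_mul_cancel₀ _ (ne_of_gt hNα)]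
    linarith
  refine ⟨SQLB.nn ℓ k, Nat.le_add_left 1 _, SQLB.grp ℓ k hℓ hk,
    SQLB.FF ℓ k hℓ hk B, SQLB.VV ℓ k hℓ hk B, ?_, ?_, ?_, ?_⟩
  · intro i q
    unfold SQLB.FF
    split_ifs
    · exact pow_nonneg hB0 _
    · exact le_refl 0
  · intro i q q' hqq
    unfold SQLB.FF
    by_cases hq : ∀ c, SQLB.Qv ℓ k hℓ hk (SQLB.Sp ℓ k hk i) c ≤ q c
    · rw [if_pos hq, if_pos fun c => le_trans (hq c) (hqq c)]
    · rw [if_neg hq]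
      split_ifs
      · exact pow_nonneg hB0 _
      · exact le_refl 0
  · intro i s; rfl
  · exact SQLB.main ℓ k hℓ hk α hα0 B hB1 hBgt _
end

section
/- For every n ≥ 1, every k ≥ 2, and every symmetric shared-quality instance (valuations v_i(s) = f_i(∑_j s_j) with each f_i : {0,...,n(k−1)} → ℝ nonnegative and weakly increasing), there exists a mechanism (x, p) that is ex-post incentive compatible and ex-post individually rational and 5(k−1)-approximates welfare, i.e., for every signal profile s, ∑_i x_i(s)·v_i(s) ≥ (1/(5(k−1)))·max_i v_i(s). -/
/-!
Fix, for every possible total signal `m`, a bidder `w m` whose value `f (w m) m` is largest.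
Bidder `i`, seeing the others' signals sum to `b`, receives probability `1/k` for each total
`m ∈ [b, b + sᵢ]` with `w m = i`. This share is monotone in `sᵢ`, so Myerson's discrete payment
rule makes truthful reporting ex-post IC and IR. All these intervals lie in the window of the
`k` totals ending at the true total `T`, and each total is credited only to its own winner, so
the shares sum to at most `1`; the bidder `w T` is credited `T` itself, whence a
`k`-approximation of the welfare, and `k ≤ 5 (k - 1)`.
-/

open Finset Function

section Myerson

/-- Each increment `a (c + 1) - a c` of the allocation is charged at the value `F (c + 1)` of the
type at which it is gained. -/
def myersonPayment (a F : ℕ → ℝ) (r : ℕ) : ℝ :=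
  ∑ c ∈ range r, (a (c + 1) - a c) * F (c + 1)

variable {a F : ℕ → ℝ}

lemma myersonPayment_nonneg (ha : Monotone a) (hF : ∀ c, 0 ≤ F c) (r : ℕ) :
    0 ≤ myersonPayment a F r :=
  sum_nonneg fun c _ => mul_nonneg (sub_nonneg.2 (ha c.le_succ)) (hF _)

theorem myersonPayment_ic (ha : Monotone a) (hF : Monotone F) (m r : ℕ) :
    a r * F m - myersonPayment a F r ≤ a m * F m - myersonPayment a F m := by
  set u : ℕ → ℝ := fun c => a c * F m - myersonPayment a F c
  have hstep c : u (c + 1) - u c = (a (c + 1) - a c) * (F m - F (c + 1)) := by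
    simp only [u, myersonPayment, sum_range_succ]
    ring
  have hgap c : 0 ≤ a (c + 1) - a c := sub_nonneg.2 (ha c.le_succ)
  rcases le_total r m with h | h
  · suffices 0 ≤ u m - u r from sub_nonneg.1 this
    rw [← sum_Ico_sub u h]
    refine sum_nonneg fun c hc => ?_
    rw [hstep]
    exact mul_nonneg (hgap c) (sub_nonneg.2 (hF (mem_Ico.1 hc).2))
  · suffices u r - u m ≤ 0 from sub_nonpos.1 this
    rw [← sum_Ico_sub u h]
    refine sum_nonpos fun c hc => ?_
    rw [hstep]
    exact mul_nonpos_of_nonneg_of_nonpos (hgap c)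
      (sub_nonpos.2 (hF ((mem_Ico.1 hc).1.trans c.le_succ)))

lemma myersonPayment_ir (ha : Monotone a) (hF : Monotone F) (ha0 : 0 ≤ a 0) {m : ℕ}
    (hFm : 0 ≤ F m) : 0 ≤ a m * F m - myersonPayment a F m := by
  have h := myersonPayment_ic ha hF m 0
  rw [myersonPayment, range_zero, sum_empty, sub_zero] at h
  exact (mul_nonneg ha0 hFm).trans h

end Myerson

section WinShare

variable {ι : Type*} [DecidableEq ι]

noncomputable def winShare (w : ℕ → ι) (k b c : ℕ) (i : ι) : ℝ :=
  #{m ∈ Icc b (b + c) | w m = i} / k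

variable (w : ℕ → ι) (k : ℕ)

lemma winShare_nonneg (b c : ℕ) (i : ι) : 0 ≤ winShare w k b c i := by
  unfold winShare
  positivity

lemma winShare_mono (b : ℕ) (i : ι) : Monotone fun c => winShare w k b c i := by
  intro c c' hc
  refine div_le_div_of_nonneg_right ?_ k.cast_nonneg
  exact_mod_cast card_le_card (filter_subset_filter _ (Icc_subset_Icc_right (by omega)))

lemma one_div_le_winShare {b c m : ℕ} (hm : m ∈ Icc b (b + c)) :
    1 / (k : ℝ) ≤ winShare w k b c (w m) := by
  refine div_le_div_of_nonneg_right ?_ k.cast_nonneg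
  exact Nat.one_le_cast.2 (card_pos.2 ⟨m, mem_filter.2 ⟨hm, rfl⟩⟩)

lemma sum_card_filter_eq_le_card [Fintype ι] (S : ι → Finset ℕ) (T : Finset ℕ)
    (hS : ∀ i, S i ⊆ T) : ∑ i, #{m ∈ S i | w m = i} ≤ #T :=
  calc ∑ i, #{m ∈ S i | w m = i}
      ≤ ∑ i, #{m ∈ T | w m = i} :=
        sum_le_sum fun i _ => card_le_card (filter_subset_filter _ (hS i))
    _ = #T := (card_eq_sum_card_fiberwise fun m _ => mem_univ (w m)).symm

end WinShare

section Mechanism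

variable {ι : Type*} [Fintype ι] [DecidableEq ι] {k : ℕ}

def othersSum (s : ι → Fin k) (i : ι) : ℕ :=
  ∑ j ∈ univ.erase i, (s j : ℕ)

lemma othersSum_add_self (s : ι → Fin k) (i : ι) :
    othersSum s i + s i = ∑ j, (s j : ℕ) :=
  sum_erase_add _ _ (mem_univ i)

lemma othersSum_update (s : ι → Fin k) (i : ι) (t : Fin k) :
    othersSum (update s i t) i = othersSum s i :=
  sum_congr rfl fun _ hj => by rw [update_of_ne (ne_of_mem_erase hj)]

noncomputable def alloc (w : ℕ → ι) (s : ι → Fin k) (i : ι) : ℝ :=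
  winShare w k (othersSum s i) (s i) i

noncomputable def payment (f : ι → ℕ → ℝ) (w : ℕ → ι) (s : ι → Fin k) (i : ι) : ℝ :=
  myersonPayment (fun c => winShare w k (othersSum s i) c i)
    (fun c => f i (othersSum s i + c)) (s i)

variable (f : ι → ℕ → ℝ) (w : ℕ → ι)

lemma sum_alloc_le_one (s : ι → Fin k) : ∑ i, alloc w s i ≤ 1 := by
  set T := ∑ j, (s j : ℕ)
  have hcard : ∑ i, #{m ∈ Icc (othersSum s i) (othersSum s i + s i) | w m = i} ≤ k := by
    refine (sum_card_filter_eq_le_card w _ (Icc (T + 1 - k) T) fun i => ?_).trans ?_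
    · have := othersSum_add_self s i
      have := (s i).isLt
      exact Icc_subset_Icc (by omega) (by omega)
    · rw [Nat.card_Icc]
      omega
  simp only [alloc, winShare, ← sum_div]
  exact div_le_one_of_le₀ (by exact_mod_cast hcard) k.cast_nonneg

lemma payment_nonneg {i : ι} (hf : ∀ m, 0 ≤ f i m) (s : ι → Fin k) : 0 ≤ payment f w s i :=
  myersonPayment_nonneg (winShare_mono w k _ i) (fun _ => hf _) _

lemma alloc_ic {i : ι} (hf : Monotone (f i)) (s : ι → Fin k) (t : Fin k) :
    alloc w (update s i t) i * f i (∑ j, (s j : ℕ)) - payment f w (update s i t) i ≤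
      alloc w s i * f i (∑ j, (s j : ℕ)) - payment f w s i := by
  simp only [alloc, payment, othersSum_update, update_self, ← othersSum_add_self s i]
  exact myersonPayment_ic (winShare_mono w k _ i) (fun _ _ h => hf (by omega)) _ _

lemma alloc_ir {i : ι} (hf_nonneg : ∀ m, 0 ≤ f i m) (hf : Monotone (f i)) (s : ι → Fin k) :
    0 ≤ alloc w s i * f i (∑ j, (s j : ℕ)) - payment f w s i := by
  rw [← othersSum_add_self s i]
  exact myersonPayment_ir (winShare_mono w k _ i) (fun _ _ h => hf (by omega))
    (winShare_nonneg w k _ _ i) (hf_nonneg _)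

lemma one_div_mul_le_sum_alloc_mul (hf_nonneg : ∀ i m, 0 ≤ f i m)
    (hw : ∀ m j, f j m ≤ f (w m) m) (s : ι → Fin k) (j : ι) :
    1 / (k : ℝ) * f j (∑ i, (s i : ℕ)) ≤ ∑ i, alloc w s i * f i (∑ i, (s i : ℕ)) := by
  set T := ∑ i, (s i : ℕ)
  have hT : T ∈ Icc (othersSum s (w T)) (othersSum s (w T) + s (w T)) := by
    have := othersSum_add_self s (w T)
    exact mem_Icc.2 ⟨by omega, by omega⟩
  calc 1 / (k : ℝ) * f j T
      ≤ alloc w s (w T) * f (w T) T :=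
        mul_le_mul (one_div_le_winShare w k hT) (hw T j) (hf_nonneg _ _)
          (winShare_nonneg w k _ _ _)
    _ ≤ ∑ i, alloc w s i * f i T :=
        single_le_sum (f := fun i => alloc w s i * f i T)
          (fun i _ => mul_nonneg (winShare_nonneg w k _ _ i) (hf_nonneg _ _)) (mem_univ _)

end Mechanism

/-- For every `n ≥ 1`, `k ≥ 2`, and every symmetric shared-quality
instance (valuations `v i s = f i (∑ j, s j)` with each `f i` nonnegative and
weakly increasing), there exists an ex-post IC and ex-post IR mechanism `(x, p)`
that 5(k-1)-approximates welfare. -/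
theorem symmetric_shared_quality_welfare_approx
    (n k : ℕ) (hn : 1 ≤ n) (hk : 2 ≤ k)
    (f : Fin n → ℕ → ℝ)
    (hf_nonneg : ∀ i m, 0 ≤ f i m)
    (hf_mono : ∀ i, Monotone (f i))
    (v : Fin n → (Fin n → Fin k) → ℝ)
    (hv : ∀ i s, v i s = f i (∑ j, (s j : ℕ))) :
    ∃ x p : (Fin n → Fin k) → Fin n → ℝ,
      (∀ s i, 0 ≤ x s i) ∧ (∀ s, ∑ i, x s i ≤ 1) ∧
      (∀ s i, 0 ≤ p s i) ∧
      (∀ (i : Fin n) (s : Fin n → Fin k) (t : Fin k),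
        x s i * v i s - p s i ≥
          x (Function.update s i t) i * v i s - p (Function.update s i t) i) ∧
      (∀ (i : Fin n) (s : Fin n → Fin k), x s i * v i s - p s i ≥ 0) ∧
      (∀ s : Fin n → Fin k,
        ∑ i, x s i * v i s ≥
          (1 / (5 * ((k : ℝ) - 1))) *
            Finset.univ.sup' ⟨⟨0, hn⟩, Finset.mem_univ _⟩ (fun i => v i s)) := by
  have : Nonempty (Fin n) := ⟨⟨0, hn⟩⟩
  choose w hw using fun m => Finite.exists_max fun i => f i m
  obtain rfl : v = fun i s => f i (∑ j, (s j : ℕ)) := funext₂ hv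
  refine ⟨alloc w, payment f w, fun s i => winShare_nonneg w k _ _ i, sum_alloc_le_one w,
    fun s i => payment_nonneg f w (hf_nonneg i) s, fun i s t => alloc_ic f w (hf_mono i) s t,
    fun i s => alloc_ir f w (hf_nonneg i) (hf_mono i) s, fun s => ?_⟩
  obtain ⟨j, -, hj⟩ := exists_mem_eq_sup' ⟨⟨0, hn⟩, mem_univ _⟩ fun i => f i (∑ j, (s j : ℕ))
  have hk' : (2 : ℝ) ≤ k := by exact_mod_cast hk
  have hratio : 1 / (5 * ((k : ℝ) - 1)) ≤ 1 / k :=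
    one_div_le_one_div_of_le (by positivity) (by linarith)
  rw [hj, ge_iff_le]
  exact (mul_le_mul_of_nonneg_right hratio (hf_nonneg _ _)).trans
    (one_div_mul_le_sum_alloc_mul f w hf_nonneg hw s j)
end

section
/- For every n ≥ 1, every k ≥ 2, and every symmetric shared-quality instance (valuations v_i(s) = f_i(∑_j s_j) with each f_i : {0,...,n(k−1)} → ℝ nonnegative and weakly increasing), there exists a mechanism (x, p) that is ex-post incentive compatible and ex-post individually rational and whose revenue 10(k−1)-approximates the optimal welfare, i.e., for every signal profile s, ∑_i p_i(s) ≥ (1/(10(k−1)))·max_i v_i(s). -/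
private lemma sum_range_compare (g : ℕ → ℝ) (a b : ℕ)
    (h1 : ∀ r, r < a → 0 ≤ g r) (h2 : ∀ r, a ≤ r → g r ≤ 0) :
    ∑ r ∈ Finset.range b, g r ≤ ∑ r ∈ Finset.range a, g r := by
  rcases le_or_gt b a with h | h
  · apply Finset.sum_le_sum_of_subset_of_nonneg (Finset.range_subset_range.mpr h)
    intro r hr _
    exact h1 r (Finset.mem_range.mp hr)
  · rw [Finset.range_eq_Ico, ← Finset.sum_Ico_consecutive g (Nat.zero_le a) h.le]
    have : ∑ r ∈ Finset.Ico a b, g r ≤ 0 := by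
      apply Finset.sum_nonpos
      intro r hr
      exact h2 r (Finset.mem_Ico.mp hr).1
    rw [← Finset.range_eq_Ico]
    linarith

/-- For every `n ≥ 1`, `k ≥ 2`, and every symmetric shared-quality
instance (valuations `v i s = f i (∑ j, s j)` with each `f i` nonnegative and
weakly increasing), there exists an ex-post IC and ex-post IR mechanism `(x, p)`
whose revenue 10(k-1)-approximates the optimal welfare. -/
theorem symmetric_shared_quality_revenue_approx
    (n k : ℕ) (hn : 1 ≤ n) (hk : 2 ≤ k)
    (f : Fin n → ℕ → ℝ)
    (hf_nonneg : ∀ i m, 0 ≤ f i m)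
    (hf_mono : ∀ i, Monotone (f i))
    (v : Fin n → (Fin n → Fin k) → ℝ)
    (hv : ∀ i s, v i s = f i (∑ j, (s j : ℕ))) :
    ∃ x p : (Fin n → Fin k) → Fin n → ℝ,
      (∀ s i, 0 ≤ x s i) ∧ (∀ s, ∑ i, x s i ≤ 1) ∧
      (∀ s i, 0 ≤ p s i) ∧
      (∀ (i : Fin n) (s : Fin n → Fin k) (t : Fin k),
        x s i * v i s - p s i ≥
          x (Function.update s i t) i * v i s - p (Function.update s i t) i) ∧
      (∀ (i : Fin n) (s : Fin n → Fin k), x s i * v i s - p s i ≥ 0) ∧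
      (∀ s : Fin n → Fin k,
        ∑ i, p s i ≥
          (1 / (10 * ((k : ℝ) - 1))) *
            Finset.univ.sup' ⟨⟨0, hn⟩, Finset.mem_univ _⟩ (fun i => v i s)) := by
  classical
  have hk0 : (0:ℝ) < k := by
    have : (0:ℕ) < k := by omega
    exact_mod_cast this
  -- winner function: argmax of f · μ
  have hwin : ∀ μ : ℕ, ∃ i : Fin n, ∀ j : Fin n, f j μ ≤ f i μ := by
    intro μ
    obtain ⟨i, _, hi⟩ := Finset.exists_max_image Finset.univ (fun j => f j μ)
      ⟨⟨0, hn⟩, Finset.mem_univ _⟩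
    exact ⟨i, fun j => hi j (Finset.mem_univ j)⟩
  set win : ℕ → Fin n := fun μ => (hwin μ).choose with hwin_def
  have hwin_spec : ∀ μ j, f j μ ≤ f (win μ) μ := fun μ => (hwin μ).choose_spec
  -- sum of others' signals
  set S : (Fin n → Fin k) → Fin n → ℕ :=
    fun s i => ∑ j ∈ Finset.univ.erase i, (s j : ℕ) with hSdef
  have hS_update : ∀ (s : Fin n → Fin k) (i : Fin n) (t : Fin k),
      S (Function.update s i t) i = S s i := by
    intro s i t
    apply Finset.sum_congr rfl
    intro j hj
    rw [Function.update_of_ne (Finset.ne_of_mem_erase hj)]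
  have hS_total : ∀ (s : Fin n → Fin k) (i : Fin n),
      S s i + (s i : ℕ) = ∑ j, (s j : ℕ) := by
    intro s i
    exact Finset.sum_erase_add _ _ (Finset.mem_univ i)
  -- indicator that bidder i is the winner at hypothetical total S s i + r
  set χ : (Fin n → Fin k) → Fin n → ℕ → ℝ :=
    fun s i r => if win (S s i + r) = i then (1:ℝ) else 0 with hχdef
  have hχ_nonneg : ∀ s i r, 0 ≤ χ s i r := by
    intro s i r
    simp only [hχdef]
    split <;> norm_num
  have hχ_le_one : ∀ s i r, χ s i r ≤ 1 := by
    intro s i r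
    simp only [hχdef]
    split <;> norm_num
  refine ⟨fun s i => (1/(k:ℝ)) * ∑ r ∈ Finset.range ((s i : ℕ) + 1), χ s i r,
          fun s i => (1/(k:ℝ)) * ∑ r ∈ Finset.range ((s i : ℕ) + 1),
            χ s i r * f i (S s i + r),
          ?_, ?_, ?_, ?_, ?_, ?_⟩
  · -- x nonneg
    intro s i
    have : (0:ℝ) ≤ ∑ r ∈ Finset.range ((s i : ℕ) + 1), χ s i r :=
      Finset.sum_nonneg fun r _ => hχ_nonneg s i r
    positivity
  · -- feasibility
    intro s
    have key : ∀ i : Fin n, ∑ r ∈ Finset.range ((s i : ℕ) + 1), χ s i r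
        ≤ ∑ d ∈ Finset.range k,
            (if win ((∑ j, (s j : ℕ)) - d) = i then (1:ℝ) else 0) := by
      intro i
      have hrefl := Finset.sum_range_reflect (fun r => χ s i r) ((s i : ℕ) + 1)
      rw [← hrefl]
      have heq : ∀ d ∈ Finset.range ((s i : ℕ) + 1),
          χ s i ((s i : ℕ) + 1 - 1 - d)
            = (if win ((∑ j, (s j : ℕ)) - d) = i then (1:ℝ) else 0) := by
        intro d hd
        have hd' : d ≤ (s i : ℕ) := by
          have := Finset.mem_range.mp hd; omega
        have harg : S s i + ((s i : ℕ) + 1 - 1 - d) = (∑ j, (s j : ℕ)) - d := by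
          have := hS_total s i; omega
        simp only [hχdef]
        rw [harg]
      rw [Finset.sum_congr rfl heq]
      apply Finset.sum_le_sum_of_subset_of_nonneg
      · apply Finset.range_subset_range.mpr
        have := (s i).isLt; omega
      · intro r _ _; split <;> norm_num
    have hsum : ∑ i, ∑ r ∈ Finset.range ((s i : ℕ) + 1), χ s i r ≤ (k:ℝ) := by
      calc ∑ i, ∑ r ∈ Finset.range ((s i : ℕ) + 1), χ s i r
          ≤ ∑ i, ∑ d ∈ Finset.range k,
              (if win ((∑ j, (s j : ℕ)) - d) = i then (1:ℝ) else 0) :=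
            Finset.sum_le_sum fun i _ => key i
        _ = ∑ d ∈ Finset.range k, ∑ i : Fin n,
              (if win ((∑ j, (s j : ℕ)) - d) = i then (1:ℝ) else 0) :=
            Finset.sum_comm
        _ = ∑ d ∈ Finset.range k, 1 := by
            apply Finset.sum_congr rfl
            intro d _
            rw [Finset.sum_ite_eq]
            simp
        _ = (k:ℝ) := by simp
    calc ∑ i, (1/(k:ℝ)) * ∑ r ∈ Finset.range ((s i : ℕ) + 1), χ s i r
        = (1/(k:ℝ)) * ∑ i, ∑ r ∈ Finset.range ((s i : ℕ) + 1), χ s i r := by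
          rw [Finset.mul_sum]
      _ ≤ (1/(k:ℝ)) * (k:ℝ) := by
          apply mul_le_mul_of_nonneg_left hsum
          positivity
      _ = 1 := by field_simp
  · -- p nonneg
    intro s i
    have : (0:ℝ) ≤ ∑ r ∈ Finset.range ((s i : ℕ) + 1), χ s i r * f i (S s i + r) :=
      Finset.sum_nonneg fun r _ => mul_nonneg (hχ_nonneg s i r) (hf_nonneg i _)
    positivity
  · -- ex-post IC
    intro i s t
    have hvv : v i s = f i (S s i + (s i : ℕ)) := by rw [hv, hS_total]
    have hupd_i : (Function.update s i t) i = t := Function.update_self i t s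
    have hSu := hS_update s i t
    have hχu : ∀ r, χ (Function.update s i t) i r = χ s i r := by
      intro r; simp only [hχdef]; rw [hSu]
    have expand : ∀ u : ℕ,
        ((1/(k:ℝ)) * ∑ r ∈ Finset.range (u + 1), χ s i r) * f i (S s i + (s i : ℕ))
          - (1/(k:ℝ)) * ∑ r ∈ Finset.range (u + 1), χ s i r * f i (S s i + r)
        = (1/(k:ℝ)) * ∑ r ∈ Finset.range (u + 1),
            χ s i r * (f i (S s i + (s i : ℕ)) - f i (S s i + r)) := by
      intro u
      simp_rw [mul_sub]
      rw [Finset.sum_sub_distrib, ← Finset.sum_mul]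
      ring
    dsimp only
    rw [hvv]
    simp only [Function.update_self, hχu, hSu]
    rw [expand (s i : ℕ), expand (t : ℕ)]
    apply mul_le_mul_of_nonneg_left _ (by positivity : (0:ℝ) ≤ 1/(k:ℝ))
    apply sum_range_compare
    · intro r hr
      apply mul_nonneg (hχ_nonneg s i r)
      have : f i (S s i + r) ≤ f i (S s i + (s i : ℕ)) := by
        apply hf_mono; omega
      linarith
    · intro r hr
      apply mul_nonpos_of_nonneg_of_nonpos (hχ_nonneg s i r)
      have : f i (S s i + (s i : ℕ)) ≤ f i (S s i + r) := by
        apply hf_mono; omega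
      linarith
  · -- ex-post IR
    intro i s
    have hvv : v i s = f i (S s i + (s i : ℕ)) := by rw [hv, hS_total]
    rw [hvv]
    have expand :
        ((1/(k:ℝ)) * ∑ r ∈ Finset.range ((s i : ℕ) + 1), χ s i r) * f i (S s i + (s i : ℕ))
          - (1/(k:ℝ)) * ∑ r ∈ Finset.range ((s i : ℕ) + 1), χ s i r * f i (S s i + r)
        = (1/(k:ℝ)) * ∑ r ∈ Finset.range ((s i : ℕ) + 1),
            χ s i r * (f i (S s i + (s i : ℕ)) - f i (S s i + r)) := by
      simp_rw [mul_sub]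
      rw [Finset.sum_sub_distrib, ← Finset.sum_mul]
      ring
    rw [expand]
    apply mul_nonneg (by positivity)
    apply Finset.sum_nonneg
    intro r hr
    apply mul_nonneg (hχ_nonneg s i r)
    have : f i (S s i + r) ≤ f i (S s i + (s i : ℕ)) := by
      apply hf_mono
      have := Finset.mem_range.mp hr; omega
    linarith
  · -- revenue approximation
    intro s
    set m : ℕ := ∑ j, (s j : ℕ) with hm
    set i₀ : Fin n := win m with hi₀
    have hp_nonneg : ∀ i : Fin n,
        (0:ℝ) ≤ (1/(k:ℝ)) * ∑ r ∈ Finset.range ((s i : ℕ) + 1), χ s i r * f i (S s i + r) := by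
      intro i
      have : (0:ℝ) ≤ ∑ r ∈ Finset.range ((s i : ℕ) + 1), χ s i r * f i (S s i + r) :=
        Finset.sum_nonneg fun r _ => mul_nonneg (hχ_nonneg s i r) (hf_nonneg i _)
      positivity
    have hterm : (1/(k:ℝ)) * f i₀ m
        ≤ (1/(k:ℝ)) * ∑ r ∈ Finset.range ((s i₀ : ℕ) + 1), χ s i₀ r * f i₀ (S s i₀ + r) := by
      apply mul_le_mul_of_nonneg_left _ (by positivity : (0:ℝ) ≤ 1/(k:ℝ))
      have hmem : (s i₀ : ℕ) ∈ Finset.range ((s i₀ : ℕ) + 1) := by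
        simp
      have hval : χ s i₀ ((s i₀ : ℕ)) * f i₀ (S s i₀ + (s i₀ : ℕ)) = f i₀ m := by
        have harg : S s i₀ + (s i₀ : ℕ) = m := hS_total s i₀
        simp only [hχdef]
        rw [harg, ← hi₀]
        simp
      calc f i₀ m = χ s i₀ ((s i₀ : ℕ)) * f i₀ (S s i₀ + (s i₀ : ℕ)) := hval.symm
        _ ≤ ∑ r ∈ Finset.range ((s i₀ : ℕ) + 1), χ s i₀ r * f i₀ (S s i₀ + r) :=
            Finset.single_le_sum (fun r _ => mul_nonneg (hχ_nonneg s i₀ r) (hf_nonneg i₀ _)) hmem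
    have hsup : Finset.univ.sup' ⟨⟨0, hn⟩, Finset.mem_univ _⟩ (fun i => v i s) ≤ f i₀ m := by
      apply Finset.sup'_le
      intro j _
      rw [hv]
      exact hwin_spec m j
    have hsup_nonneg : (0:ℝ) ≤ Finset.univ.sup' ⟨⟨0, hn⟩, Finset.mem_univ _⟩ (fun i => v i s) := by
      have := Finset.le_sup' (fun i => v i s) (Finset.mem_univ (⟨0, hn⟩ : Fin n))
      have h0 : (0:ℝ) ≤ v ⟨0, hn⟩ s := by rw [hv]; exact hf_nonneg _ _
      linarith
    have hkk : 1 / (10 * ((k:ℝ) - 1)) ≤ 1/(k:ℝ) := by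
      have hk2 : (2:ℝ) ≤ k := by exact_mod_cast hk
      apply one_div_le_one_div_of_le hk0
      nlinarith
    calc (1 / (10 * ((k:ℝ) - 1))) *
          Finset.univ.sup' ⟨⟨0, hn⟩, Finset.mem_univ _⟩ (fun i => v i s)
        ≤ (1/(k:ℝ)) * Finset.univ.sup' ⟨⟨0, hn⟩, Finset.mem_univ _⟩ (fun i => v i s) :=
          mul_le_mul_of_nonneg_right hkk hsup_nonneg
      _ ≤ (1/(k:ℝ)) * f i₀ m := by
          apply mul_le_mul_of_nonneg_left hsup (by positivity)
      _ ≤ (1/(k:ℝ)) * ∑ r ∈ Finset.range ((s i₀ : ℕ) + 1), χ s i₀ r * f i₀ (S s i₀ + r) := hterm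
      _ ≤ ∑ i, (1/(k:ℝ)) * ∑ r ∈ Finset.range ((s i : ℕ) + 1), χ s i r * f i (S s i + r) :=
          Finset.single_le_sum (fun i _ => hp_nonneg i) (Finset.mem_univ i₀)
end

section
/- For every n ≥ 1, every k ≥ 2, every ℓ ≥ 1, every assignment g : Fin n → Fin ℓ of bidders to expertise groups, and every shared-quality instance (valuations v_i(s) = f_i(q(s)) where q_j(s) = ∑_{i' : g(i')=j} s_{i'} and each f_i : ℕ^ℓ → ℝ is nonnegative and weakly increasing in every coordinate), there exists a mechanism (x, p) that is ex-post incentive compatible and ex-post individually rational and 5(k−1)ℓ-approximates welfare, i.e., for every signal profile s, ∑_i x_i(s)·v_i(s) ≥ (1/(5(k−1)ℓ))·max_i v_i(s). -/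
/-!
Zero payments, and an allocation in which bidder `i`'s own report is ignored: for each of
the `k` possible guesses `t` of `s i`, form the quality vector with `s i` replaced by `t`
and let the highest-valued bidder at that vector win. Bidder `i` receives probability
`#{winning guesses} / (ℓ (2k - 1))`, which does not depend on `s i`, so IC and IR are immediate.
The guessed vector is `q(s) + (t - s i) e_{g i}`, and the winner at a vector is unique, so
the winning pairs `(i, t)` inject into `(g i, t - s i) ∈ Fin ℓ × [1 - k, k - 1]`: the
probabilities sum to at most one. The truthful guess `t = s i` makes the welfare maximiser
at `q(s)` win, so it is served with probability at least `1 / (ℓ (2k - 1)) ≥ 1 / (5 (k - 1) ℓ)`.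
-/

open Finset Function

namespace SharedQuality

variable {ι γ : Type*} [Fintype ι] [DecidableEq ι] [DecidableEq γ] {k : ℕ}

def quality (g : ι → γ) (s : ι → Fin k) (j : γ) : ℕ :=
  ∑ i ∈ univ.filter (fun i => g i = j), (s i : ℕ)

lemma quality_update (g : ι → γ) (s : ι → Fin k) (i : ι) (t : Fin k) (j : γ) :
    (quality g (update s i t) j : ℤ) = quality g s j + if g i = j then (t : ℤ) - s i else 0 := by
  simp only [quality, Nat.cast_sum, sum_filter]
  rw [← add_sum_erase _ _ (mem_univ i), ← add_sum_erase _ _ (mem_univ i),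
    sum_congr rfl fun i' hi' => by rw [update_of_ne (ne_of_mem_erase hi')]]
  split_ifs with h <;> simp [h]; ring

lemma quality_update_eq_of_offset_eq (g : ι → γ) (s : ι → Fin k) {i i' : ι} {t t' : Fin k}
    (hg : g i = g i') (ht : (t : ℤ) - s i = t' - s i') :
    quality g (update s i t) = quality g (update s i' t') := by
  funext j
  have h := quality_update g s i t j
  rw [hg, ht, ← quality_update] at h
  exact_mod_cast h

variable [Fintype γ]

lemma card_winningGuesses_le (g : ι → γ) (A : (γ → ℕ) → ι) (s : ι → Fin k) :
    #{p : ι × Fin k | A (quality g (update s p.1 p.2)) = p.1} ≤ Fintype.card γ * (2 * k - 1) := by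
  calc _ ≤ #(univ ×ˢ Icc (1 - k : ℤ) (k - 1)) :=
        card_le_card_of_injOn (fun p => (g p.1, (p.2 : ℤ) - s p.1)) ?_ ?_
    _ = _ := by rw [card_product, card_univ, Int.card_Icc]; congr; omega
  · rintro ⟨i, t⟩ -
    have := t.isLt
    have := (s i).isLt
    simp only [coe_product, coe_univ, Set.mem_prod, Set.mem_univ, true_and, coe_Icc,
      Set.mem_Icc]
    omega
  · rintro ⟨i, t⟩ hit ⟨i', t'⟩ hit' heq
    simp only [coe_filter, mem_univ, true_and, Set.mem_ofPred_eq] at hit hit'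
    obtain ⟨hg, ht⟩ := Prod.mk.inj heq
    obtain rfl : i = i' := by
      rw [← hit, ← hit', quality_update_eq_of_offset_eq g s hg ht]
    simp only [sub_left_inj] at ht
    exact Prod.ext rfl (Fin.ext (by exact_mod_cast ht))

noncomputable def guessAllocation (g : ι → γ) (A : (γ → ℕ) → ι) (s : ι → Fin k) (i : ι) : ℝ :=
  #{t | A (quality g (update s i t)) = i} / (Fintype.card γ * (2 * k - 1) : ℕ)

lemma guessAllocation_nonneg (g : ι → γ) (A : (γ → ℕ) → ι) (s : ι → Fin k) (i : ι) :
    0 ≤ guessAllocation g A s i := by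
  unfold guessAllocation
  positivity

lemma sum_guessAllocation_le_one (g : ι → γ) (A : (γ → ℕ) → ι) (s : ι → Fin k) :
    ∑ i, guessAllocation g A s i ≤ 1 := by
  have hcard : ∑ i, #{t | A (quality g (update s i t)) = i} =
      #{p : ι × Fin k | A (quality g (update s p.1 p.2)) = p.1} := by
    simp only [card_filter, ← univ_product_univ, sum_product]
  simp only [guessAllocation]
  rw [← sum_div, ← Nat.cast_sum, hcard]
  exact div_le_one_of_le₀ (by exact_mod_cast card_winningGuesses_le g A s) (Nat.cast_nonneg _)

lemma guessAllocation_update_self (g : ι → γ) (A : (γ → ℕ) → ι) (s : ι → Fin k) (i : ι)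
    (t : Fin k) : guessAllocation g A (update s i t) i = guessAllocation g A s i := by
  simp only [guessAllocation, update_idem]

lemma one_div_le_guessAllocation_winner (g : ι → γ) (A : (γ → ℕ) → ι) (s : ι → Fin k) :
    1 / (Fintype.card γ * (2 * k - 1) : ℕ) ≤ guessAllocation g A s (A (quality g s)) := by
  refine div_le_div_of_nonneg_right ?_ (Nat.cast_nonneg _)
  rw [Nat.one_le_cast, one_le_card]
  exact ⟨s (A (quality g s)), by simp⟩

lemma le_welfare_guessAllocation (g : ι → γ) (A : (γ → ℕ) → ι) (s : ι → Fin k)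
    (v : ι → ℝ) (hv : ∀ i, 0 ≤ v i) :
    1 / (Fintype.card γ * (2 * k - 1) : ℕ) * v (A (quality g s)) ≤
      ∑ i, guessAllocation g A s i * v i :=
  calc _ ≤ guessAllocation g A s (A (quality g s)) * v (A (quality g s)) :=
      mul_le_mul_of_nonneg_right (one_div_le_guessAllocation_winner g A s) (hv _)
    _ ≤ ∑ i, guessAllocation g A s i * v i :=
      single_le_sum (fun i _ => mul_nonneg (guessAllocation_nonneg g A s i) (hv i)) (mem_univ _)

end SharedQuality

open SharedQuality in
theorem shared_quality_groups_welfare_approx_general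
    (n k ℓ : ℕ) (hn : 1 ≤ n) (hk : 2 ≤ k)
    (g : Fin n → Fin ℓ)
    (f : Fin n → (Fin ℓ → ℕ) → ℝ)
    (hf_nonneg : ∀ i q, 0 ≤ f i q)
    (v : Fin n → (Fin n → Fin k) → ℝ)
    (hv : ∀ i s, v i s =
      f i (fun j => ∑ i' ∈ Finset.univ.filter (fun i' => g i' = j), (s i' : ℕ))) :
    ∃ x p : (Fin n → Fin k) → Fin n → ℝ,
      (∀ s i, 0 ≤ x s i) ∧ (∀ s, ∑ i, x s i ≤ 1) ∧
      (∀ s i, 0 ≤ p s i) ∧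
      (∀ (i : Fin n) (s : Fin n → Fin k) (t : Fin k),
        x s i * v i s - p s i ≥
          x (Function.update s i t) i * v i s - p (Function.update s i t) i) ∧
      (∀ (i : Fin n) (s : Fin n → Fin k), x s i * v i s - p s i ≥ 0) ∧
      (∀ s : Fin n → Fin k,
        ∑ i, x s i * v i s ≥
          (1 / (5 * ((k : ℝ) - 1) * (ℓ : ℝ))) *
            Finset.univ.sup' ⟨⟨0, hn⟩, Finset.mem_univ _⟩ (fun i => v i s)) := by
  have : Nonempty (Fin n) := ⟨⟨0, hn⟩⟩
  choose A hA using fun q => Finite.exists_max (f · q)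
  have hv_nonneg (i s) : 0 ≤ v i s := hv i s ▸ hf_nonneg _ _
  refine ⟨guessAllocation g A, 0, guessAllocation_nonneg g A, sum_guessAllocation_le_one g A,
    fun _ _ => le_rfl, fun i s t => by simp [guessAllocation_update_self],
    fun i s => by simpa using mul_nonneg (guessAllocation_nonneg g A s i) (hv_nonneg i s),
    fun s => ?_⟩
  have hmax : univ.sup' univ_nonempty (v · s) ≤ v (A (quality g s)) s :=
    sup'_le _ _ fun i _ => by rw [hv, hv]; exact hA _ i
  have hℓ : (0 : ℝ) < ℓ := by exact_mod_cast (g ⟨0, hn⟩).pos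
  have hk' : (2 : ℝ) ≤ k := by exact_mod_cast hk
  have hconst : 1 / (5 * ((k : ℝ) - 1) * ℓ) ≤ 1 / (Fintype.card (Fin ℓ) * (2 * k - 1) : ℕ) := by
    rw [Fintype.card_fin, Nat.cast_mul, Nat.cast_sub (by omega)]
    push_cast
    exact one_div_le_one_div_of_le (by nlinarith) (by nlinarith)
  calc 1 / (5 * ((k : ℝ) - 1) * ℓ) * univ.sup' univ_nonempty (v · s)
      ≤ 1 / (Fintype.card (Fin ℓ) * (2 * k - 1) : ℕ) * v (A (quality g s)) s :=
        mul_le_mul hconst hmax ((hv_nonneg _ s).trans (le_sup' (v · s) (mem_univ ⟨0, hn⟩)))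
          (by positivity)
    _ ≤ _ := le_welfare_guessAllocation g A s (v · s) (hv_nonneg · s)

/-- For every `n ≥ 1`, `k ≥ 2`, `ℓ ≥ 1`, group assignment `g`, and every
shared-quality instance (valuations `v i s = f i (q s)` with
`q s j = ∑_{i' : g i' = j} s i'` and each `f i` nonnegative and weakly increasing in
every coordinate), there exists an ex-post IC and ex-post IR mechanism `(x, p)` that
5(k-1)ℓ-approximates welfare. -/
theorem shared_quality_groups_welfare_approx
    (n k ℓ : ℕ) (hn : 1 ≤ n) (hk : 2 ≤ k) (hℓ : 1 ≤ ℓ)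
    (g : Fin n → Fin ℓ)
    (f : Fin n → (Fin ℓ → ℕ) → ℝ)
    (hf_nonneg : ∀ i q, 0 ≤ f i q)
    (hf_mono : ∀ i, Monotone (f i))
    (v : Fin n → (Fin n → Fin k) → ℝ)
    (hv : ∀ i s, v i s =
      f i (fun j => ∑ i' ∈ Finset.univ.filter (fun i' => g i' = j), (s i' : ℕ))) :
    ∃ x p : (Fin n → Fin k) → Fin n → ℝ,
      (∀ s i, 0 ≤ x s i) ∧ (∀ s, ∑ i, x s i ≤ 1) ∧
      (∀ s i, 0 ≤ p s i) ∧
      (∀ (i : Fin n) (s : Fin n → Fin k) (t : Fin k),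
        x s i * v i s - p s i ≥
          x (Function.update s i t) i * v i s - p (Function.update s i t) i) ∧
      (∀ (i : Fin n) (s : Fin n → Fin k), x s i * v i s - p s i ≥ 0) ∧
      (∀ s : Fin n → Fin k,
        ∑ i, x s i * v i s ≥
          (1 / (5 * ((k : ℝ) - 1) * (ℓ : ℝ))) *
            Finset.univ.sup' ⟨⟨0, hn⟩, Finset.mem_univ _⟩ (fun i => v i s)) :=
  shared_quality_groups_welfare_approx_general n k ℓ hn hk g f hf_nonneg v hv
end

section
/- For every n ≥ 1, every k ≥ 2, every ℓ ≥ 1, every assignment g : Fin n → Fin ℓ of bidders to expertise groups, and every shared-quality instance (valuations v_i(s) = f_i(q(s)) where q_j(s) = ∑_{i' : g(i')=j} s_{i'} and each f_i : ℕ^ℓ → ℝ is nonnegative and weakly increasing in every coordinate), there exists a mechanism (x, p) that is ex-post incentive compatible and ex-post individually rational and whose revenue 10(k−1)ℓ-approximates the optimal welfare, i.e., for every signal profile s, ∑_i p_i(s) ≥ (1/(10(k−1)ℓ))·max_i v_i(s). -/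
/-!
Fix a selector `A` that picks, for every group-quality vector, a bidder of maximal value there.
Bidder `i` receives probability `1/(kℓ)` for every report `θ ≤ sᵢ` at which `A` would pick `i`, and
pays its value at that report. As `θ ↦ vᵢ(θ, s₋ᵢ)` is monotone, each such unit contributes
`vᵢ(s) - vᵢ(θ, s₋ᵢ)`, nonnegative exactly for `θ ≤ sᵢ`, so truth-telling collects all the
nonnegative terms: the mechanism is IC and IR. The bidder picked at `s` itself pays at least
`1/(kℓ)` times the optimal welfare. Feasibility: lowering a signal by `d` shifts the quality
vector by `d` in one group's coordinate only, so every pair (group, `d`) is won by at most one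
bidder, and there are at most `kℓ` such pairs.
-/

open Finset Function

theorem sum_filter_le_le_of_sign {σ : Type*} [Fintype σ] [LinearOrder σ] {φ : σ → ℝ} {a : σ}
    (p : σ → Prop) [DecidablePred p] (hlo : ∀ θ ≤ a, 0 ≤ φ θ) (hhi : ∀ θ, a ≤ θ → φ θ ≤ 0) (t : σ) :
    ∑ θ ∈ {θ | θ ≤ t ∧ p θ}, φ θ ≤ ∑ θ ∈ {θ | θ ≤ a ∧ p θ}, φ θ := by
  rcases le_total t a with hta | hat
  · refine sum_le_sum_of_subset_of_nonneg ?_ fun θ hθ _ => hlo θ (mem_filter.1 hθ).2.1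
    exact monotone_filter_right _ fun _ _ => And.imp_left (le_trans · hta)
  · rw [← sum_filter_add_sum_filter_not {θ | θ ≤ t ∧ p θ} (· ≤ a)]
    refine add_le_of_le_of_nonpos (le_of_eq (sum_congr ?_ fun _ _ => rfl)) ?_
    · ext θ
      simp only [mem_filter, mem_univ, true_and]
      exact ⟨fun h => ⟨h.2, h.1.2⟩, fun h => ⟨⟨h.1.trans hat, h.2⟩, h.1⟩⟩
    · exact sum_nonpos fun θ hθ => hhi θ (le_of_not_ge (mem_filter.1 hθ).2)

section GroupQuality

variable {ι G : Type*} [Fintype ι] [DecidableEq G] {k : ℕ}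

def groupQuality (g : ι → G) (s : ι → Fin k) (j : G) : ℕ :=
  ∑ i ∈ univ.filter (fun i => g i = j), (s i : ℕ)

variable (g : ι → G)

theorem groupQuality_mono : Monotone (groupQuality (k := k) g) :=
  fun _ _ hst _ => sum_le_sum fun i _ => hst i

theorem groupQuality_update_add [DecidableEq ι] (s : ι → Fin k) (i : ι) (θ : Fin k) (j : G) :
    groupQuality g (update s i θ) j + (if g i = j then (s i : ℕ) else 0) =
      groupQuality g s j + (if g i = j then (θ : ℕ) else 0) := by
  have hcast : (fun x => ((update s i θ x : Fin k) : ℕ)) = update (fun x => (s x : ℕ)) i θ :=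
    funext fun x => apply_update (fun _ (a : Fin k) => (a : ℕ)) s i θ x
  unfold groupQuality
  rw [hcast]
  split_ifs with h
  · have hi : i ∈ univ.filter (fun i => g i = j) := by simpa using h
    rw [sum_update_of_mem hi, sum_eq_add_sum_sdiff_singleton_of_mem hi (fun x => (s x : ℕ))]
    ring
  · rw [sum_update_of_notMem (by simpa using h)]

theorem groupQuality_update_eq_of_sub_eq [DecidableEq ι] (s : ι → Fin k) {i i' : ι}
    {θ θ' : Fin k} (hg : g i = g i') (hθ : θ ≤ s i) (hθ' : θ' ≤ s i')
    (hsub : (s i : ℕ) - θ = (s i' : ℕ) - θ') :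
    groupQuality g (update s i θ) = groupQuality g (update s i' θ') := by
  funext j
  have e := groupQuality_update_add g s i θ j
  have e' := groupQuality_update_add g s i' θ' j
  rw [Fin.le_def] at hθ hθ'
  by_cases hj : g i' = j <;> simp only [hg, hj, if_true, if_false] at e e' <;> omega

end GroupQuality

namespace SelectorMechanism

variable {ι σ : Type*} [DecidableEq ι] [Fintype σ] [LinearOrder σ]

def winningReports (w : (ι → σ) → ι) (s : ι → σ) (i : ι) : Finset σ :=
  {θ | θ ≤ s i ∧ w (update s i θ) = i}

def alloc (β : ℝ) (w : (ι → σ) → ι) (s : ι → σ) (i : ι) : ℝ :=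
  β * #(winningReports w s i)

def payment (β : ℝ) (w : (ι → σ) → ι) (v : ι → (ι → σ) → ℝ) (s : ι → σ) (i : ι) : ℝ :=
  β * ∑ θ ∈ winningReports w s i, v i (update s i θ)

variable (β : ℝ) (w : (ι → σ) → ι) (v : ι → (ι → σ) → ℝ)

theorem winningReports_update_self (s : ι → σ) (i : ι) (t : σ) :
    winningReports w (update s i t) i = ({θ | θ ≤ t ∧ w (update s i θ) = i} : Finset σ) := by
  ext θ
  simp [winningReports]

theorem utility_update_eq (s : ι → σ) (i : ι) (t : σ) :
    alloc β w (update s i t) i * v i s - payment β w v (update s i t) i =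
      β * ∑ θ ∈ {θ | θ ≤ t ∧ w (update s i θ) = i}, (v i s - v i (update s i θ)) := by
  rw [alloc, payment, winningReports_update_self]
  simp only [update_idem, sum_sub_distrib, sum_const, nsmul_eq_mul]
  ring

theorem utility_eq (s : ι → σ) (i : ι) :
    alloc β w s i * v i s - payment β w v s i =
      β * ∑ θ ∈ {θ | θ ≤ s i ∧ w (update s i θ) = i}, (v i s - v i (update s i θ)) := by
  simpa using utility_update_eq β w v s i (s i)

variable {β v}

theorem utility_update_le (hβ : 0 ≤ β) (hv : ∀ i s, Monotone fun θ => v i (update s i θ))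
    (s : ι → σ) (i : ι) (t : σ) :
    alloc β w (update s i t) i * v i s - payment β w v (update s i t) i ≤
      alloc β w s i * v i s - payment β w v s i := by
  rw [utility_update_eq, utility_eq]
  refine mul_le_mul_of_nonneg_left
    (sum_filter_le_le_of_sign _ (fun θ hθ => ?_) (fun θ hθ => ?_) t) hβ
  · simpa [sub_nonneg] using hv i s hθ
  · simpa [sub_nonpos] using hv i s hθ

theorem utility_nonneg (hβ : 0 ≤ β) (hv : ∀ i s, Monotone fun θ => v i (update s i θ))
    (s : ι → σ) (i : ι) : 0 ≤ alloc β w s i * v i s - payment β w v s i := by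
  rw [utility_eq]
  refine mul_nonneg hβ (sum_nonneg fun θ hθ => ?_)
  simpa [sub_nonneg] using hv i s (mem_filter.1 hθ).2.1

theorem mul_le_sum_payment [Fintype ι] (hβ : 0 ≤ β) (hv : ∀ i s, 0 ≤ v i s) (s : ι → σ) :
    β * v (w s) s ≤ ∑ i, payment β w v s i := by
  have hmem : s (w s) ∈ winningReports w s (w s) := by simp [winningReports]
  calc β * v (w s) s = β * v (w s) (update s (w s) (s (w s))) := by rw [update_eq_self]
    _ ≤ payment β w v s (w s) :=
      mul_le_mul_of_nonneg_left (single_le_sum (fun θ _ => hv _ _) hmem) hβ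
    _ ≤ ∑ i, payment β w v s i :=
      single_le_sum (f := payment β w v s)
        (fun i _ => mul_nonneg hβ (sum_nonneg fun θ _ => hv _ _)) (mem_univ _)

section GroupSelector

variable {ι G : Type*} [Fintype ι] [DecidableEq ι] [Fintype G] [DecidableEq G] {k : ℕ}

theorem sum_card_winningReports_le (g : ι → G) (A : (G → ℕ) → ι) (s : ι → Fin k) :
    ∑ i, #(winningReports (A ∘ groupQuality g) s i) ≤ Fintype.card G * k := by
  rw [← card_sigma]
  calc _ ≤ #((univ : Finset G) ×ˢ range k) := by
        refine card_le_card_of_injOn (fun a => (g a.1, (s a.1 : ℕ) - a.2)) ?_ ?_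
        · rintro ⟨i, θ⟩ -
          simp only [coe_product, coe_univ, coe_range, Set.mem_prod, Set.mem_univ,
            Set.mem_Iio, true_and]
          omega
        · rintro ⟨i, θ⟩ hθ ⟨i', θ'⟩ hθ' heq
          simp only [coe_sigma, Set.mem_sigma_iff, mem_coe, winningReports, mem_filter,
            mem_univ, true_and, comp_apply] at hθ hθ'
          obtain ⟨hg, hsub⟩ := Prod.ext_iff.1 heq
          dsimp only at hg hsub
          have hq := groupQuality_update_eq_of_sub_eq g s hg hθ.1 hθ'.1 hsub
          obtain rfl : i = i' := hθ.2.symm.trans (hq ▸ hθ'.2)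
          have := Fin.le_def.1 hθ.1
          have := Fin.le_def.1 hθ'.1
          obtain rfl : θ = θ' := Fin.ext (by omega)
          rfl
    _ = Fintype.card G * k := by simp

theorem sum_alloc_le (β : ℝ) (hβ : 0 ≤ β) (g : ι → G) (A : (G → ℕ) → ι) (s : ι → Fin k) :
    ∑ i, alloc β (A ∘ groupQuality g) s i ≤ β * (Fintype.card G * k) := by
  simp only [alloc, ← mul_sum]
  exact mul_le_mul_of_nonneg_left (by exact_mod_cast sum_card_winningReports_le g A s) hβ

end GroupSelector

end SelectorMechanism

theorem one_div_ten_mul_sub_one_mul_le (k ℓ : ℕ) :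
    1 / (10 * ((k : ℝ) - 1) * ℓ) ≤ 1 / (k * ℓ) := by
  -- for `k ≤ 1` or `ℓ = 0` the left side is `≤ 0`, division by zero being `0`
  rcases k with _ | _ | k
  · simp
  · simp
  rcases ℓ.eq_zero_or_pos with rfl | hℓ
  · simp
  push_cast
  exact one_div_le_one_div_of_le (by positivity) (by nlinarith [(Nat.one_le_cast (α := ℝ)).2 hℓ])

open SelectorMechanism in
theorem shared_quality_groups_revenue_approx_general
    (n k ℓ : ℕ) (hn : 1 ≤ n)
    (g : Fin n → Fin ℓ)
    (f : Fin n → (Fin ℓ → ℕ) → ℝ)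
    (hf_nonneg : ∀ i q, 0 ≤ f i q)
    (hf_mono : ∀ i, Monotone (f i))
    (v : Fin n → (Fin n → Fin k) → ℝ)
    (hv : ∀ i s, v i s =
      f i (fun j => ∑ i' ∈ Finset.univ.filter (fun i' => g i' = j), (s i' : ℕ))) :
    ∃ x p : (Fin n → Fin k) → Fin n → ℝ,
      (∀ s i, 0 ≤ x s i) ∧ (∀ s, ∑ i, x s i ≤ 1) ∧
      (∀ s i, 0 ≤ p s i) ∧
      (∀ (i : Fin n) (s : Fin n → Fin k) (t : Fin k),
        x s i * v i s - p s i ≥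
          x (Function.update s i t) i * v i s - p (Function.update s i t) i) ∧
      (∀ (i : Fin n) (s : Fin n → Fin k), x s i * v i s - p s i ≥ 0) ∧
      (∀ s : Fin n → Fin k,
        ∑ i, p s i ≥
          (1 / (10 * ((k : ℝ) - 1) * (ℓ : ℝ))) *
            Finset.univ.sup' ⟨⟨0, hn⟩, Finset.mem_univ _⟩ (fun i => v i s)) := by
  have : Nonempty (Fin n) := ⟨⟨0, hn⟩⟩
  choose A hA using fun Q => Finite.exists_max (f · Q)
  have hvq : ∀ i s, v i s = f i (groupQuality g s) := hv
  have hv0 : ∀ i s, 0 ≤ v i s := fun i s => hvq i s ▸ hf_nonneg _ _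
  have hmono : ∀ i s, Monotone fun θ => v i (update s i θ) := fun i s _ _ hθ => by
    simpa only [hvq] using hf_mono i (groupQuality_mono g (update_mono hθ))
  set β : ℝ := 1 / (k * ℓ)
  have hβ : 0 ≤ β := by positivity
  refine ⟨alloc β (A ∘ groupQuality g), payment β (A ∘ groupQuality g) v,
    fun s i => mul_nonneg hβ (Nat.cast_nonneg _), fun s => ?_,
    fun s i => mul_nonneg hβ (sum_nonneg fun θ _ => hv0 _ _),
    fun i s t => utility_update_le _ hβ hmono s i t,
    fun i s => utility_nonneg _ hβ hmono s i, fun s => ?_⟩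
  · calc ∑ i, alloc β (A ∘ groupQuality g) s i ≤ β * (ℓ * k) := by
          simpa using sum_alloc_le β hβ g A s
      _ = (ℓ * k) / (k * ℓ) := one_div_mul_eq_div _ _
      _ ≤ 1 := div_le_one_of_le₀ (mul_comm _ _).le (by positivity)
  · calc 1 / (10 * ((k : ℝ) - 1) * ℓ) * univ.sup' _ (fun i => v i s)
        ≤ β * univ.sup' _ (fun i => v i s) :=
          mul_le_mul_of_nonneg_right (one_div_ten_mul_sub_one_mul_le k ℓ)
            (le_sup'_of_le _ (mem_univ ⟨0, hn⟩) (hv0 _ _))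
      _ ≤ β * v (A (groupQuality g s)) s :=
          mul_le_mul_of_nonneg_left (sup'_le _ _ fun i _ => by simp only [hvq, hA]) hβ
      _ ≤ ∑ i, payment β (A ∘ groupQuality g) v s i :=
          mul_le_sum_payment (A ∘ groupQuality g) hβ hv0 s

/-- For every `n ≥ 1`, `k ≥ 2`, `ℓ ≥ 1`, group assignment `g`, and every
shared-quality instance (valuations `v i s = f i (q s)` with
`q s j = ∑_{i' : g i' = j} s i'` and each `f i` nonnegative and weakly increasing in
every coordinate), there exists an ex-post IC and ex-post IR mechanism `(x, p)` whose
revenue 10(k-1)ℓ-approximates the optimal welfare. -/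
theorem shared_quality_groups_revenue_approx
    (n k ℓ : ℕ) (hn : 1 ≤ n) (hk : 2 ≤ k) (hℓ : 1 ≤ ℓ)
    (g : Fin n → Fin ℓ)
    (f : Fin n → (Fin ℓ → ℕ) → ℝ)
    (hf_nonneg : ∀ i q, 0 ≤ f i q)
    (hf_mono : ∀ i, Monotone (f i))
    (v : Fin n → (Fin n → Fin k) → ℝ)
    (hv : ∀ i s, v i s =
      f i (fun j => ∑ i' ∈ Finset.univ.filter (fun i' => g i' = j), (s i' : ℕ))) :
    ∃ x p : (Fin n → Fin k) → Fin n → ℝ,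
      (∀ s i, 0 ≤ x s i) ∧ (∀ s, ∑ i, x s i ≤ 1) ∧
      (∀ s i, 0 ≤ p s i) ∧
      (∀ (i : Fin n) (s : Fin n → Fin k) (t : Fin k),
        x s i * v i s - p s i ≥
          x (Function.update s i t) i * v i s - p (Function.update s i t) i) ∧
      (∀ (i : Fin n) (s : Fin n → Fin k), x s i * v i s - p s i ≥ 0) ∧
      (∀ s : Fin n → Fin k,
        ∑ i, p s i ≥
          (1 / (10 * ((k : ℝ) - 1) * (ℓ : ℝ))) *
            Finset.univ.sup' ⟨⟨0, hn⟩, Finset.mem_univ _⟩ (fun i => v i s)) :=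
  shared_quality_groups_revenue_approx_general n k ℓ hn g f hf_nonneg hf_mono v hv
end

section
/- For every ℓ ≥ 1, every k ≥ 2, and every real α with 0 < α < ℓ·(k·(k−1)/2) + 1, there exist a number of bidders n, an assignment g : Fin n → Fin ℓ of bidders to expertise groups, and nonnegative valuations v_i that are weakly increasing with respect to the pointwise order on profiles and symmetric within expertise groups, such that for every feasible per-bidder monotone allocation rule x there exists a signal profile s with ∑_i x_i(s)·v_i(s) < (1/α)·max_i v_i(s). (Consequently, no ex-post incentive compatible auction for instances with ℓ expertise types, k signal values, and group-symmetric monotone valuations achieves better than an (ℓ·C(k,2)+1)-approximation to the optimal welfare.) -/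
/-!
Each bidder `t` has a base signal `Q t` and a lowered signal `c t ≤ Q t`; let `P t` be the base
profile `Q` with only `t`'s signal lowered, and `|P t|` its sum of signals. Bidder `t` values a
profile at `M ^ |P t|` if it dominates `P t` up to a group-preserving permutation, and at `0`
otherwise. Per-bidder monotonicity gives `x_t (P t) ≤ x_t Q`, so feasibility at `Q` yields a
bidder `t` with `x_t (P t) ≤ 1 / n`. At `P t` every other bidder `i` is worth at most
`M ^ |P t| / M`: domination forces `|P i| ≤ |P t|`, with equality only if `P i` is a
group-preserving rearrangement of `P t`, which the multiset of (group, signal) pairs rules out.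
So the welfare at `P t` is at most `(1 / n + 1 / M)` times the optimum, and one can fit
`n = ℓ · C(k, 2) + 1` bidders.
-/

open Finset Function

namespace Auction

section Allocation

variable {ι : Type*} [Fintype ι] [DecidableEq ι]

theorem exists_alloc_update_le_inv_card [Nonempty ι] {σ : Type*} [Preorder σ]
    (x : (ι → σ) → ι → ℝ) (hx : ∀ s, ∑ i, x s i ≤ 1)
    (hmono : ∀ i s, Monotone fun a => x (update s i a) i) {Q c : ι → σ} (hc : c ≤ Q) :
    ∃ t, x (update Q t (c t)) t ≤ 1 / Fintype.card ι := by
  have hle : ∑ t, x (update Q t (c t)) t ≤ ∑ _t : ι, 1 / (Fintype.card ι : ℝ) :=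
    calc ∑ t, x (update Q t (c t)) t ≤ ∑ t, x Q t :=
          sum_le_sum fun t _ => by simpa using hmono t Q (hc t)
      _ ≤ 1 := hx Q
      _ = ∑ _t : ι, 1 / (Fintype.card ι : ℝ) := by simp
  obtain ⟨t, -, ht⟩ := exists_le_of_sum_le univ_nonempty hle
  exact ⟨t, ht⟩

theorem sum_mul_le_mul_add {x v : ι → ℝ} (hx0 : ∀ i, 0 ≤ x i) (hx1 : ∑ i, x i ≤ 1)
    {t : ι} {ε : ℝ} (hε : 0 ≤ ε) (hv : ∀ i ≠ t, v i ≤ ε) :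
    ∑ i, x i * v i ≤ x t * v t + ε := by
  rw [← add_sum_erase _ _ (mem_univ t)]
  gcongr
  calc ∑ i ∈ univ.erase t, x i * v i ≤ ∑ i ∈ univ.erase t, x i * ε :=
        sum_le_sum fun i hi => mul_le_mul_of_nonneg_left (hv i (ne_of_mem_erase hi)) (hx0 i)
    _ = (∑ i ∈ univ.erase t, x i) * ε := (sum_mul ..).symm
    _ ≤ 1 * ε := by
        gcongr
        exact (sum_le_sum_of_subset_of_nonneg (erase_subset _ _) fun i _ _ => hx0 i).trans hx1
    _ = ε := one_mul ε

end Allocation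

section ProfileTypes

variable {ι G σ : Type*} [Fintype ι] (g : ι → G)

def profileTypes (s : ι → σ) : Multiset (G × σ) := ∑ i, {(g i, s i)}

theorem profileTypes_comp_perm {π : Equiv.Perm ι} (hπ : g ∘ π = g) (s : ι → σ) :
    profileTypes g (s ∘ π) = profileTypes g s :=
  (sum_congr rfl fun i _ => by rw [← congrFun hπ i]; rfl).trans
    (Equiv.sum_comp π fun i => {(g i, s i)})

theorem singleton_add_profileTypes_update [DecidableEq ι] (s : ι → σ) (t : ι) (a : σ) :
    {(g t, s t)} + profileTypes g (update s t a) = {(g t, a)} + profileTypes g s := by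
  have hrest : ∑ i ∈ univ.erase t, ({(g i, update s t a i)} : Multiset (G × σ)) =
      ∑ i ∈ univ.erase t, {(g i, s i)} :=
    sum_congr rfl fun i hi => by rw [update_of_ne (ne_of_mem_erase hi)]
  simp only [profileTypes, ← add_sum_erase univ _ (mem_univ t), update_self, hrest]
  exact add_left_comm _ _ _

theorem eq_of_update_eq_update_comp [DecidableEq ι] {Q c : ι → σ}
    (hinj : Injective fun i => (g i, Q i, c i)) (hfix : {i | c i = Q i}.Subsingleton)
    {π : Equiv.Perm ι} (hπ : g ∘ π = g) {i t : ι}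
    (h : update Q i (c i) = update Q t (c t) ∘ π) : i = t := by
  have htypes : profileTypes g (update Q i (c i)) = profileTypes g (update Q t (c t)) := by
    rw [h, profileTypes_comp_perm g hπ]
  have hi := singleton_add_profileTypes_update g Q i (c i)
  have ht := singleton_add_profileTypes_update g Q t (c t)
  have hswap : (g i, c i) ::ₘ {(g t, Q t)} = (g t, c t) ::ₘ {(g i, Q i)} := by
    simp only [← Multiset.singleton_add]
    apply add_right_cancel (b := profileTypes g Q)
    calc {(g i, c i)} + {(g t, Q t)} + profileTypes g Q
        = {(g t, Q t)} + ({(g i, Q i)} + profileTypes g (update Q i (c i))) := by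
          rw [hi]; abel
      _ = {(g i, Q i)} + ({(g t, Q t)} + profileTypes g (update Q t (c t))) := by
          rw [htypes]; abel
      _ = {(g t, c t)} + {(g i, Q i)} + profileTypes g Q := by rw [ht]; abel
  rcases Multiset.cons_eq_cons.1 hswap with ⟨hc, hQ⟩ | ⟨-, cs, hQ, hc⟩
  · simp only [Multiset.singleton_inj, Prod.mk.injEq] at hc hQ
    exact hinj (by simp only [hc.1, hc.2, hQ.2])
  · simp only [Multiset.singleton_eq_cons_iff, Prod.mk.injEq] at hc hQ
    exact hfix hc.1.2.symm hQ.1.2.symm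

end ProfileTypes

section Valuation

variable {ι G : Type*} {k : ℕ} {g : ι → G}

variable (g) in
def GroupDominates (p s : ι → Fin k) : Prop :=
  ∃ π : Equiv.Perm ι, g ∘ π = g ∧ p ≤ s ∘ π

theorem groupDominates_refl (p : ι → Fin k) : GroupDominates g p p :=
  ⟨1, rfl, le_rfl⟩

theorem GroupDominates.mono {p s s' : ι → Fin k} (h : GroupDominates g p s) (hs : s ≤ s') :
    GroupDominates g p s' :=
  let ⟨π, hπ, hle⟩ := h
  ⟨π, hπ, fun i => (hle i).trans (hs (π i))⟩

theorem GroupDominates.of_comp {p s : ι → Fin k} {π : Equiv.Perm ι} (hπ : g ∘ π = g)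
    (h : GroupDominates g p (s ∘ π)) : GroupDominates g p s :=
  let ⟨τ, hτ, hle⟩ := h
  ⟨τ.trans π, by rw [Equiv.coe_trans, ← comp_assoc, hπ, hτ], hle⟩

theorem groupDominates_comp_iff {p s : ι → Fin k} {π : Equiv.Perm ι} (hπ : g ∘ π = g) :
    GroupDominates g p (s ∘ π) ↔ GroupDominates g p s := by
  refine ⟨GroupDominates.of_comp hπ, fun h => GroupDominates.of_comp (π := π.symm) ?_ ?_⟩
  · exact (π.comp_symm_eq g g).2 hπ.symm
  · simpa [comp_assoc] using h

variable [Fintype ι]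

def signalSum (s : ι → Fin k) : ℕ := ∑ i, (s i : ℕ)

variable (g) in
open Classical in
noncomputable def dominationValuation (P : ι → ι → Fin k) (M : ℝ) (i : ι) (s : ι → Fin k) :
    ℝ :=
  if GroupDominates g (P i) s then M ^ signalSum (P i) else 0

theorem signalSum_comp_perm (s : ι → Fin k) (π : Equiv.Perm ι) :
    signalSum (s ∘ π) = signalSum s :=
  Equiv.sum_comp π fun i => (s i : ℕ)

theorem GroupDominates.signalSum_le {p s : ι → Fin k} (h : GroupDominates g p s) :
    signalSum p ≤ signalSum s := by
  obtain ⟨π, -, hle⟩ := h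
  rw [← signalSum_comp_perm s π]
  exact sum_le_sum fun i _ => hle i

theorem GroupDominates.exists_eq_of_signalSum_eq {p s : ι → Fin k} (h : GroupDominates g p s)
    (hsum : signalSum p = signalSum s) : ∃ π : Equiv.Perm ι, g ∘ π = g ∧ p = s ∘ π := by
  obtain ⟨π, hπ, hle⟩ := h
  rw [← signalSum_comp_perm s π] at hsum
  have heq := (sum_eq_sum_iff_of_le (f := fun i => (p i : ℕ)) (g := fun i => (s (π i) : ℕ))
    fun i _ => hle i).1 hsum
  exact ⟨π, hπ, funext fun i => Fin.ext (heq i (mem_univ i))⟩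

variable {P : ι → ι → Fin k} {M : ℝ}

theorem dominationValuation_nonneg (hM : 0 ≤ M) (i : ι) (s : ι → Fin k) :
    0 ≤ dominationValuation g P M i s := by
  unfold dominationValuation
  split_ifs <;> positivity

theorem dominationValuation_mono (hM : 0 ≤ M) (i : ι) :
    Monotone (dominationValuation g P M i) := by
  intro s s' hs
  unfold dominationValuation
  by_cases h : GroupDominates g (P i) s
  · rw [if_pos h, if_pos (h.mono hs)]
  · rw [if_neg h]
    split_ifs <;> positivity

theorem dominationValuation_comp_perm (i : ι) (s : ι → Fin k) {π : Equiv.Perm ι}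
    (hπ : g ∘ π = g) : dominationValuation g P M i (s ∘ π) = dominationValuation g P M i s := by
  classical
  exact if_congr (groupDominates_comp_iff hπ) rfl rfl

theorem dominationValuation_self (i : ι) :
    dominationValuation g P M i (P i) = M ^ signalSum (P i) :=
  if_pos (groupDominates_refl _)

theorem dominationValuation_le_div (hM : 1 ≤ M)
    (hP : ∀ {i t : ι} {π : Equiv.Perm ι}, g ∘ π = g → P i = P t ∘ π → i = t)
    {i t : ι} (hne : i ≠ t) :
    dominationValuation g P M i (P t) ≤ M ^ signalSum (P t) / M := by
  unfold dominationValuation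
  split_ifs with h
  · have hlt : signalSum (P i) < signalSum (P t) := h.signalSum_le.lt_of_ne fun hsum =>
      let ⟨_, hπ, heq⟩ := h.exists_eq_of_signalSum_eq hsum
      hne (hP hπ heq)
    rw [le_div_iff₀ (by positivity), ← pow_succ]
    exact pow_le_pow_right₀ hM hlt
  · positivity

end Valuation

section HardInstance

variable {ι G : Type*} [Fintype ι] [DecidableEq ι] [Nonempty ι] {k : ℕ}

theorem exists_update_welfare_le {g : ι → G} {Q c : ι → Fin k}
    (hinj : Injective fun i => (g i, Q i, c i)) (hfix : {i | c i = Q i}.Subsingleton)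
    (hc : c ≤ Q) {M : ℝ} (hM : 1 ≤ M) (x : (ι → Fin k) → ι → ℝ)
    (hx0 : ∀ s i, 0 ≤ x s i) (hx1 : ∀ s, ∑ i, x s i ≤ 1)
    (hmono : ∀ i s, Monotone fun a => x (update s i a) i) :
    ∃ t, ∑ i, x (update Q t (c t)) i *
        dominationValuation g (fun j => update Q j (c j)) M i (update Q t (c t)) ≤
      (1 / Fintype.card ι + 1 / M) * M ^ signalSum (update Q t (c t)) := by
  obtain ⟨t, ht⟩ := exists_alloc_update_le_inv_card x hx1 hmono hc
  refine ⟨t, ?_⟩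
  have hother : ∀ i ≠ t, dominationValuation g (fun j => update Q j (c j)) M i
      (update Q t (c t)) ≤ M ^ signalSum (update Q t (c t)) / M :=
    fun i hne => dominationValuation_le_div hM
      (fun hπ h => eq_of_update_eq_update_comp g hinj hfix hπ h) hne
  have hwelfare := sum_mul_le_mul_add (hx0 (update Q t (c t))) (hx1 _) (by positivity) hother
  rw [dominationValuation_self] at hwelfare
  calc _ ≤ x (update Q t (c t)) t * M ^ signalSum (update Q t (c t)) +
        M ^ signalSum (update Q t (c t)) / M := hwelfare
    _ ≤ _ := by
        rw [add_mul, div_eq_mul_one_div _ M, mul_comm (M ^ _)]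
        gcongr

end HardInstance

/-- One bidder for each group and each pair of signals `low < high`, plus the bidder `none`, whose
lowered profile is the base profile itself. -/
abbrev Gadget (G σ : Type*) [LT σ] := Option (G × {p : σ × σ // p.1 < p.2})

namespace Gadget

variable {G σ : Type*} [LinearOrder σ]

theorem card [Fintype G] [Fintype σ] :
    Fintype.card (Gadget G σ) = Fintype.card G * (Fintype.card σ).choose 2 + 1 := by
  simp [Fintype.card_subtype, Fintype.card_product_filter_lt]

variable [Inhabited σ]

def high (t : Gadget G σ) : σ := t.elim default (·.2.1.2)

def low (t : Gadget G σ) : σ := t.elim default (·.2.1.1)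

theorem low_le_high (t : Gadget G σ) : low t ≤ high t := by
  cases t with
  | none => exact le_rfl
  | some z => exact z.2.2.le

theorem low_eq_high_iff {t : Gadget G σ} : low t = high t ↔ t = none := by
  cases t with
  | none => exact iff_of_true rfl rfl
  | some z => simpa [low, high] using z.2.2.ne

variable [Inhabited G]

def group (t : Gadget G σ) : G := t.elim default (·.1)

theorem injective_group_high_low : Injective fun t : Gadget G σ => (group t, high t, low t) := by
  rintro (_ | ⟨γ, ⟨a, b⟩, hab⟩) (_ | ⟨γ', ⟨a', b'⟩, hab'⟩) h <;>
    simp_all [group, high, low]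
  · exact hab'.ne (h.2.2.symm.trans h.2.1)
  · exact hab.ne (h.2.2.trans h.2.1.symm)

end Gadget

end Auction

open Auction

/-- For every `ℓ ≥ 1`, `k ≥ 2`, and real `α` with
`0 < α < ℓ·(k(k-1)/2) + 1`, there exist a number of bidders `n`, a group assignment
`g`, and nonnegative valuations `v i` that are weakly increasing in the pointwise
order on profiles and symmetric within expertise groups, such that every feasible
per-bidder monotone allocation rule fails to `α`-approximate welfare at some
signal profile. -/
theorem general_valuations_welfare_lower_bound
    (ℓ k : ℕ) (hℓ : 1 ≤ ℓ) (hk : 2 ≤ k)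
    (α : ℝ) (hα0 : 0 < α) (hα : α < (ℓ : ℝ) * ((k : ℝ) * ((k : ℝ) - 1) / 2) + 1) :
    ∃ (n : ℕ) (hn : 1 ≤ n) (g : Fin n → Fin ℓ)
      (v : Fin n → (Fin n → Fin k) → ℝ),
      (∀ i s, 0 ≤ v i s) ∧
      (∀ i, Monotone (v i)) ∧
      (∀ (j : Fin n) (s : Fin n → Fin k) (π : Equiv.Perm (Fin n)),
        g ∘ π = g → v j (s ∘ π) = v j s) ∧
      ∀ x : (Fin n → Fin k) → Fin n → ℝ,
        (∀ s i, 0 ≤ x s i) →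
        (∀ s, ∑ i, x s i ≤ 1) →
        (∀ (i : Fin n) (s : Fin n → Fin k),
          Monotone fun t => x (Function.update s i t) i) →
        ∃ s : Fin n → Fin k,
          ∑ i, x s i * v i s <
            (1 / α) * Finset.univ.sup' ⟨⟨0, hn⟩, Finset.mem_univ _⟩ (fun i => v i s) := by
  have : NeZero ℓ := ⟨by omega⟩
  have : NeZero k := ⟨by omega⟩
  let e := Fintype.equivFin (Gadget (Fin ℓ) (Fin k))
  set n := Fintype.card (Gadget (Fin ℓ) (Fin k)) with hn_def
  have hαn : α < n := by
    rwa [hn_def, Gadget.card, Fintype.card_fin, Fintype.card_fin, Nat.cast_add,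
      Nat.cast_mul, Nat.cast_choose_two, Nat.cast_one]
  obtain ⟨m, hm⟩ := exists_nat_one_div_lt (sub_pos.2 (one_div_lt_one_div_of_lt hα0 hαn))
  set M : ℝ := m + 1
  have hM : 1 ≤ M := by simp [M]
  let g : Fin n → Fin ℓ := Gadget.group ∘ e.symm
  let Q : Fin n → Fin k := Gadget.high ∘ e.symm
  let c : Fin n → Fin k := Gadget.low ∘ e.symm
  refine ⟨n, Fintype.card_pos, g, dominationValuation g (fun j => update Q j (c j)) M,
    dominationValuation_nonneg (by positivity), dominationValuation_mono (by positivity),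
    fun j s π hπ => dominationValuation_comp_perm j s hπ, fun x hx0 hx1 hmono => ?_⟩
  obtain ⟨t, ht⟩ := exists_update_welfare_le (Gadget.injective_group_high_low.comp e.symm.injective)
    (fun i hi j hj => e.symm.injective
      ((Gadget.low_eq_high_iff.1 hi).trans (Gadget.low_eq_high_iff.1 hj).symm))
    (fun i => Gadget.low_le_high _) hM x hx0 hx1 hmono
  have hmax := le_sup' (fun i => dominationValuation g (fun j => update Q j (c j)) M i
    (update Q t (c t))) (mem_univ t)
  rw [dominationValuation_self] at hmax
  rw [Fintype.card_fin] at ht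
  refine ⟨update Q t (c t), ht.trans_lt ?_⟩
  calc (1 / n + 1 / M) * M ^ signalSum (update Q t (c t))
      < 1 / α * M ^ signalSum (update Q t (c t)) := by
        gcongr
        exact lt_tsub_iff_left.1 hm
    _ ≤ _ := by gcongr
end

section
/- For every n ≥ 1, every k ≥ 2, every ℓ ≥ 1, every assignment g : Fin n → Fin ℓ of bidders to expertise groups, and every family of nonnegative valuations v_i that are weakly increasing with respect to the pointwise order on profiles and symmetric within expertise groups, setting ρ = min{n, ℓ·(k·(k−1)/2) + 1}, there exists a feasible per-bidder monotone allocation rule x such that x_i(s) ∈ {0, 1/ρ} for all i and s, and for every profile s there is a maximizer i of j ↦ v_j(s) with x_i(s) = 1/ρ; together with suitable payments this yields an ex-post incentive compatible and ex-post individually rational mechanism satisfying, for every profile s, ∑_i x_i(s)·v_i(s) ≥ (1/ρ)·max_i v_i(s). -/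
/-!
Fix a welfare-maximising winner `w s` whose tie-breaking depends only on the vector of values.
Every bidder who would become the winner by lowering her own report gets `1/ρ` and pays `1/ρ`
times her value at the lowest such report (her threshold). This allocation is monotone in the
own signal, so for monotone valuations threshold payments make it ex-post IC and IR, and since
`w s` itself is served, the welfare is at least `(1/ρ) · max_i v i s`. For feasibility: if `i`
lowers her signal from `s i` to `t < s i`, symmetry within groups makes the new winner depend
only on `(g i, t, s i)`, so besides `w s` there are at most `ℓ · k(k-1)/2` candidates.
-/

open Finset Function

theorem Finset.card_image_le_card_image_of_factor {α β γ : Type*} [DecidableEq β]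
    [DecidableEq γ] {s : Finset α} {f : α → β} {d : α → γ}
    (h : ∀ a ∈ s, ∀ b ∈ s, d a = d b → f a = f b) : #(s.image f) ≤ #(s.image d) := by
  classical
  rcases s.eq_empty_or_nonempty with rfl | ⟨a₀, -⟩
  · simp
  have : Nonempty α := ⟨a₀⟩
  refine card_le_card_of_surjOn (fun c => f (invFunOn d s c)) ?_
  rintro _ hy
  obtain ⟨a, ha, rfl⟩ := mem_coe.1 hy |> mem_image.1
  have hex : ∃ b ∈ (s : Set α), d b = d a := ⟨a, ha, rfl⟩
  exact ⟨d a, mem_coe.2 (mem_image_of_mem d ha),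
    h _ (invFunOn_mem hex) _ ha (invFunOn_eq hex)⟩

theorem Function.comp_swap_eq_self {α β : Type*} [DecidableEq α] {f : α → β} {i j : α}
    (h : f i = f j) : f ∘ Equiv.swap i j = f := by
  rw [Equiv.comp_swap_eq_update, h, update_eq_self, ← h, update_eq_self]

theorem Function.update_comp_swap {α β : Type*} [DecidableEq α] (f : α → β) (i j : α) (b : β) :
    update f i b ∘ Equiv.swap i j = update (f ∘ Equiv.swap i j) j b := by
  rw [update_comp_equiv, Equiv.symm_swap, Equiv.swap_apply_left]

/-- A maximiser of `f`; as a function of `f` alone, it breaks ties identically for equal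
value vectors. -/
noncomputable def argmax {ι β : Type*} [Finite ι] [Nonempty ι] [LinearOrder β] (f : ι → β) : ι :=
  (Finite.exists_max f).choose

theorem le_argmax {ι β : Type*} [Finite ι] [Nonempty ι] [LinearOrder β] (f : ι → β) (j : ι) :
    f j ≤ f (argmax f) :=
  (Finite.exists_max f).choose_spec j

theorem threshold_utility_le {α : Type*} [LinearOrder α] {τ a b : α} {y z c : ℝ} (hc : 0 ≤ c)
    (h_above : τ ≤ a → z ≤ y) (h_below : a < τ → y ≤ z) :
    (if τ ≤ b then c * (y - z) else 0) ≤ if τ ≤ a then c * (y - z) else 0 := by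
  by_cases hb : τ ≤ b <;> by_cases ha : τ ≤ a <;> simp only [hb, ha, if_true, if_false, le_refl]
  · exact mul_nonpos_of_nonneg_of_nonpos hc (sub_nonpos.2 (h_below (not_le.1 ha)))
  · exact mul_nonneg hc (sub_nonneg.2 (h_above ha))

theorem threshold_utility_nonneg {α : Type*} [LinearOrder α] {τ a : α} {y z c : ℝ} (hc : 0 ≤ c)
    (h_above : τ ≤ a → z ≤ y) : 0 ≤ if τ ≤ a then c * (y - z) else 0 := by
  split_ifs with ha
  · exact mul_nonneg hc (sub_nonneg.2 (h_above ha))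
  · exact le_rfl

namespace Auction

variable {ι α : Type*}

def IsSymmetricWithinGroups {γ : Type*} (g : ι → γ) (v : ι → (ι → α) → ℝ) : Prop :=
  ∀ (j : ι) (s : ι → α) (π : Equiv.Perm ι), g ∘ π = g → v j (s ∘ π) = v j s

variable [Fintype ι] [Nonempty ι] (v : ι → (ι → α) → ℝ)

noncomputable def winner (s : ι → α) : ι :=
  argmax fun j => v j s

variable {v} in
theorem le_winner (s : ι → α) (j : ι) : v j s ≤ v (winner v s) s :=
  le_argmax (fun j => v j s) j

variable [DecidableEq ι]

variable {v} in
theorem winner_update_eq_of_isSymmetricWithinGroups {γ : Type*} {g : ι → γ}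
    (hv : IsSymmetricWithinGroups g v) {s : ι → α} {i i' : ι} (hg : g i = g i')
    (hs : s i = s i') (t : α) : winner v (update s i' t) = winner v (update s i t) := by
  have hswap : update s i' t = update s i t ∘ Equiv.swap i i' := by
    rw [update_comp_swap, comp_swap_eq_self hs]
  unfold winner
  congr 1
  funext j
  rw [hswap, hv j _ _ (comp_swap_eq_self hg)]

variable [Fintype α]

noncomputable def winningSignals (s : ι → α) (i : ι) : Finset α :=
  {t | winner v (update s i t) = i}

variable {v} in
theorem winningSignals_update (s : ι → α) (i : ι) (t : α) :
    winningSignals v (update s i t) i = winningSignals v s i := by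
  simp only [winningSignals, update_idem]

variable [LinearOrder α]

noncomputable def winners (s : ι → α) : Finset ι :=
  {i | ∃ t ∈ winningSignals v s i, t ≤ s i}

/-- The fallback `s i` is junk: it only occurs when `winningSignals v s i` is empty, where
no payment is charged. -/
noncomputable def threshold (s : ι → α) (i : ι) : α :=
  if h : (winningSignals v s i).Nonempty then (winningSignals v s i).min' h else s i

noncomputable def alloc (c : ℝ) (s : ι → α) (i : ι) : ℝ :=
  if i ∈ winners v s then c else 0

noncomputable def payment (c : ℝ) (s : ι → α) (i : ι) : ℝ :=
  if i ∈ winners v s then c * v i (update s i (threshold v s i)) else 0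

variable {v}

theorem winner_mem_winners (s : ι → α) : winner v s ∈ winners v s := by
  simp only [winners, winningSignals, mem_filter, mem_univ, true_and]
  exact ⟨s (winner v s), by rw [update_eq_self], le_rfl⟩

theorem mem_winners_update_iff_exists {s : ι → α} {i : ι} {t : α} :
    i ∈ winners v (update s i t) ↔ ∃ u ∈ winningSignals v s i, u ≤ t := by
  simp only [winners, mem_filter, mem_univ, true_and, winningSignals_update, update_self]

theorem threshold_update {s : ι → α} {i : ι} (h : (winningSignals v s i).Nonempty) (t : α) :
    threshold v (update s i t) i = threshold v s i := by
  simp only [threshold, winningSignals_update, dif_pos h]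

theorem mem_winners_update_iff {s : ι → α} {i : ι} (h : (winningSignals v s i).Nonempty)
    (t : α) : i ∈ winners v (update s i t) ↔ threshold v s i ≤ t := by
  rw [mem_winners_update_iff_exists, threshold, dif_pos h, min'_eq_inf', inf'_le_iff]
  rfl

theorem notMem_winners_update {s : ι → α} {i : ι} (h : ¬(winningSignals v s i).Nonempty)
    (t : α) : i ∉ winners v (update s i t) := by
  rw [mem_winners_update_iff_exists]
  exact fun ⟨u, hu, _⟩ => h ⟨u, hu⟩

theorem card_winners_le {γ : Type*} [Fintype γ] [DecidableEq γ] {g : ι → γ}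
    (hv : IsSymmetricWithinGroups g v) (s : ι → α) :
    #(winners v s) ≤ Fintype.card γ * (Fintype.card α).choose 2 + 1 := by
  set D : Finset (ι × α) := {p | p.2 < s p.1}
  set P : Finset (γ × α × α) := univ ×ˢ ({x | x.1 < x.2} : Finset (α × α)) with hP
  have hsub : winners v s ⊆ insert (winner v s) (D.image fun p => winner v (update s p.1 p.2)) := by
    intro i hi
    obtain ⟨t, ht, hts⟩ := (mem_filter.1 hi).2
    simp only [winningSignals, mem_filter, mem_univ, true_and] at ht
    rcases hts.eq_or_lt with rfl | hlt
    · rw [update_eq_self] at ht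
      exact ht ▸ mem_insert_self _ _
    · exact mem_insert_of_mem (mem_image.2 ⟨(i, t), by simpa [D] using hlt, ht⟩)
  have hfactor : ∀ p ∈ D, ∀ q ∈ D, (g p.1, p.2, s p.1) = (g q.1, q.2, s q.1) →
      winner v (update s p.1 p.2) = winner v (update s q.1 q.2) := by
    rintro ⟨i, t⟩ - ⟨i', t'⟩ - hpq
    simp only [Prod.mk.injEq] at hpq
    obtain ⟨hg, rfl, hs⟩ := hpq
    exact (winner_update_eq_of_isSymmetricWithinGroups hv hg hs t).symm
  have hdescr : D.image (fun p => (g p.1, p.2, s p.1)) ⊆ P := by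
    intro x hx
    obtain ⟨p, hp, rfl⟩ := mem_image.1 hx
    simpa [D, hP] using hp
  calc #(winners v s) ≤ #(D.image fun p => winner v (update s p.1 p.2)) + 1 :=
        (card_le_card hsub).trans (card_insert_le _ _)
    _ ≤ #(D.image fun p => (g p.1, p.2, s p.1)) + 1 := by
        gcongr; exact card_image_le_card_image_of_factor hfactor
    _ ≤ #P + 1 := by gcongr
    _ = Fintype.card γ * (Fintype.card α).choose 2 + 1 := by
        rw [hP, card_product, card_univ, Fintype.card_product_filter_lt]

variable {c : ℝ}

theorem alloc_nonneg (hc : 0 ≤ c) (s : ι → α) (i : ι) : 0 ≤ alloc v c s i := by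
  unfold alloc
  split_ifs
  exacts [hc, le_rfl]

theorem alloc_eq_zero_or_eq (s : ι → α) (i : ι) : alloc v c s i = 0 ∨ alloc v c s i = c := by
  unfold alloc
  split_ifs
  exacts [Or.inr rfl, Or.inl rfl]

theorem alloc_winner (s : ι → α) : alloc v c s (winner v s) = c :=
  if_pos (winner_mem_winners s)

theorem sum_alloc (s : ι → α) : ∑ i, alloc v c s i = #(winners v s) * c := by
  simp only [alloc, sum_ite_mem, univ_inter, sum_const, nsmul_eq_mul]

theorem monotone_alloc_update (hc : 0 ≤ c) (s : ι → α) (i : ι) :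
    Monotone fun t => alloc v c (update s i t) i := by
  intro t t' htt'
  have hmem : i ∈ winners v (update s i t) → i ∈ winners v (update s i t') := by
    simp only [mem_winners_update_iff_exists]
    exact fun ⟨u, hu, hut⟩ => ⟨u, hu, hut.trans htt'⟩
  simp only [alloc]
  split_ifs with h h'
  exacts [le_rfl, absurd (hmem h) h', hc, le_rfl]

theorem payment_nonneg (hc : 0 ≤ c) (hv : ∀ j s, 0 ≤ v j s) (s : ι → α) (i : ι) :
    0 ≤ payment v c s i := by
  unfold payment
  split_ifs
  exacts [mul_nonneg hc (hv _ _), le_rfl]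

theorem utility_update_eq {s : ι → α} {i : ι} (h : (winningSignals v s i).Nonempty) (b : α) :
    alloc v c (update s i b) i * v i s - payment v c (update s i b) i =
      if threshold v s i ≤ b then c * (v i s - v i (update s i (threshold v s i))) else 0 := by
  simp only [alloc, payment, mem_winners_update_iff h, threshold_update h, update_idem]
  split_ifs <;> ring

theorem utility_update_eq_zero {s : ι → α} {i : ι} (h : ¬(winningSignals v s i).Nonempty)
    (b : α) : alloc v c (update s i b) i * v i s - payment v c (update s i b) i = 0 := by
  simp only [alloc, payment, if_neg (notMem_winners_update h b), zero_mul, sub_zero]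

theorem utility_le_of_monotone {i : ι} (hv : Monotone (v i)) (hc : 0 ≤ c) (s : ι → α) (t : α) :
    alloc v c (update s i t) i * v i s - payment v c (update s i t) i ≤
      alloc v c s i * v i s - payment v c s i := by
  by_cases h : (winningSignals v s i).Nonempty
  · have htruth := utility_update_eq (c := c) h (s i)
    rw [update_eq_self] at htruth
    rw [utility_update_eq h, htruth]
    exact threshold_utility_le hc (fun hτ => hv (update_le_self_iff.2 hτ))
      (fun hτ => hv (le_update_self_iff.2 hτ.le))
  · have htruth := utility_update_eq_zero (c := c) h (s i)
    rw [update_eq_self] at htruth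
    rw [utility_update_eq_zero h, htruth]

theorem utility_nonneg_of_monotone {i : ι} (hv : Monotone (v i)) (hc : 0 ≤ c) (s : ι → α) :
    0 ≤ alloc v c s i * v i s - payment v c s i := by
  by_cases h : (winningSignals v s i).Nonempty
  · have htruth := utility_update_eq (c := c) h (s i)
    rw [update_eq_self] at htruth
    rw [htruth]
    exact threshold_utility_nonneg hc (fun hτ => hv (update_le_self_iff.2 hτ))
  · have htruth := utility_update_eq_zero (c := c) h (s i)
    rw [update_eq_self] at htruth
    rw [htruth]

theorem mul_le_sum_alloc_mul (hc : 0 ≤ c) {s : ι → α} (hv : ∀ j, 0 ≤ v j s) :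
    c * v (winner v s) s ≤ ∑ i, alloc v c s i * v i s := by
  have := single_le_sum (f := fun j => alloc v c s j * v j s)
    (fun j _ => mul_nonneg (alloc_nonneg hc s j) (hv j)) (mem_univ (winner v s))
  rwa [alloc_winner] at this

end Auction

open Auction

theorem general_valuations_welfare_upper_bound_general
    (n k ℓ : ℕ) (hn : 1 ≤ n)
    (g : Fin n → Fin ℓ)
    (v : Fin n → (Fin n → Fin k) → ℝ)
    (hv_nonneg : ∀ i s, 0 ≤ v i s)
    (hv_mono : ∀ i, Monotone (v i))
    (hv_sym : ∀ (j : Fin n) (s : Fin n → Fin k) (π : Equiv.Perm (Fin n)),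
      g ∘ π = g → v j (s ∘ π) = v j s) :
    ∃ x p : (Fin n → Fin k) → Fin n → ℝ,
      -- feasibility
      (∀ s i, 0 ≤ x s i) ∧ (∀ s, ∑ i, x s i ≤ 1) ∧
      -- per-bidder monotonicity
      (∀ (i : Fin n) (s : Fin n → Fin k),
        Monotone fun t => x (Function.update s i t) i) ∧
      -- allocation probabilities are 0 or 1/ρ
      (∀ s i, x s i = 0 ∨
        x s i = 1 / ((min n (ℓ * (k * (k - 1) / 2) + 1) : ℕ) : ℝ)) ∧
      -- at every profile some welfare maximizer receives probability 1/ρ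
      (∀ s : Fin n → Fin k, ∃ i : Fin n, (∀ j, v j s ≤ v i s) ∧
        x s i = 1 / ((min n (ℓ * (k * (k - 1) / 2) + 1) : ℕ) : ℝ)) ∧
      -- nonnegative payments
      (∀ s i, 0 ≤ p s i) ∧
      -- ex-post incentive compatibility
      (∀ (i : Fin n) (s : Fin n → Fin k) (t : Fin k),
        x s i * v i s - p s i ≥
          x (Function.update s i t) i * v i s - p (Function.update s i t) i) ∧
      -- ex-post individual rationality
      (∀ (i : Fin n) (s : Fin n → Fin k), x s i * v i s - p s i ≥ 0) ∧
      -- (1/ρ)-approximation of the optimal welfare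
      (∀ s : Fin n → Fin k,
        ∑ i, x s i * v i s ≥
          (1 / ((min n (ℓ * (k * (k - 1) / 2) + 1) : ℕ) : ℝ)) *
            Finset.univ.sup' ⟨⟨0, hn⟩, Finset.mem_univ _⟩ (fun i => v i s)) := by
  have : Nonempty (Fin n) := ⟨⟨0, hn⟩⟩
  set ρ := min n (ℓ * (k * (k - 1) / 2) + 1)
  have hρ : (0 : ℝ) < ρ := by exact_mod_cast lt_min hn (Nat.succ_pos _)
  have hc : (0 : ℝ) ≤ 1 / ρ := by positivity
  have hcard (s : Fin n → Fin k) : #(winners v s) ≤ ρ :=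
    le_min (card_le_univ _ |>.trans_eq (Fintype.card_fin n))
      (by simpa [Nat.choose_two_right] using card_winners_le hv_sym s)
  refine ⟨alloc v (1 / ρ), payment v (1 / ρ), alloc_nonneg hc, fun s => ?_,
    fun i s => monotone_alloc_update hc s i, alloc_eq_zero_or_eq,
    fun s => ⟨winner v s, le_winner s, alloc_winner s⟩, payment_nonneg hc hv_nonneg,
    fun i s t => utility_le_of_monotone (hv_mono i) hc s t,
    fun i s => utility_nonneg_of_monotone (hv_mono i) hc s, fun s => ?_⟩
  · rw [sum_alloc, mul_one_div, div_le_one hρ]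
    exact_mod_cast hcard s
  · calc 1 / (ρ : ℝ) * univ.sup' _ (fun i => v i s) ≤ 1 / ρ * v (winner v s) s :=
          mul_le_mul_of_nonneg_left (sup'_le _ _ fun j _ => le_winner s j) hc
      _ ≤ ∑ i, alloc v (1 / ρ) s i * v i s := mul_le_sum_alloc_mul hc (hv_nonneg · s)

/-- For every `n ≥ 1`, `k ≥ 2`, `ℓ ≥ 1`, group assignment `g`, and every
family of nonnegative valuations that are weakly increasing (pointwise order) and
symmetric within expertise groups, with `ρ = min n (ℓ·(k(k-1)/2) + 1)`, there exists a
feasible per-bidder monotone allocation rule `x` taking values in `{0, 1/ρ}`, which at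
every profile allocates `1/ρ` to some welfare-maximizing bidder, together with payments
making the mechanism ex-post IC and ex-post IR, and achieving welfare at least
`(1/ρ)·max_i v i s` at every profile `s`. -/
theorem general_valuations_welfare_upper_bound
    (n k ℓ : ℕ) (hn : 1 ≤ n) (hk : 2 ≤ k) (hℓ : 1 ≤ ℓ)
    (g : Fin n → Fin ℓ)
    (v : Fin n → (Fin n → Fin k) → ℝ)
    (hv_nonneg : ∀ i s, 0 ≤ v i s)
    (hv_mono : ∀ i, Monotone (v i))
    (hv_sym : ∀ (j : Fin n) (s : Fin n → Fin k) (π : Equiv.Perm (Fin n)),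
      g ∘ π = g → v j (s ∘ π) = v j s) :
    ∃ x p : (Fin n → Fin k) → Fin n → ℝ,
      -- feasibility
      (∀ s i, 0 ≤ x s i) ∧ (∀ s, ∑ i, x s i ≤ 1) ∧
      -- per-bidder monotonicity
      (∀ (i : Fin n) (s : Fin n → Fin k),
        Monotone fun t => x (Function.update s i t) i) ∧
      -- allocation probabilities are 0 or 1/ρ
      (∀ s i, x s i = 0 ∨
        x s i = 1 / ((min n (ℓ * (k * (k - 1) / 2) + 1) : ℕ) : ℝ)) ∧
      -- at every profile some welfare maximizer receives probability 1/ρ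
      (∀ s : Fin n → Fin k, ∃ i : Fin n, (∀ j, v j s ≤ v i s) ∧
        x s i = 1 / ((min n (ℓ * (k * (k - 1) / 2) + 1) : ℕ) : ℝ)) ∧
      -- nonnegative payments
      (∀ s i, 0 ≤ p s i) ∧
      -- ex-post incentive compatibility
      (∀ (i : Fin n) (s : Fin n → Fin k) (t : Fin k),
        x s i * v i s - p s i ≥
          x (Function.update s i t) i * v i s - p (Function.update s i t) i) ∧
      -- ex-post individual rationality
      (∀ (i : Fin n) (s : Fin n → Fin k), x s i * v i s - p s i ≥ 0) ∧
      -- (1/ρ)-approximation of the optimal welfare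
      (∀ s : Fin n → Fin k,
        ∑ i, x s i * v i s ≥
          (1 / ((min n (ℓ * (k * (k - 1) / 2) + 1) : ℕ) : ℝ)) *
            Finset.univ.sup' ⟨⟨0, hn⟩, Finset.mem_univ _⟩ (fun i => v i s)) :=
  general_valuations_welfare_upper_bound_general n k ℓ hn g v hv_nonneg hv_mono hv_sym
end

section
/- Let x : (Fin n → Fin k) → Fin n → ℝ be a feasible per-bidder monotone allocation rule, let s be a signal profile, let ρ > 0 be real, and let T ⊆ Fin n be a set of bidders such that for every i ∈ T there exists a signal t_i ≤ s_i with x_i(t_i, s_{−i}) ≥ ρ. Then ρ·|T| ≤ 1; in particular |T| ≤ 1/ρ. -/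
/-- If `x` is a feasible per-bidder monotone allocation rule, `s` a
signal profile, `ρ > 0`, and `T` a set of bidders each of which receives allocation
at least `ρ` at some profile obtained from `s` by lowering their own signal, then
`ρ·|T| ≤ 1`, and in particular `|T| ≤ 1/ρ`. -/
theorem monotone_allocation_pigeonhole
    (n k : ℕ)
    (x : (Fin n → Fin k) → Fin n → ℝ)
    (hx_nonneg : ∀ s i, 0 ≤ x s i)
    (hx_feas : ∀ s, ∑ i, x s i ≤ 1)
    (hx_mono : ∀ (i : Fin n) (s : Fin n → Fin k),
      Monotone fun t => x (Function.update s i t) i)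
    (s : Fin n → Fin k) (ρ : ℝ) (hρ : 0 < ρ)
    (T : Finset (Fin n))
    (hT : ∀ i ∈ T, ∃ t : Fin k, t ≤ s i ∧ ρ ≤ x (Function.update s i t) i) :
    ρ * (T.card : ℝ) ≤ 1 ∧ (T.card : ℝ) ≤ 1 / ρ := by
  have key : ∀ i ∈ T, ρ ≤ x s i := by
    intro i hi
    obtain ⟨t, ht, hρt⟩ := hT i hi
    have := hx_mono i s ht
    simp only at this
    have hupd : Function.update s i (s i) = s := Function.update_eq_self i s
    calc ρ ≤ x (Function.update s i t) i := hρt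
      _ ≤ x (Function.update s i (s i)) i := this
      _ = x s i := by rw [hupd]
  have h1 : ρ * (T.card : ℝ) ≤ 1 := by
    calc ρ * (T.card : ℝ) = ∑ _i ∈ T, ρ := by
          rw [Finset.sum_const, nsmul_eq_mul, mul_comm]
      _ ≤ ∑ i ∈ T, x s i := Finset.sum_le_sum key
      _ ≤ ∑ i, x s i := Finset.sum_le_sum_of_subset_of_nonneg (Finset.subset_univ T)
          (fun i _ _ => hx_nonneg s i)
      _ ≤ 1 := hx_feas s
  exact ⟨h1, by rw [le_div_iff₀ hρ, mul_comm]; exact h1⟩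
end

section
/- Let g : Fin n → Fin ℓ assign bidders to expertise groups, let the valuations v_j : (Fin n → Fin k) → ℝ be symmetric within expertise groups, and for each profile s' let opt(s') denote the least-index bidder maximizing j ↦ v_j(s'). Then for every profile s, the set {i : there exists t < s_i with opt(s[i ↦ t]) = i} has cardinality at most ℓ·(k·(k−1)/2); consequently, the set of bidders that are optimal at s or at some profile obtained from s by lowering a single bidder's own signal has cardinality at most ℓ·(k(k−1)/2) + 1. -/
/-- With group-symmetric valuations and `opt s'` the least-index bidder
maximizing `j ↦ v j s'`, for every profile `s` the set of bidders `i` for which there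
is `t < s i` with `opt (s[i ↦ t]) = i` has cardinality at most `ℓ·(k(k-1)/2)`;
consequently, the set of bidders optimal at `s` or at some single-bidder-lowered
profile has cardinality at most `ℓ·(k(k-1)/2) + 1`. -/
theorem group_symmetric_optimal_count
    (n ℓ k : ℕ)
    (g : Fin n → Fin ℓ)
    (v : Fin n → (Fin n → Fin k) → ℝ)
    (hv_sym : ∀ (j : Fin n) (s : Fin n → Fin k) (π : Equiv.Perm (Fin n)),
      g ∘ π = g → v j (s ∘ π) = v j s)
    (opt : (Fin n → Fin k) → Fin n)
    (hopt_max : ∀ s' : Fin n → Fin k, ∀ j, v j s' ≤ v (opt s') s')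
    (hopt_least : ∀ s' : Fin n → Fin k, ∀ i : Fin n,
      (∀ j, v j s' ≤ v i s') → opt s' ≤ i) :
    ∀ s : Fin n → Fin k,
      (Finset.univ.filter (fun i : Fin n =>
          ∃ t : Fin k, t < s i ∧ opt (Function.update s i t) = i)).card
        ≤ ℓ * (k * (k - 1) / 2) ∧
      (Finset.univ.filter (fun i : Fin n =>
          opt s = i ∨
          ∃ t : Fin k, t < s i ∧ opt (Function.update s i t) = i)).card
        ≤ ℓ * (k * (k - 1) / 2) + 1 := by
  intro s
  classical
  set P : Fin n → Prop := fun i => ∃ t : Fin k, t < s i ∧ opt (Function.update s i t) = i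
    with hP
  set S : Finset (Fin n) := Finset.univ.filter P with hS
  set T : Finset (Fin ℓ × Fin k × Fin k) :=
    Finset.univ.filter (fun p => p.2.2 < p.2.1) with hT
  -- the encoding map
  set f : Fin n → Fin ℓ × Fin k × Fin k :=
    fun i => (g i, s i, if h : P i then h.choose else s i) with hf
  have key : ∀ i i' : Fin n, P i → P i' → g i = g i' → s i = s i' →
      ∀ t : Fin k, opt (Function.update s i t) = i → opt (Function.update s i' t) = i' →
      i = i' := by
    intro i i' hi hi' hg hs t hoi hoi'
    by_contra hne
    have hswap : Function.update s i' t = (Function.update s i t) ∘ (Equiv.swap i i') := by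
      funext j
      by_cases hji : j = i
      · subst hji
        simp [Equiv.swap_apply_left, Function.update_apply, hne, Ne.symm hne, hs]
      · by_cases hji' : j = i'
        · subst hji'
          simp [Equiv.swap_apply_right, Function.update_apply]
        · simp [Equiv.swap_apply_of_ne_of_ne hji hji', Function.update_apply, hji, hji']
    have hgswap : g ∘ (Equiv.swap i i') = g := by
      funext j
      by_cases hji : j = i
      · subst hji; simp [Equiv.swap_apply_left, hg]
      · by_cases hji' : j = i'
        · subst hji'; simp [Equiv.swap_apply_right, hg]
        · simp [Equiv.swap_apply_of_ne_of_ne hji hji']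
    have hveq : ∀ j, v j (Function.update s i' t) = v j (Function.update s i t) := by
      intro j
      rw [hswap]
      exact hv_sym j _ _ hgswap
    -- i maximizes at update s i t, hence at update s i' t
    have h1 : opt (Function.update s i' t) ≤ i := by
      apply hopt_least
      intro j
      rw [hveq j, hveq i]
      have := hopt_max (Function.update s i t) j
      rw [hoi] at this
      exact this
    have h2 : opt (Function.update s i t) ≤ i' := by
      apply hopt_least
      intro j
      rw [← hveq j, ← hveq i']
      have := hopt_max (Function.update s i' t) j
      rw [hoi'] at this
      exact this
    rw [hoi'] at h1
    rw [hoi] at h2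
    exact hne (le_antisymm h2 h1)
  have hmain : S.card ≤ ℓ * (k * (k - 1) / 2) := by
    have hmaps : ∀ i ∈ S, f i ∈ T := by
      intro i hi
      have hPi : P i := (Finset.mem_filter.mp hi).2
      simp only [hT, Finset.mem_filter, Finset.mem_univ, true_and, hf]
      rw [dif_pos hPi]
      exact hPi.choose_spec.1
    have hinj : Set.InjOn f S := by
      intro i hi i' hi' hfi
      have hPi : P i := (Finset.mem_filter.mp hi).2
      have hPi' : P i' := (Finset.mem_filter.mp hi').2
      simp only [hf, Prod.mk.injEq] at hfi
      rw [dif_pos hPi, dif_pos hPi'] at hfi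
      obtain ⟨hg, hs, ht⟩ := hfi
      exact key i i' hPi hPi' hg hs hPi.choose hPi.choose_spec.2
        (by rw [ht]; exact hPi'.choose_spec.2)
    have hcard : S.card ≤ T.card := Finset.card_le_card_of_injOn f hmaps hinj
    have hTcard : T.card = ℓ * (k * (k - 1) / 2) := by
      have hTprod : T = (Finset.univ : Finset (Fin ℓ)) ×ˢ
          (Finset.univ.filter (fun q : Fin k × Fin k => q.2 < q.1)) := by
        ext p
        simp [hT, Finset.mem_product]
      rw [hTprod, Finset.card_product, Finset.card_univ, Fintype.card_fin]
      congr 1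
      have : (Finset.univ.filter (fun q : Fin k × Fin k => q.2 < q.1)).card
          = ∑ b : Fin k, (b : ℕ) := by
        rw [Finset.card_filter]
        rw [Fintype.sum_prod_type]
        congr 1
        funext b
        rw [← Finset.card_filter]
        have : (Finset.univ.filter (fun c : Fin k => c < b)) = Finset.Iio b := by
          ext c; simp
        rw [this, Fin.card_Iio]
      rw [this]
      have h2 : ∑ b : Fin k, (b : ℕ) = ∑ i ∈ Finset.range k, i :=
        Fin.sum_univ_eq_sum_range (fun i => i) k
      rw [h2, Finset.sum_range_id]
    omega
  refine ⟨hmain, ?_⟩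
  have hsub : (Finset.univ.filter (fun i : Fin n => opt s = i ∨ P i)) ⊆ insert (opt s) S := by
    intro i hi
    rcases (Finset.mem_filter.mp hi).2 with h | h
    · exact Finset.mem_insert.mpr (Or.inl h.symm)
    · exact Finset.mem_insert.mpr (Or.inr (Finset.mem_filter.mpr ⟨Finset.mem_univ i, h⟩))
  calc (Finset.univ.filter (fun i : Fin n => opt s = i ∨ P i)).card
      ≤ (insert (opt s) S).card := Finset.card_le_card hsub
    _ ≤ S.card + 1 := Finset.card_insert_le _ _
    _ ≤ ℓ * (k * (k - 1) / 2) + 1 := by omega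
end

section
/- For every ℓ ≥ 1 and every real α with 0 < α < ℓ + 1, there exist a number of bidders n, an assignment g : Fin n → Fin ℓ of bidders to expertise groups, and a binary (k = 2) shared-quality instance of nonnegative valuations v_i, such that for every feasible per-bidder monotone allocation rule x there exists a signal profile s with ∑_i x_i(s)·v_i(s) < (1/α)·max_i v_i(s). (This is the k = 2 case of the paper's (ℓ(k−1)+1) lower bound, giving a lower bound of ℓ+1 for binary signals.) -/
namespace BSQ

variable {ℓ : ℕ}

/-- group assignment: bidder `b` goes to group `b-1` (bidder 0 to group 0). -/
def gg (hℓ : 1 ≤ ℓ) (b : Fin (ℓ+1)) : Fin ℓ := ⟨(b:ℕ) - 1, by have := b.isLt; omega⟩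

/-- valuation functions of the quality vector. -/
noncomputable def ff (M : ℝ) (b : Fin (ℓ+1)) (q : Fin ℓ → ℕ) : ℝ :=
  if (b:ℕ) = 0 then (if ∀ j, 1 ≤ q j then M else 0)
  else if ∀ j : Fin ℓ, (j:ℕ) + 1 ≠ (b:ℕ) → 1 ≤ q j then 1 else 0

/-- the quality vector of a profile. -/
def qq (hℓ : 1 ≤ ℓ) (s : Fin (ℓ+1) → Fin 2) (j : Fin ℓ) : ℕ :=
  ∑ i' ∈ Finset.univ.filter (fun i' => gg hℓ i' = j), (s i' : ℕ)

/-- hard profile `p i`: everyone on except bidder 0 and bidder `i+1`. -/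
def pp (i : Fin ℓ) (b : Fin (ℓ+1)) : Fin 2 :=
  if (b:ℕ) = 0 ∨ (b:ℕ) = (i:ℕ) + 1 then 0 else 1

/-- top profile: everyone on except bidder 0. -/
def PP (b : Fin (ℓ+1)) : Fin 2 := if (b:ℕ) = 0 then 0 else 1

lemma ff_nonneg {M : ℝ} (hM : 0 ≤ M) (b : Fin (ℓ+1)) (q : Fin ℓ → ℕ) :
    0 ≤ ff M b q := by
  unfold ff; split_ifs <;> norm_num <;> exact hM

lemma ff_mono {M : ℝ} (hM : 0 ≤ M) (b : Fin (ℓ+1)) : Monotone (ff M b) := by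
  intro q q' hqq
  unfold ff
  by_cases hb : (b:ℕ) = 0 <;> simp only [hb, if_true, if_false]
  · split_ifs with h1 h2
    · exact le_rfl
    · exact absurd (fun j => le_trans (h1 j) (hqq j)) h2
    · exact hM
    · exact le_rfl
  · split_ifs with h1 h2
    · exact le_rfl
    · exact absurd (fun j hj => le_trans (h1 j hj) (hqq j)) h2
    · norm_num
    · exact le_rfl

lemma gg_succ (hℓ : 1 ≤ ℓ) (j : Fin ℓ) : gg hℓ j.succ = j := by
  apply Fin.ext; simp [gg, Fin.val_succ]

lemma qq_PP (hℓ : 1 ≤ ℓ) (j : Fin ℓ) : 1 ≤ qq hℓ PP j := by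
  have hb : (j.succ : Fin (ℓ+1)) ∈ Finset.univ.filter (fun i' => gg hℓ i' = j) := by
    simp [gg_succ]
  unfold qq
  refine le_trans ?_ (Finset.single_le_sum (f := fun i' => ((PP i' : Fin 2) : ℕ))
    (fun _ _ => Nat.zero_le _) hb)
  simp [PP, Fin.val_succ]

lemma qq_pp (hℓ : 1 ≤ ℓ) (i j : Fin ℓ) (hij : j ≠ i) : 1 ≤ qq hℓ (pp i) j := by
  have hb : (j.succ : Fin (ℓ+1)) ∈ Finset.univ.filter (fun i' => gg hℓ i' = j) := by
    simp [gg_succ]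
  have hne : (j:ℕ) ≠ (i:ℕ) := fun h => hij (Fin.ext h)
  unfold qq
  refine le_trans ?_ (Finset.single_le_sum (f := fun i' => ((pp i i' : Fin 2) : ℕ))
    (fun _ _ => Nat.zero_le _) hb)
  have hcond : ¬ (((j.succ : Fin (ℓ+1)):ℕ) = 0 ∨ ((j.succ : Fin (ℓ+1)):ℕ) = (i:ℕ) + 1) := by
    simp [Fin.val_succ]; omega
  simp [pp, hcond, hne]

lemma qq_pp_self (hℓ : 1 ≤ ℓ) (i : Fin ℓ) : qq hℓ (pp i) i = 0 := by
  apply Finset.sum_eq_zero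
  intro b hb
  simp only [Finset.mem_filter, Finset.mem_univ, true_and] at hb
  have hb' : (b:ℕ) - 1 = (i:ℕ) := congrArg Fin.val hb
  have hc : (b:ℕ) = 0 ∨ (b:ℕ) = (i:ℕ) + 1 := by omega
  unfold pp
  rw [if_pos hc]
  simp

end BSQ

/-- For every `ℓ ≥ 1` and every real `α` with `0 < α < ℓ + 1`, there
exist a number of bidders `n`, a group assignment `g`, and a binary (`k = 2`)
shared-quality instance of nonnegative valuations, such that every feasible
per-bidder monotone allocation rule fails to `α`-approximate welfare at some
signal profile. -/
theorem binary_shared_quality_welfare_lower_bound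
    (ℓ : ℕ) (hℓ : 1 ≤ ℓ)
    (α : ℝ) (hα0 : 0 < α) (hα : α < (ℓ : ℝ) + 1) :
    ∃ (n : ℕ) (hn : 1 ≤ n) (g : Fin n → Fin ℓ)
      (f : Fin n → (Fin ℓ → ℕ) → ℝ) (v : Fin n → (Fin n → Fin 2) → ℝ),
      (∀ i q, 0 ≤ f i q) ∧
      (∀ i, Monotone (f i)) ∧
      (∀ i s, v i s =
        f i (fun j => ∑ i' ∈ Finset.univ.filter (fun i' => g i' = j), (s i' : ℕ))) ∧
      ∀ x : (Fin n → Fin 2) → Fin n → ℝ,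
        (∀ s i, 0 ≤ x s i) →
        (∀ s, ∑ i, x s i ≤ 1) →
        (∀ (i : Fin n) (s : Fin n → Fin 2),
          Monotone fun t => x (Function.update s i t) i) →
        ∃ s : Fin n → Fin 2,
          ∑ i, x s i * v i s <
            (1 / α) * Finset.univ.sup' ⟨⟨0, hn⟩, Finset.mem_univ _⟩ (fun i => v i s) := by
  classical
  set β : ℝ := ((ℓ:ℝ)+1)/α - 1 with hβdef
  have hβ : 0 < β := by
    have h1 : 1 < ((ℓ:ℝ)+1)/α := (one_lt_div hα0).mpr hα
    simp only [hβdef]; linarith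
  set M : ℝ := 1 + 2/β with hMdef
  have hM1 : 1 ≤ M := by
    have : 0 < 2/β := by positivity
    simp only [hMdef]; linarith
  have hM0 : 0 < M := lt_of_lt_of_le one_pos hM1
  have hMβ : 1/M < β := by
    rw [div_lt_iff₀ hM0]
    have h2 : β * M = β + 2 := by
      simp only [hMdef]; field_simp
    linarith
  have hMnn : 0 ≤ M := le_of_lt hM0
  refine ⟨ℓ+1, by omega, BSQ.gg hℓ, BSQ.ff M,
    fun b s => BSQ.ff M b (BSQ.qq hℓ s),
    fun b q => BSQ.ff_nonneg hMnn b q,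
    fun b => BSQ.ff_mono hMnn b,
    fun i s => rfl,
    ?_⟩
  intro x hx0 hx1 hxm
  by_contra hcon
  push_neg at hcon
  have hα' : (0:ℝ) < 1/α := by positivity
  -- value computations
  have hv_pi_self : ∀ i : Fin ℓ, BSQ.ff M i.succ (BSQ.qq hℓ (BSQ.pp i)) = 1 := by
    intro i
    have hb : ((i.succ : Fin (ℓ+1)) : ℕ) ≠ 0 := by simp [Fin.val_succ]
    rw [BSQ.ff, if_neg hb, if_pos]
    intro j hj
    apply BSQ.qq_pp hℓ
    intro hji
    exact hj (by rw [hji]; simp [Fin.val_succ])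
  have hv_pi_zero : ∀ (i : Fin ℓ) (b : Fin (ℓ+1)), b ≠ i.succ →
      BSQ.ff M b (BSQ.qq hℓ (BSQ.pp i)) = 0 := by
    intro i b hb
    by_cases hb0 : (b:ℕ) = 0
    · rw [BSQ.ff, if_pos hb0, if_neg]
      intro hall
      have := hall i
      rw [BSQ.qq_pp_self] at this
      omega
    · rw [BSQ.ff, if_neg hb0, if_neg]
      intro hall
      have hne : (i:ℕ) + 1 ≠ (b:ℕ) := by
        intro h
        apply hb
        apply Fin.ext
        simp [Fin.val_succ, h.symm]
      have := hall i hne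
      rw [BSQ.qq_pp_self] at this
      omega
  have hv_P0 : BSQ.ff M 0 (BSQ.qq hℓ BSQ.PP) = M := by
    rw [BSQ.ff, if_pos (by simp), if_pos (fun j => BSQ.qq_PP hℓ j)]
  have hv_Pi : ∀ i : Fin ℓ, BSQ.ff M i.succ (BSQ.qq hℓ BSQ.PP) = 1 := by
    intro i
    have hb : ((i.succ : Fin (ℓ+1)) : ℕ) ≠ 0 := by simp [Fin.val_succ]
    rw [BSQ.ff, if_neg hb, if_pos (fun j _ => BSQ.qq_PP hℓ j)]
  -- step 1: allocations at pp i
  have hx_pi : ∀ i : Fin ℓ, 1/α ≤ x (BSQ.pp i) i.succ := by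
    intro i
    have h := hcon (BSQ.pp i)
    have hsup : (1:ℝ) ≤ Finset.univ.sup' ⟨⟨0, by omega⟩, Finset.mem_univ _⟩
        (fun b => BSQ.ff M b (BSQ.qq hℓ (BSQ.pp i))) := by
      have := Finset.le_sup' (fun b => BSQ.ff M b (BSQ.qq hℓ (BSQ.pp i)))
        (Finset.mem_univ i.succ)
      rwa [hv_pi_self i] at this
    have hsum : ∑ b, x (BSQ.pp i) b * BSQ.ff M b (BSQ.qq hℓ (BSQ.pp i))
        = x (BSQ.pp i) i.succ := by
      rw [Finset.sum_eq_single i.succ]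
      · rw [hv_pi_self i, mul_one]
      · intro b _ hbne
        rw [hv_pi_zero i b hbne, mul_zero]
      · intro hmem
        exact absurd (Finset.mem_univ _) hmem
    calc 1/α = 1/α * 1 := (mul_one _).symm
      _ ≤ 1/α * Finset.univ.sup' ⟨⟨0, by omega⟩, Finset.mem_univ _⟩
          (fun b => BSQ.ff M b (BSQ.qq hℓ (BSQ.pp i))) :=
        mul_le_mul_of_nonneg_left hsup (le_of_lt hα')
      _ ≤ ∑ b, x (BSQ.pp i) b * BSQ.ff M b (BSQ.qq hℓ (BSQ.pp i)) := h
      _ = x (BSQ.pp i) i.succ := hsum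
  -- step 2: monotonicity carries allocations to PP
  have hx_P : ∀ i : Fin ℓ, 1/α ≤ x BSQ.PP i.succ := by
    intro i
    have hmono := hxm i.succ (BSQ.pp i)
    have h01 : (0 : Fin 2) ≤ 1 := by decide
    have hstep := hmono h01
    have e0 : Function.update (BSQ.pp i) i.succ 0 = BSQ.pp i := by
      funext b
      rcases eq_or_ne b i.succ with rfl | hb
      · rw [Function.update_self]
        have : ((i.succ : Fin (ℓ+1)):ℕ) = (i:ℕ) + 1 := by simp [Fin.val_succ]
        simp [BSQ.pp, this]
      · rw [Function.update_of_ne hb]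
    have e1 : Function.update (BSQ.pp i) i.succ 1 = BSQ.PP := by
      funext b
      rcases eq_or_ne b i.succ with rfl | hb
      · rw [Function.update_self]
        have h0 : ((i.succ : Fin (ℓ+1)):ℕ) ≠ 0 := by simp [Fin.val_succ]
        simp [BSQ.PP, h0]
      · rw [Function.update_of_ne hb]
        have hb' : (b:ℕ) ≠ (i:ℕ) + 1 := by
          intro h
          exact hb (Fin.ext (by simp [Fin.val_succ, h]))
        simp [BSQ.pp, BSQ.PP, hb']
    have hstep' : x (BSQ.pp i) i.succ ≤ x BSQ.PP i.succ := by
      simpa only [e0, e1] using hstep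
    exact le_trans (hx_pi i) hstep'
  -- step 3: allocation to bidder 0 at PP
  have hP := hcon BSQ.PP
  have hsupP : M ≤ Finset.univ.sup' ⟨⟨0, by omega⟩, Finset.mem_univ _⟩
      (fun b => BSQ.ff M b (BSQ.qq hℓ BSQ.PP)) := by
    have := Finset.le_sup' (fun b => BSQ.ff M b (BSQ.qq hℓ BSQ.PP))
      (Finset.mem_univ (0 : Fin (ℓ+1)))
    rwa [hv_P0] at this
  have hsumP : ∑ b, x BSQ.PP b * BSQ.ff M b (BSQ.qq hℓ BSQ.PP)
      = x BSQ.PP 0 * M + ∑ i : Fin ℓ, x BSQ.PP i.succ := by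
    rw [Fin.sum_univ_succ]
    congr 1
    · rw [hv_P0]
    · apply Finset.sum_congr rfl
      intro i _
      rw [hv_Pi i, mul_one]
  have htot := hx1 BSQ.PP
  rw [Fin.sum_univ_succ] at htot
  have hS1 : ∑ i : Fin ℓ, x BSQ.PP i.succ ≤ 1 := by
    have := hx0 BSQ.PP 0
    linarith
  have hwelP : 1/α * M ≤ x BSQ.PP 0 * M + ∑ i : Fin ℓ, x BSQ.PP i.succ := by
    calc 1/α * M ≤ 1/α * Finset.univ.sup' ⟨⟨0, by omega⟩, Finset.mem_univ _⟩
          (fun b => BSQ.ff M b (BSQ.qq hℓ BSQ.PP)) :=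
        mul_le_mul_of_nonneg_left hsupP (le_of_lt hα')
      _ ≤ ∑ b, x BSQ.PP b * BSQ.ff M b (BSQ.qq hℓ BSQ.PP) := hP
      _ = _ := hsumP
  have hx0P : 1/α - 1/M ≤ x BSQ.PP 0 := by
    have key : (1/α) * M - 1 ≤ x BSQ.PP 0 * M := by linarith
    have h2 : 1/α - 1/M = ((1/α) * M - 1)/M := by
      field_simp
    rw [h2]
    exact (div_le_iff₀ hM0).mpr key
  -- step 4: combine
  have hS : (ℓ:ℝ) * (1/α) ≤ ∑ i : Fin ℓ, x BSQ.PP i.succ := by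
    calc (ℓ:ℝ) * (1/α) = ∑ _i : Fin ℓ, 1/α := by
          rw [Finset.sum_const, Finset.card_univ, Fintype.card_fin, nsmul_eq_mul]
      _ ≤ ∑ i : Fin ℓ, x BSQ.PP i.succ := Finset.sum_le_sum (fun i _ => hx_P i)
  have hdiv : ((ℓ:ℝ)+1)/α = (ℓ:ℝ) * (1/α) + 1/α := by ring
  have hfin : 1 + β - 1/M ≤ 1 := by
    have : ((ℓ:ℝ)+1)/α = 1 + β := by simp only [hβdef]; ring
    linarith [htot, hx0P, hS, hdiv ▸ this]
  linarith
end
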